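/- arXiv:1801.02102 — 6 statements merged into one kernel-verified Lean document; each statement's English description precedes it below -/
import Mathlib

section
/- Let T > 0, let φ : ℝ → ℝ be continuous with t·φ(t) > 0 for every t ≠ 0, and let ℘ ∈ C¹([0,T]) with ℘ > 0 on [0,T]. Let η > 0 and let w ∈ C¹([0,T]) satisfy w(0) = 0, w(T) = η, and suppose that the function h(t) = ℘(t)·φ(w'(t)) is differentiable on (0,T) with h'(t) ≥ 0 at every t where w(t) > 0 and h'(t) ≤ 0 at every t where w(t) < 0. Then w ≥ 0 and w' ≥ 0 on [0,T], and there exists t₀ ∈ [0,T) such that w ≡ 0 on [0,t₀] while w > 0 and w' > 0 on (t₀,T]. -/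
open Set MeasureTheory Filter Topology

/-- Lemma 3.3: properties of solutions of `sign(w)·[℘ φ(w')]' ≥ 0` with `w(0)=0`, `w(T)=η>0`. -/
theorem stmt_0
    (T : ℝ) (hT : 0 < T)
    (φ : ℝ → ℝ) (hφc : Continuous φ)
    (hφsign : ∀ t : ℝ, t ≠ 0 → 0 < t * φ t)
    (p p' : ℝ → ℝ)
    (hpd : ∀ t ∈ Icc (0:ℝ) T, HasDerivWithinAt p (p' t) (Icc 0 T) t)
    (hp'c : ContinuousOn p' (Icc (0:ℝ) T))
    (hppos : ∀ t ∈ Icc (0:ℝ) T, 0 < p t)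
    (η : ℝ) (hη : 0 < η)
    (w w' : ℝ → ℝ)
    (hwd : ∀ t ∈ Icc (0:ℝ) T, HasDerivWithinAt w (w' t) (Icc 0 T) t)
    (hw'c : ContinuousOn w' (Icc (0:ℝ) T))
    (hw0 : w 0 = 0) (hwT : w T = η)
    (h' : ℝ → ℝ)
    (hhd : ∀ t ∈ Ioo (0:ℝ) T, HasDerivAt (fun s => p s * φ (w' s)) (h' t) t)
    (hpos : ∀ t ∈ Ioo (0:ℝ) T, 0 < w t → 0 ≤ h' t)
    (hneg : ∀ t ∈ Ioo (0:ℝ) T, w t < 0 → h' t ≤ 0) :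
    (∀ t ∈ Icc (0:ℝ) T, 0 ≤ w t ∧ 0 ≤ w' t) ∧
    ∃ t₀ ∈ Ico (0:ℝ) T,
      (∀ t ∈ Icc (0:ℝ) t₀, w t = 0) ∧
      ∀ t ∈ Ioc t₀ T, 0 < w t ∧ 0 < w' t := by
  -- continuity facts
  have hwc : ContinuousOn w (Icc 0 T) := fun t ht => (hwd t ht).continuousWithinAt
  have hpc : ContinuousOn p (Icc 0 T) := fun t ht => (hpd t ht).continuousWithinAt
  have hhc : ContinuousOn (fun s => p s * φ (w' s)) (Icc 0 T) :=
    hpc.mul (hφc.comp_continuousOn hw'c)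
  -- sign facts about φ
  have hφpos : ∀ x : ℝ, 0 < x → 0 < φ x := by
    intro x hx; nlinarith [hφsign x hx.ne']
  have hφneg : ∀ x : ℝ, x < 0 → φ x < 0 := by
    intro x hx; nlinarith [hφsign x hx.ne]
  have hφ0 : φ 0 = 0 := by
    by_contra h0
    rcases lt_or_gt_of_ne h0 with hn | hp0
    · have h2 : ∀ᶠ t in 𝓝[>] (0:ℝ), φ t < 0 :=
        (Filter.Tendsto.eventually_lt_const hn hφc.continuousAt).filter_mono
          nhdsWithin_le_nhds
      obtain ⟨t, ht1, ht2⟩ := (h2.and (eventually_mem_nhdsWithin)).exists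
      exact absurd ht1 (not_lt.mpr (hφpos t ht2).le)
    · have h2 : ∀ᶠ t in 𝓝[<] (0:ℝ), 0 < φ t :=
        (Filter.Tendsto.eventually_const_lt hp0 hφc.continuousAt).filter_mono
          nhdsWithin_le_nhds
      obtain ⟨t, ht1, ht2⟩ := (h2.and (eventually_mem_nhdsWithin)).exists
      exact absurd ht1 (not_lt.mpr (hφneg t ht2).le)
  have hφnonneg : ∀ x : ℝ, 0 ≤ x → 0 ≤ φ x := by
    intro x hx
    rcases hx.lt_or_eq with h | h
    · exact (hφpos x h).le
    · rw [← h, hφ0]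
  have hφnonpos : ∀ x : ℝ, x ≤ 0 → φ x ≤ 0 := by
    intro x hx
    rcases hx.lt_or_eq with h | h
    · exact (hφneg x h).le
    · rw [h, hφ0]
  -- derivative at interior points
  have hwdi : ∀ t ∈ Ioo (0:ℝ) T, HasDerivAt w (w' t) t := fun t ht =>
    (hwd t (Ioo_subset_Icc_self ht)).hasDerivAt (Icc_mem_nhds ht.1 ht.2)
  -- monotonicity of h on intervals where w > 0
  have hmono : ∀ a b : ℝ, 0 ≤ a → b ≤ T → (∀ t ∈ Ioo a b, 0 < w t) →
      MonotoneOn (fun s => p s * φ (w' s)) (Icc a b) := by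
    intro a b ha hb hw
    rcases le_or_gt b a with hba | hab
    · intro x hx y hy hxy
      have : x = y := le_antisymm hxy (hy.2.trans (hba.trans hx.1))
      rw [this]
    · have hioo : Ioo a b ⊆ Ioo 0 T := fun x hx =>
        ⟨lt_of_le_of_lt ha hx.1, lt_of_lt_of_le hx.2 hb⟩
      apply monotoneOn_of_deriv_nonneg (convex_Icc a b)
        (hhc.mono (Icc_subset_Icc ha hb))
      · intro x hx
        rw [interior_Icc] at hx
        exact (hhd x (hioo hx)).differentiableAt.differentiableWithinAt
      · intro x hx
        rw [interior_Icc] at hx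
        rw [(hhd x (hioo hx)).deriv]
        exact hpos x (hioo hx) (hw x hx)
  -- antitonicity of h on intervals where w < 0
  have hanti : ∀ a b : ℝ, 0 ≤ a → b ≤ T → (∀ t ∈ Ioo a b, w t < 0) →
      AntitoneOn (fun s => p s * φ (w' s)) (Icc a b) := by
    intro a b ha hb hw
    rcases le_or_gt b a with hba | hab
    · intro x hx y hy hxy
      have : x = y := le_antisymm hxy (hy.2.trans (hba.trans hx.1))
      rw [this]
    · have hioo : Ioo a b ⊆ Ioo 0 T := fun x hx =>
        ⟨lt_of_le_of_lt ha hx.1, lt_of_lt_of_le hx.2 hb⟩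
      apply antitoneOn_of_deriv_nonpos (convex_Icc a b)
        (hhc.mono (Icc_subset_Icc ha hb))
      · intro x hx
        rw [interior_Icc] at hx
        exact (hhd x (hioo hx)).differentiableAt.differentiableWithinAt
      · intro x hx
        rw [interior_Icc] at hx
        rw [(hhd x (hioo hx)).deriv]
        exact hneg x (hioo hx) (hw x hx)
  -- Step 1: w ≥ 0 on [0,T]
  have step1 : ∀ t ∈ Icc (0:ℝ) T, 0 ≤ w t := by
    by_contra hcon
    push_neg at hcon
    obtain ⟨s, hs, hws⟩ := hcon
    obtain ⟨c, hcI, hminc⟩ := isCompact_Icc.exists_isMinOn (nonempty_Icc.mpr hT.le) hwc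
    have hmin : ∀ t ∈ Icc (0:ℝ) T, w c ≤ w t := fun t ht => isMinOn_iff.mp hminc t ht
    have hwc0 : w c < 0 := lt_of_le_of_lt (hmin s hs) hws
    have hc0 : 0 < c := by
      rcases hcI.1.lt_or_eq with h | h
      · exact h
      · exfalso; rw [← h, hw0] at hwc0; exact lt_irrefl 0 hwc0
    have hcT : c < T := by
      rcases hcI.2.lt_or_eq with h | h
      · exact h
      · exfalso; rw [h, hwT] at hwc0; linarith
    -- b : smallest zero of w in [c,T]
    set S : Set ℝ := {t | t ∈ Icc c T ∧ w t = 0} with hSdef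
    have hSsub : S ⊆ Icc (0:ℝ) T := fun t ht => ⟨hc0.le.trans ht.1.1, ht.1.2⟩
    have hSne : S.Nonempty := by
      obtain ⟨z, hz, hz0⟩ := intermediate_value_Icc hcT.le
        (hwc.mono (Icc_subset_Icc hc0.le le_rfl))
        (show (0:ℝ) ∈ Icc (w c) (w T) from ⟨hwc0.le, by rw [hwT]; exact hη.le⟩)
      exact ⟨z, hz, hz0⟩
    have hSclosed : IsClosed S := by
      have : S = Icc c T ∩ w ⁻¹' {0} := by
        rfl
      rw [this]
      exact (hwc.mono (Icc_subset_Icc hc0.le le_rfl)).preimage_isClosed_of_isClosed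
        isClosed_Icc isClosed_singleton
    have hSbdd : BddBelow S := ⟨c, fun t ht => ht.1.1⟩
    set b := sInf S with hbdef
    have hbS : b ∈ S := hSclosed.csInf_mem hSne hSbdd
    have hcb : c < b := by
      rcases hbS.1.1.lt_or_eq with h | h
      · exact h
      · exfalso; rw [h] at hwc0; rw [hbS.2] at hwc0; exact lt_irrefl 0 hwc0
    -- w < 0 on [c, b)
    have hwneg1 : ∀ t ∈ Ico c b, w t < 0 := by
      intro t ht
      have htT : t ≤ T := (ht.2.le.trans hbS.1.2)
      rcases lt_trichotomy (w t) 0 with h | h | h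
      · exact h
      · exact absurd (csInf_le hSbdd ⟨⟨ht.1, htT⟩, h⟩) (not_le.mpr ht.2)
      · exfalso
        obtain ⟨z, hz, hz0⟩ := intermediate_value_Icc ht.1
          (hwc.mono (Icc_subset_Icc hc0.le htT)) (show (0:ℝ) ∈ Icc (w c) (w t) from ⟨hwc0.le, h.le⟩)
        have hbz : b ≤ z := csInf_le hSbdd ⟨⟨hz.1, hz.2.trans htT⟩, hz0⟩
        have : z < b := lt_of_le_of_lt hz.2 ht.2
        linarith
    -- a : largest zero of w in [0,c]
    set A : Set ℝ := {t | t ∈ Icc 0 c ∧ w t = 0} with hAdef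
    have hAne : A.Nonempty := ⟨0, ⟨le_rfl, hc0.le⟩, hw0⟩
    have hAclosed : IsClosed A := by
      have : A = Icc 0 c ∩ w ⁻¹' {0} := by
        rfl
      rw [this]
      exact (hwc.mono (Icc_subset_Icc le_rfl hcT.le)).preimage_isClosed_of_isClosed
        isClosed_Icc isClosed_singleton
    have hAbdd : BddAbove A := ⟨c, fun t ht => ht.1.2⟩
    set a := sSup A with hadef
    have haA : a ∈ A := hAclosed.csSup_mem hAne hAbdd
    have ha0 : 0 ≤ a := haA.1.1
    have hac : a < c := by
      rcases haA.1.2.lt_or_eq with h | h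
      · exact h
      · exfalso; rw [h] at haA; exact hwc0.ne haA.2
    -- w < 0 on (a, c]
    have hwneg2 : ∀ t ∈ Ioc a c, w t < 0 := by
      intro t ht
      have ht0 : 0 ≤ t := ha0.trans ht.1.le
      rcases lt_trichotomy (w t) 0 with h | h | h
      · exact h
      · have : t ≤ a := le_csSup hAbdd ⟨⟨ht0, ht.2⟩, h⟩
        exact absurd ht.1 (not_lt.mpr this)
      · exfalso
        obtain ⟨z, hz, hz0⟩ := intermediate_value_Icc' ht.2
          (hwc.mono (Icc_subset_Icc ht0 hcT.le)) (show (0:ℝ) ∈ Icc (w c) (w t) from ⟨hwc0.le, h.le⟩)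
        have : z ≤ a := le_csSup hAbdd ⟨⟨ht0.trans hz.1, hz.2⟩, hz0⟩
        have : a < z := lt_of_lt_of_le ht.1 hz.1
        linarith
    have hwnegall : ∀ t ∈ Ioo a b, w t < 0 := by
      intro t ht
      rcases le_or_gt t c with h | h
      · exact hwneg2 t ⟨ht.1, h⟩
      · exact hwneg1 t ⟨h.le, ht.2⟩
    have hbT : b ≤ T := hbS.1.2
    have hantih : AntitoneOn (fun s => p s * φ (w' s)) (Icc a b) :=
      hanti a b ha0 hbT hwnegall
    -- MVT on [a,c]
    obtain ⟨ξ, hξ, hξeq⟩ := exists_hasDerivAt_eq_slope w w' hac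
      (hwc.mono (Icc_subset_Icc ha0 hcT.le))
      (fun x hx => hwdi x ⟨lt_of_le_of_lt ha0 hx.1, hx.2.trans hcT⟩)
    have hwa : w a = 0 := haA.2
    have hw'ξ : w' ξ < 0 := by
      rw [hξeq, hwa]
      apply div_neg_of_neg_of_pos <;> [linarith; linarith [hξ.1, hξ.2]]
    have hξI : ξ ∈ Icc (0:ℝ) T := ⟨ha0.trans hξ.1.le, (hξ.2.trans hcT).le⟩
    have hhξ : p ξ * φ (w' ξ) < 0 := mul_neg_of_pos_of_neg (hppos ξ hξI) (hφneg _ hw'ξ)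
    have hξb : ξ ≤ b := (hξ.2.trans hcb).le
    -- w is antitone on [ξ, b]
    have hwanti : AntitoneOn w (Icc ξ b) := by
      apply antitoneOn_of_deriv_nonpos (convex_Icc _ _)
        (hwc.mono (Icc_subset_Icc hξI.1 hbT))
      · intro x hx
        rw [interior_Icc] at hx
        exact (hwdi x ⟨lt_of_le_of_lt hξI.1 hx.1, lt_of_lt_of_le hx.2 hbT⟩).differentiableAt.differentiableWithinAt
      · intro x hx
        rw [interior_Icc] at hx
        have hxI : x ∈ Icc (0:ℝ) T := ⟨hξI.1.trans hx.1.le, hx.2.le.trans hbT⟩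
        have hle : p x * φ (w' x) ≤ p ξ * φ (w' ξ) :=
          hantih ⟨hξ.1.le, hξb⟩ ⟨(hξ.1.trans hx.1).le, hx.2.le⟩ hx.1.le
        rw [(hwdi x ⟨lt_of_le_of_lt hξI.1 hx.1, lt_of_lt_of_le hx.2 hbT⟩).deriv]
        by_contra hcon2
        push_neg at hcon2
        have : 0 ≤ φ (w' x) := hφnonneg _ hcon2.le
        nlinarith [hppos x hxI]
    have hfin : w b ≤ w ξ := hwanti ⟨le_rfl, hξb⟩ ⟨hξb, le_rfl⟩ hξb
    have hwξ : w ξ < 0 := hwnegall ξ ⟨hξ.1, lt_of_lt_of_le hξ.2 hcb.le⟩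
    rw [hbS.2] at hfin
    linarith
  -- Definition of t₀
  set Z : Set ℝ := {t | t ∈ Icc 0 T ∧ w t = 0} with hZdef
  have hZne : Z.Nonempty := ⟨0, ⟨le_rfl, hT.le⟩, hw0⟩
  have hZclosed : IsClosed Z := by
    have : Z = Icc 0 T ∩ w ⁻¹' {0} := by
      rfl
    rw [this]
    exact hwc.preimage_isClosed_of_isClosed isClosed_Icc isClosed_singleton
  have hZbdd : BddAbove Z := ⟨T, fun t ht => ht.1.2⟩
  set t₀ := sSup Z with ht₀def
  have ht₀Z : t₀ ∈ Z := hZclosed.csSup_mem hZne hZbdd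
  have ht₀0 : 0 ≤ t₀ := ht₀Z.1.1
  have ht₀T : t₀ < T := by
    rcases ht₀Z.1.2.lt_or_eq with h | h
    · exact h
    · exfalso
      have := ht₀Z.2
      rw [h, hwT] at this
      exact hη.ne' this
  -- w > 0 on (t₀, T]
  have hwpos : ∀ t ∈ Ioc t₀ T, 0 < w t := by
    intro t ht
    have htI : t ∈ Icc (0:ℝ) T := ⟨ht₀0.trans ht.1.le, ht.2⟩
    rcases (step1 t htI).lt_or_eq with h | h
    · exact h
    · exact absurd (le_csSup hZbdd ⟨htI, h.symm⟩) (not_le.mpr ht.1)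
  -- w = 0 on [0, t₀]
  have hwzero : ∀ t ∈ Icc (0:ℝ) t₀, w t = 0 := by
    by_contra hcon
    push_neg at hcon
    obtain ⟨s, hs, hws⟩ := hcon
    have hsI : s ∈ Icc (0:ℝ) T := ⟨hs.1, hs.2.trans ht₀Z.1.2⟩
    have hwspos : 0 < w s := (step1 s hsI).lt_of_ne (Ne.symm hws)
    have hst₀ : s < t₀ := by
      rcases hs.2.lt_or_eq with h | h
      · exact h
      · exfalso; rw [h, ht₀Z.2] at hwspos; exact lt_irrefl 0 hwspos
    -- b : smallest zero in [s, T]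
    set S : Set ℝ := {t | t ∈ Icc s T ∧ w t = 0} with hSdef
    have hSne : S.Nonempty := ⟨t₀, ⟨hst₀.le, ht₀Z.1.2⟩, ht₀Z.2⟩
    have hSclosed : IsClosed S := by
      have : S = Icc s T ∩ w ⁻¹' {0} := by
        rfl
      rw [this]
      exact (hwc.mono (Icc_subset_Icc hsI.1 le_rfl)).preimage_isClosed_of_isClosed
        isClosed_Icc isClosed_singleton
    have hSbdd : BddBelow S := ⟨s, fun t ht => ht.1.1⟩
    set b := sInf S with hbdef
    have hbS : b ∈ S := hSclosed.csInf_mem hSne hSbdd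
    have hsb : s < b := by
      rcases hbS.1.1.lt_or_eq with h | h
      · exact h
      · exfalso; rw [h, hbS.2] at hwspos; exact lt_irrefl 0 hwspos
    have hbt₀ : b ≤ t₀ := csInf_le hSbdd ⟨⟨hst₀.le, ht₀Z.1.2⟩, ht₀Z.2⟩
    have hbT : b < T := lt_of_le_of_lt hbt₀ ht₀T
    -- w > 0 on [s, b)
    have hwpos1 : ∀ t ∈ Ico s b, 0 < w t := by
      intro t ht
      have htI : t ∈ Icc (0:ℝ) T := ⟨hsI.1.trans ht.1, (ht.2.le.trans hbT.le)⟩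
      rcases (step1 t htI).lt_or_eq with h | h
      · exact h
      · exact absurd (csInf_le hSbdd ⟨⟨ht.1, htI.2⟩, h.symm⟩) (not_le.mpr ht.2)
    -- a : largest zero in [0, s]
    set A : Set ℝ := {t | t ∈ Icc 0 s ∧ w t = 0} with hAdef
    have hAne : A.Nonempty := ⟨0, ⟨le_rfl, hsI.1⟩, hw0⟩
    have hAclosed : IsClosed A := by
      have : A = Icc 0 s ∩ w ⁻¹' {0} := by
        rfl
      rw [this]
      exact (hwc.mono (Icc_subset_Icc le_rfl hsI.2)).preimage_isClosed_of_isClosed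
        isClosed_Icc isClosed_singleton
    have hAbdd : BddAbove A := ⟨s, fun t ht => ht.1.2⟩
    set a := sSup A with hadef
    have haA : a ∈ A := hAclosed.csSup_mem hAne hAbdd
    have ha0 : 0 ≤ a := haA.1.1
    have has : a < s := by
      rcases haA.1.2.lt_or_eq with h | h
      · exact h
      · exfalso; rw [h] at haA; rw [haA.2] at hwspos; exact lt_irrefl 0 hwspos
    -- w > 0 on (a, s]
    have hwpos2 : ∀ t ∈ Ioc a s, 0 < w t := by
      intro t ht
      have htI : t ∈ Icc (0:ℝ) T := ⟨ha0.trans ht.1.le, ht.2.trans hsI.2⟩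
      rcases (step1 t htI).lt_or_eq with h | h
      · exact h
      · have : t ≤ a := le_csSup hAbdd ⟨⟨htI.1, ht.2⟩, h.symm⟩
        exact absurd ht.1 (not_lt.mpr this)
    have hwposall : ∀ t ∈ Ioo a b, 0 < w t := by
      intro t ht
      rcases le_or_gt t s with h | h
      · exact hwpos2 t ⟨ht.1, h⟩
      · exact hwpos1 t ⟨h.le, ht.2⟩
    have hmonoh : MonotoneOn (fun u => p u * φ (w' u)) (Icc a b) :=
      hmono a b ha0 hbT.le hwposall
    -- w'(b) = 0 hence h(b) = 0
    have hbIoo : b ∈ Ioo (0:ℝ) T := ⟨lt_of_le_of_lt (ha0.trans has.le) hsb, hbT⟩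
    have hminb : IsLocalMin w b := by
      apply IsMinOn.isLocalMin _ (Icc_mem_nhds hbIoo.1 hbIoo.2)
      apply isMinOn_iff.mpr
      intro x hx
      rw [hbS.2]
      exact step1 x hx
    have hw'b : w' b = 0 := hminb.hasDerivAt_eq_zero (hwdi b hbIoo)
    have hhb : p b * φ (w' b) = 0 := by rw [hw'b, hφ0, mul_zero]
    -- MVT on [a, s]
    obtain ⟨ξ, hξ, hξeq⟩ := exists_hasDerivAt_eq_slope w w' has
      (hwc.mono (Icc_subset_Icc ha0 hsI.2))
      (fun x hx => hwdi x ⟨lt_of_le_of_lt ha0 hx.1, hx.2.trans (hst₀.trans ht₀T)⟩)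
    have hwa : w a = 0 := haA.2
    have hw'ξ : 0 < w' ξ := by
      rw [hξeq, hwa]
      apply div_pos <;> [linarith; linarith [hξ.1, hξ.2]]
    have hξI : ξ ∈ Icc (0:ℝ) T := ⟨ha0.trans hξ.1.le, hξ.2.le.trans hsI.2⟩
    have hhξ : 0 < p ξ * φ (w' ξ) := mul_pos (hppos ξ ⟨ha0.trans hξ.1.le, hξ.2.le.trans hsI.2⟩) (hφpos _ hw'ξ)
    have hle : p ξ * φ (w' ξ) ≤ p b * φ (w' b) :=
      hmonoh ⟨hξ.1.le, (hξ.2.trans hsb).le⟩ ⟨(has.trans hsb).le.trans (le_refl b) |>.trans_eq rfl, le_rfl⟩ (hξ.2.trans hsb).le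
    rw [hhb] at hle
    linarith
  -- Step 3: w' > 0 on (t₀, T]
  have hw'pos : ∀ t ∈ Ioc t₀ T, 0 < w' t := by
    intro t₁ ht₁
    by_contra hcon
    push_neg at hcon
    have ht₁I : t₁ ∈ Icc (0:ℝ) T := ⟨ht₀0.trans ht₁.1.le, ht₁.2⟩
    have hmonoh : MonotoneOn (fun u => p u * φ (w' u)) (Icc t₀ T) :=
      hmono t₀ T ht₀0 le_rfl (fun t ht => hwpos t ⟨ht.1, ht.2.le⟩)
    have hht₁ : p t₁ * φ (w' t₁) ≤ 0 :=
      mul_nonpos_of_nonneg_of_nonpos (hppos t₁ ht₁I).le (hφnonpos _ hcon)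
    have hwanti : AntitoneOn w (Icc t₀ t₁) := by
      apply antitoneOn_of_deriv_nonpos (convex_Icc _ _)
        (hwc.mono (Icc_subset_Icc ht₀0 ht₁.2))
      · intro x hx
        rw [interior_Icc] at hx
        exact (hwdi x ⟨lt_of_le_of_lt ht₀0 hx.1, lt_of_lt_of_le hx.2 ht₁.2⟩).differentiableAt.differentiableWithinAt
      · intro x hx
        rw [interior_Icc] at hx
        have hxI : x ∈ Icc (0:ℝ) T := ⟨ht₀0.trans hx.1.le, hx.2.le.trans ht₁.2⟩
        have hle : p x * φ (w' x) ≤ p t₁ * φ (w' t₁) :=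
          hmonoh ⟨hx.1.le, hxI.2⟩ ⟨ht₁.1.le, ht₁.2⟩ hx.2.le
        rw [(hwdi x ⟨lt_of_le_of_lt ht₀0 hx.1, lt_of_lt_of_le hx.2 ht₁.2⟩).deriv]
        by_contra hcon2
        push_neg at hcon2
        have h3 : 0 < φ (w' x) := hφpos _ hcon2
        nlinarith [mul_pos (hppos x hxI) h3]
    have hfin : w t₁ ≤ w t₀ := hwanti ⟨le_rfl, ht₁.1.le⟩ ⟨ht₁.1.le, le_rfl⟩ ht₁.1.le
    rw [ht₀Z.2] at hfin
    linarith [hwpos t₁ ht₁]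
  -- w' = 0 on [0, t₀)
  have hw'zero : ∀ t ∈ Ico (0:ℝ) t₀, w' t = 0 := by
    intro t ht
    have h0t₀ : 0 < t₀ := lt_of_le_of_lt ht.1 ht.2
    have hu : UniqueDiffOn ℝ (Icc (0:ℝ) t₀) := uniqueDiffOn_Icc h0t₀
    have htt₀ : t ∈ Icc (0:ℝ) t₀ := ⟨ht.1, ht.2.le⟩
    have h1 : HasDerivWithinAt w (w' t) (Icc 0 t₀) t :=
      (hwd t ⟨ht.1, ht.2.le.trans ht₀Z.1.2⟩).mono (Icc_subset_Icc le_rfl ht₀Z.1.2)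
    have h2 : HasDerivWithinAt w 0 (Icc 0 t₀) t :=
      (hasDerivWithinAt_const t (Icc 0 t₀) (0:ℝ)).congr
        (fun x hx => hwzero x hx) (hwzero t htt₀)
    rw [← h1.derivWithin (hu t htt₀), h2.derivWithin (hu t htt₀)]
  -- w'(t₀) ≥ 0
  have hw't₀ : 0 ≤ w' t₀ := by
    have hsub : Ioc t₀ T ⊆ Icc (0:ℝ) T := fun x hx => ⟨ht₀0.trans hx.1.le, hx.2⟩
    have htend : Filter.Tendsto w' (𝓝[Ioc t₀ T] t₀) (𝓝 (w' t₀)) :=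
      (hw'c t₀ ht₀Z.1).mono hsub
    haveI : (𝓝[Ioc t₀ T] t₀).NeBot := by
      rw [nhdsWithin_Ioc_eq_nhdsGT ht₀T]
      infer_instance
    exact ge_of_tendsto htend (by
      filter_upwards [self_mem_nhdsWithin] with x hx using (hw'pos x hx).le)
  refine ⟨fun t ht => ⟨step1 t ht, ?_⟩, t₀, ⟨ht₀0, ht₀T⟩, hwzero,
    fun t ht => ⟨hwpos t ht, hw'pos t ht⟩⟩
  rcases lt_or_ge t₀ t with h | h
  · exact (hw'pos t ⟨h, ht.2⟩).le
  · rcases h.lt_or_eq with h2 | h2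
    · rw [hw'zero t ⟨ht.1, h2⟩]
    · rw [h2]; exact hw't₀
end

section
/- Let T₀ > 0. Assume: φ ∈ C([0,∞)) with φ(0) = 0, φ > 0 on (0,∞) and φ strictly increasing on (0,∞); f ∈ C(ℝ) with f ≥ 0 on (0,η₀) for some η₀ > 0; l ∈ C([0,∞)) with l ≥ 0; f(0)·l(0) = 0; ℘ ∈ C¹([0,T₀]) with ℘ > 0 on [0,T₀]; a ∈ C([0,T₀]) with a > 0 on [0,T₀]. Set ℘₀ = min_{[0,T₀]} ℘, ℘₁ = max_{[0,T₀]} ℘, f_η = max_{[0,η]} f, l_ξ = max_{[0,ξ]} l, and Θ(T) = sup_{t∈[0,T]} (1/℘(t))·∫₀^t ℘(s)a(s) ds. Fix ξ > 0, T ∈ (0,T₀) and η ∈ (0,η₀) such that (℘₁/℘₀)·φ(η/T) + 2·Θ(T)·f_η·l_ξ < φ(ξ). Then there exists w ∈ C¹([0,T]) such that: w(0) = 0, w(T) = η, 0 ≤ w ≤ η on [0,T]; the function t ↦ ℘(t)·φ(w'(t)) is differentiable at every t ∈ (0,T) with derivative ℘(t)·a(t)·f(w(t))·l(|w'(t)|);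 and w' ≥ 0 with φ(w'(t)) ≤ (℘₁/℘₀)·φ(η/T) + 2·Θ(T)·f_η·l_ξ for every t ∈ [0,T]; in particular 0 ≤ w' < ξ on [0,T]. -/
/-!
Put `G = ℘ φ(w') - c` with the unknown constant `c = ℘(0) φ(w'(0))`. The problem becomes the
first-order system `w' = φ⁻¹((c + G) / ℘)`, `G' = ℘ a f(w) l(w')`, `w(0) = G(0) = 0`, whose
right-hand side, once `φ⁻¹` is capped at `ξ` and the arguments are clamped, is bounded and
continuous. Peano existence and the choice of `c` are handled together through Tonelli's delayed
approximations: for each delay the approximate solution depends continuously on `c`, it has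
`w(T) = 0` for `c = 0` (because `f(0) l(0) = 0`) and `w(T) ≥ η` for `c = ℘₁ φ(η/T)`, so the
intermediate value theorem gives a `c` with `w(T) = η`. These approximations are equi-Lipschitz,
so along an ultrafilter they converge uniformly (Arzelà–Ascoli) to a solution of the undelayed
system that still has `w(T) = η`. Finally the a priori estimate
`φ(w') = (c + G) / ℘ ≤ (℘₁/℘₀) φ(η/T) + Θ f_η l_ξ < φ(ξ)` shows that none of the truncations is
active.
-/

open Set Filter Topology MeasureTheory intervalIntegral
open scoped NNReal

theorem max_min_mem_Icc {α : Type*} [LinearOrder α] {a b : α} (h : a ≤ b) (x : α) :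
    max a (min b x) ∈ Icc a b :=
  (projIcc a b h x).2

theorem StrictMonoOn.Ici_of_Ioi {α β : Type*} [LinearOrder α] [Preorder β] {φ : α → β} {x₀ : α}
    (h : StrictMonoOn φ (Ioi x₀)) (h₀ : ∀ x, x₀ < x → φ x₀ < φ x) :
    StrictMonoOn φ (Ici x₀) := by
  intro x hx y _ hxy
  rcases (mem_Ici.1 hx).eq_or_lt with rfl | hx
  · exact h₀ y hxy
  · exact h hx (hx.trans hxy) hxy

theorem StrictMonoOn.exists_continuous_monotone_inverse {φ : ℝ → ℝ} {a b : ℝ} (hab : a ≤ b)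
    (hc : ContinuousOn φ (Icc a b)) (hm : StrictMonoOn φ (Icc a b)) :
    ∃ Ψ : ℝ → ℝ, Continuous Ψ ∧ Monotone Ψ ∧ (∀ x, Ψ x ∈ Icc a b) ∧
      (∀ x ∈ Icc (φ a) (φ b), φ (Ψ x) = x) ∧ ∀ y ∈ Icc a b, Ψ (φ y) = y := by
  have himg : φ '' Icc a b = Icc (φ a) (φ b) := hc.image_Icc_of_monotoneOn hab hm.monotoneOn
  have hφab : φ a ≤ φ b := hm.monotoneOn (left_mem_Icc.2 hab) (right_mem_Icc.2 hab) hab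
  let e : Icc a b ≃o Icc (φ a) (φ b) :=
    (hm.orderIso φ (Icc a b)).trans (OrderIso.setCongr _ _ himg)
  have he : ∀ y : Icc a b, (e y : ℝ) = φ y := fun _ => rfl
  refine ⟨fun x => e.symm (projIcc (φ a) (φ b) hφab x),
    continuous_subtype_val.comp (e.symm.continuous.comp continuous_projIcc),
    fun x y hxy => e.symm.monotone (monotone_projIcc hφab hxy),
    fun x => (e.symm _).2, fun x hx => ?_, fun y hy => ?_⟩
  · rw [← he, e.apply_symm_apply, projIcc_of_mem hφab hx]
  · have : projIcc (φ a) (φ b) hφab (φ y) = e ⟨y, hy⟩ :=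
      projIcc_of_mem hφab (himg ▸ mem_image_of_mem φ hy)
    simp only [this, e.symm_apply_apply]

theorem lipschitzWith_primitive {E : Type*} [NormedAddCommGroup E] [NormedSpace ℝ E]
    {g : ℝ → E} {M : ℝ≥0} (hg : ∀ a b, IntervalIntegrable g volume a b) (hM : ∀ s, ‖g s‖ ≤ M)
    (a : ℝ) : LipschitzWith M fun t => ∫ s in a..t, g s := by
  refine LipschitzWith.of_dist_le_mul fun x y => ?_
  rw [dist_eq_norm, integral_interval_sub_left (hg a x) (hg a y), Real.dist_eq]
  exact norm_integral_le_of_norm_le_const fun s _ => hM s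

theorem fst_intervalIntegral {E F : Type*} [NormedAddCommGroup E] [NormedSpace ℝ E]
    [CompleteSpace E] [NormedAddCommGroup F] [NormedSpace ℝ F] [CompleteSpace F]
    {g : ℝ → E × F} {a b : ℝ} (hg : IntervalIntegrable g volume a b) :
    (∫ s in a..b, g s).1 = ∫ s in a..b, (g s).1 :=
  ((ContinuousLinearMap.fst ℝ E F).intervalIntegral_comp_comm hg).symm

theorem snd_intervalIntegral {E F : Type*} [NormedAddCommGroup E] [NormedSpace ℝ E]
    [CompleteSpace E] [NormedAddCommGroup F] [NormedSpace ℝ F] [CompleteSpace F]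
    {g : ℝ → E × F} {a b : ℝ} (hg : IntervalIntegrable g volume a b) :
    (∫ s in a..b, g s).2 = ∫ s in a..b, (g s).2 :=
  ((ContinuousLinearMap.snd ℝ E F).intervalIntegral_comp_comm hg).symm

theorem hasDerivAt_of_eqOn_const_add_integral {E : Type*} [NormedAddCommGroup E]
    [NormedSpace ℝ E] [CompleteSpace E] {u g : ℝ → E} {c : E} {T t : ℝ} (hg : Continuous g)
    (hu : ∀ s ∈ Icc 0 T, u s = c + ∫ r in (0:ℝ)..s, g r) (ht : t ∈ Ioo 0 T) :
    HasDerivAt u (g t) t :=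
  ((hg.integral_hasStrictDerivAt 0 t).hasDerivAt.const_add c).congr_of_eventuallyEq
    (eventually_of_mem (Icc_mem_nhds ht.1 ht.2) hu)

theorem isCompact_setOf_lipschitzWith {X Y : Type*} [PseudoMetricSpace X] [MetricSpace Y]
    [ProperSpace Y] (K : ℝ≥0) (x₀ : X) (y₀ : Y) :
    IsCompact {f : X → Y | LipschitzWith K f ∧ f x₀ = y₀} := by
  refine (isCompact_univ_pi fun x => isCompact_closedBall y₀ (K * dist x x₀)).of_isClosed_subset
    ?_ fun f hf x _ => ?_
  · simp only [lipschitzWith_iff_dist_le_mul, ofPred_forall, ofPred_and]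
    refine .inter (isClosed_iInter fun x => isClosed_iInter fun y => ?_)
      (isClosed_eq (continuous_apply x₀) continuous_const)
    exact isClosed_le (by fun_prop) continuous_const
  · rw [Metric.mem_closedBall, ← hf.2]
    exact hf.1.dist_le_mul x x₀

theorem tendstoUniformlyOn_of_lipschitzWith {ι X Y : Type*} [PseudoMetricSpace X]
    [PseudoMetricSpace Y] {l : Filter ι} {f : ι → X → Y} {g : X → Y} {K : ℝ≥0} {s : Set X}
    (hs : IsCompact s) (hf : ∀ i, LipschitzWith K (f i)) (hfg : Tendsto f l (𝓝 g)) :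
    TendstoUniformlyOn f g l s := by
  have hcov : ⋃₀ {t : Set X | IsCompact t} = univ :=
    sUnion_eq_univ_iff.2 fun x => ⟨{x}, isCompact_singleton, rfl⟩
  have h := (EquicontinuousOn.tendsto_uniformOnFun_iff_pi (fun _ h => h) hcov
    (fun t _ => (LipschitzWith.uniformEquicontinuous f K hf).equicontinuous.equicontinuousOn t)
    l g).2 hfg
  exact UniformOnFun.tendsto_iff_tendstoUniformlyOn.1 h s hs

theorem tendstoUniformlyOn_comp_delay {ι E : Type*} [PseudoMetricSpace E] {l : Filter ι}
    {z : ι → ℝ → E} {y : ℝ → E} {δ : ι → ℝ} {M : ℝ≥0} {T : ℝ}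
    (hzy : TendstoUniformlyOn z y l (Icc 0 T)) (hy : LipschitzWith M y)
    (hδ : Tendsto δ l (𝓝 0)) (hδ0 : ∀ i, 0 ≤ δ i) :
    TendstoUniformlyOn (fun i s => z i (max (s - δ i) 0)) y l (Icc 0 T) := by
  rw [Metric.tendstoUniformlyOn_iff] at hzy ⊢
  intro ε hε
  filter_upwards [hzy (ε / 2) (by positivity),
    Metric.tendsto_nhds.1 hδ (ε / 2 / (M + 1)) (by positivity)] with i hzi hδi s hs
  rw [Real.dist_eq, sub_zero, abs_of_nonneg (hδ0 i), lt_div_iff₀ (by positivity)] at hδi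
  have hσ : max (s - δ i) 0 ∈ Icc 0 T :=
    ⟨le_max_right _ _, max_le (by linarith [hs.2, hδ0 i]) (hs.1.trans hs.2)⟩
  have hyσ : dist (y s) (y (max (s - δ i) 0)) ≤ M * δ i := by
    refine (hy.dist_le_mul _ _).trans (mul_le_mul_of_nonneg_left ?_ M.2)
    rw [Real.dist_eq, abs_le]
    have hσs : max (s - δ i) 0 ≤ s := max_le (by linarith [hδ0 i]) hs.1
    constructor <;> linarith [le_max_left (s - δ i) 0]
  have hMδ : (M : ℝ) * δ i ≤ δ i * (M + 1) := by nlinarith [hδ0 i]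
  linarith [dist_triangle (y s) (y (max (s - δ i) 0)) (z i (max (s - δ i) 0)), hzi _ hσ]

theorem tendsto_intervalIntegral_of_tendstoUniformlyOn {ι E : Type*} [NormedAddCommGroup E]
    [NormedSpace ℝ E] {l : Filter ι} {f : ι → ℝ → E} {g : ℝ → E} {a b : ℝ}
    (hf : ∀ i, IntervalIntegrable (f i) volume a b) (hg : IntervalIntegrable g volume a b)
    (hfg : TendstoUniformlyOn f g l (uIcc a b)) :
    Tendsto (fun i => ∫ s in a..b, f i s) l (𝓝 (∫ s in a..b, g s)) := by
  rw [Metric.tendsto_nhds]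
  intro ε hε
  have hε' : 0 < ε / (|b - a| + 1) := by positivity
  filter_upwards [Metric.tendstoUniformlyOn_iff.1 hfg _ hε'] with i hi
  rw [dist_eq_norm, ← integral_sub (hf i) hg]
  calc ‖∫ s in a..b, f i s - g s‖ ≤ ε / (|b - a| + 1) * |b - a| :=
        norm_integral_le_of_norm_le_const fun s hs => by
          rw [← dist_eq_norm, dist_comm]; exact (hi s (uIoc_subset_uIcc hs)).le
    _ < ε := by
        rw [div_mul_eq_mul_div, div_lt_iff₀ (by positivity)]
        nlinarith [abs_nonneg (b - a)]

section Tonelli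

variable {E : Type*} [NormedAddCommGroup E] [NormedSpace ℝ E] {F : ℝ → ℝ → E → E} {d : ℝ}

/-- Tonelli's delayed Picard iterates for `y' = F c t y`, `y 0 = 0`. -/
noncomputable def tonelliIter (F : ℝ → ℝ → E → E) (d : ℝ) : ℕ → ℝ → ℝ → E
  | 0 => fun _ _ => 0
  | k + 1 => fun c t => ∫ s in (0:ℝ)..t, F c s (tonelliIter F d k c (max (s - d) 0))

theorem tonelliIter_succ (k : ℕ) (c t : ℝ) :
    tonelliIter F d (k + 1) c t =
      ∫ s in (0:ℝ)..t, F c s (tonelliIter F d k c (max (s - d) 0)) :=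
  rfl

theorem tonelliIter_succ_apply_zero (k : ℕ) (c : ℝ) : tonelliIter F d (k + 1) c 0 = 0 :=
  integral_same

theorem continuous_tonelliIter (hF : Continuous fun q : ℝ × ℝ × E => F q.1 q.2.1 q.2.2)
    (d : ℝ) : ∀ k, Continuous fun q : ℝ × ℝ => tonelliIter F d k q.1 q.2
  | 0 => continuous_const
  | k + 1 => by
    refine continuous_parametric_intervalIntegral_of_continuous
      (f := fun (q : ℝ × ℝ) s => F q.1 s (tonelliIter F d k q.1 (max (s - d) 0)))
      ?_ continuous_snd
    exact hF.comp <| continuous_fst.fst.prodMk <| continuous_snd.prodMk <|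
      (continuous_tonelliIter hF d k).comp <| continuous_fst.fst.prodMk <|
        (continuous_snd.sub continuous_const).max continuous_const

theorem continuous_tonelliIter_integrand
    (hF : Continuous fun q : ℝ × ℝ × E => F q.1 q.2.1 q.2.2) (k : ℕ) (c : ℝ) :
    Continuous fun s => F c s (tonelliIter F d k c (max (s - d) 0)) :=
  hF.comp <| continuous_const.prodMk <| continuous_id.prodMk <|
    ((continuous_tonelliIter hF d k).comp (continuous_const.prodMk continuous_id)).comp <|
      (continuous_id.sub continuous_const).max continuous_const

theorem tonelliIter_succ_succ_of_le (hd : 0 ≤ d) (c : ℝ) :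
    ∀ (k : ℕ) {t : ℝ}, t ≤ k * d → tonelliIter F d (k + 2) c t = tonelliIter F d (k + 1) c t
  | 0, t, ht => by
    refine integral_congr fun s hs => ?_
    have hs0 : max (s - d) 0 = 0 := max_eq_right (by
      rcases le_max_iff.1 hs.2 with h | h <;> push_cast at ht <;> linarith)
    rw [hs0]
    exact congrArg (F c s) (tonelliIter_succ_apply_zero 0 c)
  | k + 1, t, ht => by
    refine integral_congr fun s hs => ?_
    have hsd : max (s - d) 0 ≤ k * d := by
      push_cast at ht
      exact max_le (by rcases le_max_iff.1 hs.2 with h | h <;> nlinarith) (by positivity)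
    simp only [tonelliIter_succ_succ_of_le hd c k hsd]

theorem tonelliIter_eq_integral (hd : 0 ≤ d) (k : ℕ) (c : ℝ) {t : ℝ} (ht : t ≤ (k + 1) * d) :
    tonelliIter F d (k + 2) c t =
      ∫ s in (0:ℝ)..t, F c s (tonelliIter F d (k + 2) c (max (s - d) 0)) := by
  refine integral_congr fun s hs => ?_
  have hsd : max (s - d) 0 ≤ k * d :=
    max_le (by rcases le_max_iff.1 hs.2 with h | h <;> nlinarith) (by positivity)
  simp only [tonelliIter_succ_succ_of_le hd c k hsd]

theorem lipschitzWith_tonelliIter (hF : Continuous fun q : ℝ × ℝ × E => F q.1 q.2.1 q.2.2)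
    {M : ℝ≥0} (hM : ∀ c t y, ‖F c t y‖ ≤ M) (c : ℝ) :
    ∀ k, LipschitzWith M (tonelliIter F d k c)
  | 0 => (LipschitzWith.const (0 : E)).weaken bot_le
  | k + 1 => lipschitzWith_primitive
      (continuous_tonelliIter_integrand hF k c).intervalIntegrable (fun _ => hM _ _ _) 0

theorem tonelliIter_eq_zero {c : ℝ} (h : ∀ t, F c t 0 = 0) : ∀ k t, tonelliIter F d k c t = 0
  | 0, _ => rfl
  | k + 1, t => by simp [tonelliIter_succ, tonelliIter_eq_zero h k, h]

theorem mul_le_tonelliIter [CompleteSpace E]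
    (hF : Continuous fun q : ℝ × ℝ × E => F q.1 q.2.1 q.2.2) (Λ : E →L[ℝ] ℝ) {c m t : ℝ}
    (h : ∀ s y, m ≤ Λ (F c s y)) (ht : 0 ≤ t) (k : ℕ) :
    m * t ≤ Λ (tonelliIter F d (k + 1) c t) := by
  have hg := continuous_tonelliIter_integrand (d := d) hF k c
  rw [tonelliIter_succ, ← Λ.intervalIntegral_comp_comm (hg.intervalIntegrable 0 t)]
  calc m * t = ∫ _ in (0:ℝ)..t, m := by simp [mul_comm]
    _ ≤ _ := integral_mono_on ht intervalIntegrable_const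
      ((Λ.continuous.comp hg).intervalIntegrable 0 t) fun s _ => h _ _

theorem exists_tonelliIter_eq_of_shooting [CompleteSpace E]
    (hF : Continuous fun q : ℝ × ℝ × E => F q.1 q.2.1 q.2.2) (Λ : E →L[ℝ] ℝ) {c₁ c₂ T η : ℝ}
    (hc : c₁ ≤ c₂) (hT : 0 < T) (h₁ : ∀ t, F c₁ t 0 = 0) (hη : 0 ≤ η)
    (h₂ : ∀ t y, η / T ≤ Λ (F c₂ t y)) (d : ℝ) (k : ℕ) :
    ∃ c ∈ Icc c₁ c₂, Λ (tonelliIter F d (k + 1) c T) = η := by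
  refine intermediate_value_Icc hc
    ((Λ.continuous.comp ((continuous_tonelliIter hF d (k + 1)).comp
      (continuous_id.prodMk continuous_const))).continuousOn) ⟨?_, ?_⟩
  · simp [tonelliIter_eq_zero h₁, hη]
  · simpa [div_mul_cancel₀ η hT.ne'] using mul_le_tonelliIter hF Λ h₂ hT.le k (d := d)

theorem eq_integral_of_tendsto_delayed [ProperSpace E]
    (hF : Continuous fun q : ℝ × ℝ × E => F q.1 q.2.1 q.2.2) {ι : Type*} {l : Filter ι}
    [l.NeBot] {c : ι → ℝ} {c₀ : ℝ} {δ : ι → ℝ} {z : ι → ℝ → E} {y : ℝ → E} {M : ℝ≥0} {T : ℝ}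
    (hc : Tendsto c l (𝓝 c₀)) (hδ : Tendsto δ l (𝓝 0)) (hδ0 : ∀ i, 0 ≤ δ i)
    (hz : ∀ i, LipschitzWith M (z i)) (hy : LipschitzWith M y) (hzy : Tendsto z l (𝓝 y))
    (heq : ∀ i, ∀ t ∈ Icc 0 T, z i t = ∫ s in (0:ℝ)..t, F (c i) s (z i (max (s - δ i) 0))) :
    ∀ t ∈ Icc 0 T, y t = ∫ s in (0:ℝ)..t, F c₀ s (y s) := by
  have hzσ := tendstoUniformlyOn_comp_delay
    (tendstoUniformlyOn_of_lipschitzWith isCompact_Icc hz hzy) hy hδ hδ0 (T := T)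
  set S : Set (ℝ × ℝ × E) :=
    Icc (c₀ - 1) (c₀ + 1) ×ˢ Icc 0 T ×ˢ Metric.cthickening 1 (y '' Icc 0 T)
  have hFu := (isCompact_Icc.prod (isCompact_Icc.prod
    (isCompact_Icc.image hy.continuous).cthickening)).uniformContinuousOn_of_continuous
      hF.continuousOn (s := S)
  have hFσ : TendstoUniformlyOn (fun i s => F (c i) s (z i (max (s - δ i) 0)))
      (fun s => F c₀ s (y s)) l (Icc 0 T) := by
    rw [Metric.tendstoUniformlyOn_iff] at hzσ ⊢
    intro ε hε
    obtain ⟨r, hr, hrF⟩ := Metric.uniformContinuousOn_iff.1 hFu ε hε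
    have hr₁ : 0 < min r 1 := lt_min hr one_pos
    filter_upwards [hzσ _ hr₁, Metric.tendsto_nhds.1 hc _ hr₁] with i hzi hci s hs
    rw [Real.dist_eq, abs_lt] at hci
    have hr₁' := min_le_right r 1
    refine hrF (c₀, s, y s) ⟨⟨by linarith, by linarith⟩, hs,
      Metric.self_subset_cthickening _ (mem_image_of_mem y hs)⟩ (c i, s, z i (max (s - δ i) 0))
      ⟨⟨by linarith, by linarith⟩, hs, Metric.mem_cthickening_of_dist_le _ (y s) _ _
        (mem_image_of_mem y hs) (by rw [dist_comm]; linarith [hzi s hs])⟩ ?_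
    simp only [Prod.dist_eq, dist_self, Real.dist_eq]
    exact max_lt (by rw [abs_sub_comm, abs_lt]; constructor <;> linarith [min_le_left r 1])
      (max_lt hr ((hzi s hs).trans_le (min_le_left r 1)))
  intro t ht
  have hlim := tendsto_intervalIntegral_of_tendstoUniformlyOn (a := 0) (b := t)
    (fun i => (hF.comp (continuous_const.prodMk (continuous_id.prodMk ((hz i).continuous.comp
      ((continuous_id.sub continuous_const).max continuous_const))))).intervalIntegrable 0 t)
    ((hF.comp (continuous_const.prodMk (continuous_id.prodMk hy.continuous))).intervalIntegrable
      0 t)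
    (hFσ.mono (by rw [uIcc_of_le ht.1]; exact Icc_subset_Icc_right ht.2))
  exact tendsto_nhds_unique ((continuous_apply t).continuousAt.tendsto.comp hzy)
    (hlim.congr fun i => (heq i t ht).symm)

theorem exists_eq_integral_of_shooting [ProperSpace E]
    (hF : Continuous fun q : ℝ × ℝ × E => F q.1 q.2.1 q.2.2) {M : ℝ≥0}
    (hM : ∀ c t y, ‖F c t y‖ ≤ M) (Λ : E →L[ℝ] ℝ) {c₁ c₂ T η : ℝ} (hc : c₁ ≤ c₂) (hT : 0 < T)
    (h₁ : ∀ t, F c₁ t 0 = 0) (hη : 0 ≤ η) (h₂ : ∀ t y, η / T ≤ Λ (F c₂ t y)) :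
    ∃ c ∈ Icc c₁ c₂, ∃ y : ℝ → E, LipschitzWith M y ∧
      (∀ t ∈ Icc 0 T, y t = ∫ s in (0:ℝ)..t, F c s (y s)) ∧ Λ (y T) = η := by
  set δ : ℕ → ℝ := fun n => T / (n + 1)
  choose c hc₁₂ hcη using fun n =>
    exists_tonelliIter_eq_of_shooting hF Λ hc hT h₁ hη h₂ (δ n) (n + 1)
  set z : ℕ → ℝ → E := fun n => tonelliIter F (δ n) (n + 2) (c n)
  -- `ℝ → E` with the product topology is not first-countable, so compactness is used through a
  -- limit along an ultrafilter rather than through a convergent subsequence.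
  set U : Ultrafilter ℕ := Ultrafilter.of atTop
  obtain ⟨⟨c₀, y⟩, ⟨hc₀, hy, -⟩, hlim⟩ :=
    (isCompact_Icc.prod (isCompact_setOf_lipschitzWith M 0 (0 : E))).ultrafilter_le_nhds
      (U.map fun n => (c n, z n)) (le_principal_iff.2 (mem_map.2 (univ_mem' fun n =>
        ⟨hc₁₂ n, lipschitzWith_tonelliIter hF hM _ _, tonelliIter_succ_apply_zero _ _⟩)))
  replace hlim : Tendsto (fun n => (c n, z n)) U (𝓝 (c₀, y)) := hlim
  have hδ : Tendsto δ U (𝓝 0) :=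
    ((tendsto_const_div_atTop_nhds_zero_nat T).comp (tendsto_add_atTop_nat 1)).mono_left
      (Ultrafilter.of_le _) |>.congr fun n => by simp [δ]
  have heq : ∀ n, ∀ t ∈ Icc 0 T, z n t = ∫ s in (0:ℝ)..t, F (c n) s (z n (max (s - δ n) 0)) :=
    fun n t ht => tonelliIter_eq_integral (by positivity) n (c n) (by
      simp only [δ]; rw [mul_div_cancel₀ _ (by positivity)]; exact ht.2)
  refine ⟨c₀, hc₀, y, hy, eq_integral_of_tendsto_delayed hF hlim.fst_nhds hδ
    (fun n => by positivity) (fun n => lipschitzWith_tonelliIter hF hM _ _) hy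
    hlim.snd_nhds heq, ?_⟩
  exact tendsto_nhds_unique ((Λ.continuous.tendsto _).comp
    ((continuous_apply T).continuousAt.tendsto.comp hlim.snd_nhds))
    (tendsto_const_nhds.congr fun n => (hcη n).symm)

end Tonelli

/-- The system for `(w, ℘ φ(w') - c)` with `Ψ` a capped inverse of `φ`. Time, `w` and
`℘ φ(w') - c` are clamped to `[0, T]`, `[0, η]` and `[0, ∞)`, which makes the field bounded and
continuous everywhere without changing it along the solution we are after. -/
noncomputable def dirichletField (Ψ p a f l : ℝ → ℝ) (T η c t : ℝ) (y : ℝ × ℝ) : ℝ × ℝ :=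
  (Ψ ((c + max 0 y.2) / p (max 0 (min T t))),
    p (max 0 (min T t)) * a (max 0 (min T t)) * f (max 0 (min η y.1)) *
      l (Ψ ((c + max 0 y.2) / p (max 0 (min T t)))))

section DirichletField

variable {Ψ p a f l : ℝ → ℝ} {T η ξ : ℝ}

theorem dirichletField_of_mem {c t : ℝ} {y : ℝ × ℝ} (ht : t ∈ Icc 0 T) (hy₁ : y.1 ∈ Icc 0 η)
    (hy₂ : 0 ≤ y.2) :
    dirichletField Ψ p a f l T η c t y =
      (Ψ ((c + y.2) / p t), p t * a t * f y.1 * l (Ψ ((c + y.2) / p t))) := by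
  rw [dirichletField, max_eq_right hy₂, min_eq_right ht.2, max_eq_right ht.1,
    min_eq_right hy₁.2, max_eq_right hy₁.1]

theorem continuous_dirichletField (hT : 0 ≤ T) (hη : 0 ≤ η) (hΨ : Continuous Ψ)
    (hΨξ : ∀ x, Ψ x ∈ Icc 0 ξ) (hpc : ContinuousOn p (Icc 0 T)) (hp : ∀ t ∈ Icc 0 T, 0 < p t)
    (hac : ContinuousOn a (Icc 0 T)) (hfc : ContinuousOn f (Icc 0 η))
    (hlc : ContinuousOn l (Icc 0 ξ)) :
    Continuous fun q : ℝ × ℝ × (ℝ × ℝ) => dirichletField Ψ p a f l T η q.1 q.2.1 q.2.2 := by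
  have hP : Continuous fun q : ℝ × ℝ × (ℝ × ℝ) => p (max 0 (min T q.2.1)) :=
    hpc.comp_continuous (by fun_prop) fun q => max_min_mem_Icc hT _
  have hv : Continuous fun q : ℝ × ℝ × (ℝ × ℝ) =>
      Ψ ((q.1 + max 0 q.2.2.2) / p (max 0 (min T q.2.1))) :=
    hΨ.comp <| (by fun_prop : Continuous fun q : ℝ × ℝ × (ℝ × ℝ) => q.1 + max 0 q.2.2.2).div hP
      fun q => (hp _ (max_min_mem_Icc hT _)).ne'
  refine hv.prodMk (((hP.mul ?_).mul ?_).mul ?_)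
  · exact hac.comp_continuous (by fun_prop) fun q => max_min_mem_Icc hT _
  · exact hfc.comp_continuous (by fun_prop) fun q => max_min_mem_Icc hη _
  · exact hlc.comp_continuous hv fun q => hΨξ _

theorem exists_norm_dirichletField_le (hT : 0 ≤ T) (hη : 0 ≤ η) (hΨξ : ∀ x, Ψ x ∈ Icc 0 ξ)
    (hpc : ContinuousOn p (Icc 0 T)) (hac : ContinuousOn a (Icc 0 T))
    (hfc : ContinuousOn f (Icc 0 η)) (hlc : ContinuousOn l (Icc 0 ξ)) :
    ∃ M : ℝ≥0, ∀ c t y, ‖dirichletField Ψ p a f l T η c t y‖ ≤ M := by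
  obtain ⟨C, hC⟩ := (isCompact_Icc.prod (isCompact_Icc.prod isCompact_Icc))
    |>.exists_bound_of_continuousOn (f := fun q : ℝ × ℝ × ℝ => p q.1 * a q.1 * f q.2.1 * l q.2.2) <|
      (((hpc.comp continuous_fst.continuousOn fun q hq => hq.1).mul
        (hac.comp continuous_fst.continuousOn fun q hq => hq.1)).mul
        (hfc.comp continuous_snd.fst.continuousOn fun q hq => hq.2.1)).mul
        (hlc.comp continuous_snd.snd.continuousOn fun q hq => hq.2.2)
  refine ⟨(max ξ C).toNNReal, fun c t y => (norm_prod_le_iff.2 ⟨?_, ?_⟩).trans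
    (Real.le_coe_toNNReal _)⟩
  · rw [Real.norm_eq_abs]
    exact (abs_of_nonneg (hΨξ _).1).trans_le ((hΨξ _).2.trans (le_max_left _ _))
  · exact (hC (_, _, _) ⟨max_min_mem_Icc hT _, max_min_mem_Icc hη _, hΨξ _⟩).trans
      (le_max_right _ _)

theorem dirichletField_zero (hΨ0 : Ψ 0 = 0) (hfl : f 0 * l 0 = 0) (t : ℝ) :
    dirichletField Ψ p a f l T η 0 t 0 = 0 := by
  simp [dirichletField, hΨ0, mul_assoc, hfl]

theorem le_dirichletField_fst {p₁ c t : ℝ} (hΨ : Monotone Ψ) (hT : 0 ≤ T)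
    (hp : ∀ t ∈ Icc 0 T, 0 < p t ∧ p t ≤ p₁) (hc : 0 ≤ c) (y : ℝ × ℝ) :
    Ψ (c / p₁) ≤ (dirichletField Ψ p a f l T η c t y).1 := by
  obtain ⟨hp0, hp₁⟩ := hp _ (max_min_mem_Icc hT t)
  refine hΨ ((div_le_div_of_nonneg_left hc hp0 hp₁).trans ?_)
  gcongr
  exact le_add_of_nonneg_right (le_max_left _ _)

theorem dirichletField_snd_nonneg (hT : 0 ≤ T) (hη : 0 ≤ η) (hΨξ : ∀ x, Ψ x ∈ Icc 0 ξ)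
    (hp : ∀ t ∈ Icc 0 T, 0 < p t) (ha : ∀ t ∈ Icc 0 T, 0 ≤ a t)
    (hf : ∀ x ∈ Icc 0 η, 0 ≤ f x) (hl : ∀ x ∈ Icc 0 ξ, 0 ≤ l x) (c t : ℝ) (y : ℝ × ℝ) :
    0 ≤ (dirichletField Ψ p a f l T η c t y).2 :=
  mul_nonneg (mul_nonneg (mul_nonneg (hp _ (max_min_mem_Icc hT t)).le
    (ha _ (max_min_mem_Icc hT t))) (hf _ (max_min_mem_Icc hη _))) (hl _ (hΨξ _))

theorem exists_dirichletField_solution {p₁ : ℝ} (hT : 0 < T) (hη : 0 < η) (hΨc : Continuous Ψ)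
    (hΨm : Monotone Ψ) (hΨξ : ∀ x, Ψ x ∈ Icc 0 ξ) (hΨ0 : Ψ 0 = 0)
    (hpc : ContinuousOn p (Icc 0 T)) (hp : ∀ t ∈ Icc 0 T, 0 < p t ∧ p t ≤ p₁)
    (hac : ContinuousOn a (Icc 0 T)) (hfc : ContinuousOn f (Icc 0 η))
    (hlc : ContinuousOn l (Icc 0 ξ)) (hfl : f 0 * l 0 = 0) {c₂ : ℝ} (hc₂ : 0 ≤ c₂)
    (hΨc₂ : Ψ (c₂ / p₁) = η / T) :
    ∃ c ∈ Icc 0 c₂, ∃ y : ℝ → ℝ × ℝ, Continuous y ∧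
      (∀ t ∈ Icc 0 T, y t = ∫ s in (0:ℝ)..t, dirichletField Ψ p a f l T η c s (y s)) ∧
      (y T).1 = η := by
  obtain ⟨M, hM⟩ := exists_norm_dirichletField_le hT.le hη.le hΨξ hpc hac hfc hlc
  obtain ⟨c, hc, y, hy, hyeq, hyT⟩ := exists_eq_integral_of_shooting
    (continuous_dirichletField hT.le hη.le hΨc hΨξ hpc (fun t ht => (hp t ht).1) hac hfc hlc)
    hM (ContinuousLinearMap.fst ℝ ℝ ℝ) hc₂ hT (dirichletField_zero hΨ0 hfl) hη.le
    fun t y => hΨc₂ ▸ le_dirichletField_fst (a := a) (f := f) (l := l) (η := η) hΨm hT.le hp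
      hc₂ y
  exact ⟨c, hc, y, hy.continuous, hyeq, hyT⟩

theorem dirichletField_solution_bounds {fη lξ c : ℝ} {y : ℝ → ℝ × ℝ} (hT : 0 ≤ T)
    (hη : 0 ≤ η) (hΨξ : ∀ x, Ψ x ∈ Icc 0 ξ) (hp : ∀ t ∈ Icc 0 T, 0 < p t)
    (ha : ∀ t ∈ Icc 0 T, 0 ≤ a t) (hpa : ContinuousOn (fun t => p t * a t) (Icc 0 T))
    (hf : ∀ x ∈ Icc 0 η, 0 ≤ f x ∧ f x ≤ fη) (hl : ∀ x ∈ Icc 0 ξ, 0 ≤ l x ∧ l x ≤ lξ)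
    (hF : Continuous fun t => dirichletField Ψ p a f l T η c t (y t))
    (hyeq : ∀ t ∈ Icc 0 T, y t = ∫ s in (0:ℝ)..t, dirichletField Ψ p a f l T η c s (y s))
    (hyT : (y T).1 = η) (t : ℝ) (ht : t ∈ Icc 0 T) :
    (y t).1 ∈ Icc 0 η ∧ 0 ≤ (y t).2 ∧ (y t).2 ≤ (∫ s in (0:ℝ)..t, p s * a s) * (fη * lξ) := by
  set F := fun t => dirichletField Ψ p a f l T η c t (y t)
  have hW : ∀ t ∈ Icc 0 T, (y t).1 = ∫ s in (0:ℝ)..t, (F s).1 := fun t ht => by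
    rw [hyeq t ht, fst_intervalIntegral (hF.intervalIntegrable _ _)]
  have hG : ∀ t ∈ Icc 0 T, (y t).2 = ∫ s in (0:ℝ)..t, (F s).2 := fun t ht => by
    rw [hyeq t ht, snd_intervalIntegral (hF.intervalIntegrable _ _)]
  have hG0 : ∀ t ∈ Icc 0 T, 0 ≤ (y t).2 := fun t ht => hG t ht ▸ integral_nonneg ht.1
    fun s _ => dirichletField_snd_nonneg hT hη hΨξ hp ha (fun x hx => (hf x hx).1)
      (fun x hx => (hl x hx).1) _ _ _
  have hWmem : ∀ t ∈ Icc 0 T, (y t).1 ∈ Icc 0 η := fun t ht => by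
    refine ⟨hW t ht ▸ integral_nonneg ht.1 fun s _ => (hΨξ _).1, ?_⟩
    have : η - (y t).1 = ∫ s in t..T, (F s).1 := by
      rw [← hyT, hW t ht, hW T ⟨hT, le_rfl⟩]
      exact integral_interval_sub_left (hF.fst.intervalIntegrable _ _)
        (hF.fst.intervalIntegrable _ _)
    linarith [integral_nonneg (μ := volume) (f := fun s => (F s).1) ht.2 fun s _ => (hΨξ _).1]
  refine ⟨hWmem t ht, hG0 t ht, ?_⟩
  have hsub : uIcc 0 t ⊆ Icc 0 T := by rw [uIcc_of_le ht.1]; exact Icc_subset_Icc_right ht.2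
  rw [hG t ht, ← intervalIntegral.integral_mul_const]
  refine integral_mono_on ht.1 (hF.snd.intervalIntegrable _ _)
    ((hpa.mono hsub).intervalIntegrable.mul_const _) fun s hs => ?_
  have hs' : s ∈ Icc 0 T := ⟨hs.1, hs.2.trans ht.2⟩
  have hf' := hf _ (hWmem s hs')
  show (dirichletField Ψ p a f l T η c s (y s)).2 ≤ _
  rw [dirichletField_of_mem hs' (hWmem s hs') (hG0 s hs'), mul_assoc (p s * a s)]
  exact mul_le_mul_of_nonneg_left (mul_le_mul hf'.2 (hl _ (hΨξ _)).2 (hl _ (hΨξ _)).1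
    (hf'.1.trans hf'.2)) (mul_nonneg (hp s hs').le (ha s hs'))

end DirichletField

theorem dirichlet_apriori_estimate {c G P p₀ p₁ Φ I C Θ : ℝ} (hp₀ : 0 < p₀) (hP : p₀ ≤ P)
    (hc₀ : 0 ≤ c) (hc : c ≤ p₁ * Φ) (hG : G ≤ I * C) (hC : 0 ≤ C) (hI : P⁻¹ * I ≤ Θ) :
    (c + G) / P ≤ p₁ / p₀ * Φ + Θ * C := by
  rw [add_div]
  gcongr
  · calc c / P ≤ p₁ * Φ / p₀ := div_le_div₀ (hc₀.trans hc) hc hp₀ hP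
      _ = p₁ / p₀ * Φ := by ring
  · calc G / P ≤ I * C / P := div_le_div_of_nonneg_right hG (hp₀.trans_le hP).le
      _ = P⁻¹ * I * C := by ring
      _ ≤ Θ * C := mul_le_mul_of_nonneg_right hI hC

theorem dirichlet_of_dirichletField_solution {φ Ψ p a f l : ℝ → ℝ} {y : ℝ → ℝ × ℝ}
    {T η ξ p₀ p₁ fη lξ Θ B c : ℝ} (hT : 0 < T) (hη : 0 ≤ η) (hΨξ : ∀ x, Ψ x ∈ Icc 0 ξ)
    (hφΨ : ∀ x ∈ Icc 0 (φ ξ), φ (Ψ x) = x) (hpc : ContinuousOn p (Icc 0 T)) (hp₀ : 0 < p₀)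
    (hp : ∀ t ∈ Icc 0 T, p₀ ≤ p t ∧ p t ≤ p₁) (hac : ContinuousOn a (Icc 0 T))
    (ha : ∀ t ∈ Icc 0 T, 0 ≤ a t) (hf : ∀ x ∈ Icc 0 η, 0 ≤ f x ∧ f x ≤ fη)
    (hl : ∀ x ∈ Icc 0 ξ, 0 ≤ l x ∧ l x ≤ lξ)
    (hΘ : ∀ t ∈ Icc 0 T, (p t)⁻¹ * ∫ s in (0:ℝ)..t, p s * a s ≤ Θ)
    (hB : p₁ / p₀ * φ (η / T) + Θ * fη * lξ ≤ B) (hBξ : B < φ ξ)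
    (hc : c ∈ Icc 0 (p₁ * φ (η / T)))
    (hF : Continuous fun t => dirichletField Ψ p a f l T η c t (y t))
    (hyeq : ∀ t ∈ Icc 0 T, y t = ∫ s in (0:ℝ)..t, dirichletField Ψ p a f l T η c s (y s))
    (hyT : (y T).1 = η) :
    ∃ w w' : ℝ → ℝ,
      (∀ t ∈ Icc 0 T, HasDerivWithinAt w (w' t) (Icc 0 T) t) ∧ ContinuousOn w' (Icc 0 T) ∧
      w 0 = 0 ∧ w T = η ∧ (∀ t ∈ Icc 0 T, 0 ≤ w t ∧ w t ≤ η) ∧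
      (∀ t ∈ Ioo 0 T, HasDerivAt (fun s => p s * φ (w' s)) (p t * a t * f (w t) * l |w' t|) t) ∧
      (∀ t ∈ Icc 0 T, 0 ≤ w' t ∧ φ (w' t) ≤ B) ∧ (∀ t ∈ Icc 0 T, w' t < ξ) := by
  set F := fun t => dirichletField Ψ p a f l T η c t (y t)
  have hp' : ∀ t ∈ Icc 0 T, 0 < p t := fun t ht => hp₀.trans_le (hp t ht).1
  have hbd := dirichletField_solution_bounds hT.le hη hΨξ hp' ha (hpc.mul hac) hf hl hF hyeq hyT
  have hFeq : ∀ t ∈ Icc 0 T, F t =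
      (Ψ ((c + (y t).2) / p t), p t * a t * f (y t).1 * l (Ψ ((c + (y t).2) / p t))) :=
    fun t ht => dirichletField_of_mem ht (hbd t ht).1 (hbd t ht).2.1
  have harg : ∀ t ∈ Icc 0 T, (c + (y t).2) / p t ∈ Icc 0 B := by
    intro t ht
    have hfη := (hf 0 ⟨le_rfl, hη⟩).1.trans (hf 0 ⟨le_rfl, hη⟩).2
    have hlξ := (hl _ (hΨξ 0)).1.trans (hl _ (hΨξ 0)).2
    refine ⟨div_nonneg (add_nonneg hc.1 (hbd t ht).2.1) (hp' t ht).le, hB.trans' ?_⟩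
    simpa only [mul_assoc] using dirichlet_apriori_estimate hp₀ (hp t ht).1 hc.1 hc.2
      (hbd t ht).2.2 (mul_nonneg hfη hlξ) (hΘ t ht)
  have hφw' : ∀ t ∈ Icc 0 T, φ (F t).1 = (c + (y t).2) / p t := fun t ht => by
    rw [hFeq t ht]; exact hφΨ _ ⟨(harg t ht).1, (harg t ht).2.trans hBξ.le⟩
  have hW : ∀ t ∈ Icc 0 T, (y t).1 = ∫ s in (0:ℝ)..t, (F s).1 := fun t ht => by
    rw [hyeq t ht, fst_intervalIntegral (hF.intervalIntegrable _ _)]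
  refine ⟨fun t => (y t).1, fun t => (F t).1, fun t ht => ?_, hF.fst.continuousOn,
    by simpa using hW 0 ⟨le_rfl, hT.le⟩, hyT, fun t ht => (hbd t ht).1, fun t ht => ?_,
    fun t ht => ⟨(hΨξ _).1, (hφw' t ht).le.trans (harg t ht).2⟩, fun t ht => ?_⟩
  · exact (hF.fst.integral_hasStrictDerivAt 0 t).hasDerivAt.hasDerivWithinAt.congr hW (hW t ht)
  · have hd := hasDerivAt_of_eqOn_const_add_integral (u := fun s => p s * φ (F s).1) hF.snd
      (fun s hs => by rw [hφw' s hs, mul_div_cancel₀ _ (hp' s hs).ne', hyeq s hs,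
        snd_intervalIntegral (hF.intervalIntegrable _ _)]) ht
    show HasDerivAt _ (p t * a t * f (y t).1 * l |(F t).1|) t
    rw [hFeq t (Ioo_subset_Icc_self ht)] at hd ⊢
    rwa [abs_of_nonneg (hΨξ _).1]
  · refine (hΨξ _).2.lt_of_ne fun h => hBξ.not_ge ?_
    have h' : (F t).1 = ξ := h
    rw [← h', hφw' t ht]
    exact (harg t ht).2

theorem exists_dirichlet_solution_of_bounds {φ p a f l : ℝ → ℝ} {T η ξ p₀ p₁ fη lξ Θ B : ℝ}
    (hT : 0 < T) (hη : 0 < η) (hξ : 0 < ξ)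
    (hφc : ContinuousOn φ (Ici 0)) (hφm : StrictMonoOn φ (Ici 0)) (hφ0 : φ 0 = 0)
    (hpc : ContinuousOn p (Icc 0 T)) (hp₀ : 0 < p₀) (hp : ∀ t ∈ Icc 0 T, p₀ ≤ p t ∧ p t ≤ p₁)
    (hac : ContinuousOn a (Icc 0 T)) (ha : ∀ t ∈ Icc 0 T, 0 ≤ a t)
    (hfc : ContinuousOn f (Icc 0 η)) (hf : ∀ x ∈ Icc 0 η, 0 ≤ f x ∧ f x ≤ fη)
    (hlc : ContinuousOn l (Icc 0 ξ)) (hl : ∀ x ∈ Icc 0 ξ, 0 ≤ l x ∧ l x ≤ lξ)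
    (hfl : f 0 * l 0 = 0) (hΘ : ∀ t ∈ Icc 0 T, (p t)⁻¹ * ∫ s in (0:ℝ)..t, p s * a s ≤ Θ)
    (hB : p₁ / p₀ * φ (η / T) + Θ * fη * lξ ≤ B) (hBξ : B < φ ξ) :
    ∃ w w' : ℝ → ℝ,
      (∀ t ∈ Icc 0 T, HasDerivWithinAt w (w' t) (Icc 0 T) t) ∧ ContinuousOn w' (Icc 0 T) ∧
      w 0 = 0 ∧ w T = η ∧ (∀ t ∈ Icc 0 T, 0 ≤ w t ∧ w t ≤ η) ∧
      (∀ t ∈ Ioo 0 T, HasDerivAt (fun s => p s * φ (w' s)) (p t * a t * f (w t) * l |w' t|) t) ∧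
      (∀ t ∈ Icc 0 T, 0 ≤ w' t ∧ φ (w' t) ≤ B) ∧ (∀ t ∈ Icc 0 T, w' t < ξ) := by
  obtain ⟨Ψ, hΨc, hΨm, hΨξ, hφΨ, hΨφ⟩ :=
    (hφm.mono Icc_subset_Ici_self).exists_continuous_monotone_inverse hξ.le
      (hφc.mono Icc_subset_Ici_self)
  rw [hφ0] at hφΨ
  have h0T : (0:ℝ) ∈ Icc 0 T := ⟨le_rfl, hT.le⟩
  have hp' : ∀ t ∈ Icc 0 T, 0 < p t ∧ p t ≤ p₁ :=
    fun t ht => ⟨hp₀.trans_le (hp t ht).1, (hp t ht).2⟩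
  have hp₁ : 0 < p₁ := (hp' 0 h0T).1.trans_le (hp' 0 h0T).2
  have hφηT : 0 ≤ φ (η / T) :=
    hφ0 ▸ hφm.monotoneOn self_mem_Ici (by simp; positivity) (by positivity)
  have hηT : η / T ∈ Icc 0 ξ := by
    have hΘfl : 0 ≤ Θ * fη * lξ := mul_nonneg (mul_nonneg (by simpa using hΘ 0 h0T)
      ((hf 0 ⟨le_rfl, hη.le⟩).1.trans (hf 0 ⟨le_rfl, hη.le⟩).2))
      ((hl 0 ⟨le_rfl, hξ.le⟩).1.trans (hl 0 ⟨le_rfl, hξ.le⟩).2)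
    have hp₀₁ : 1 ≤ p₁ / p₀ := (one_le_div hp₀).2 ((hp 0 h0T).1.trans (hp 0 h0T).2)
    refine ⟨by positivity, (hφm.lt_iff_lt (by simp; positivity) (by simp; positivity)).1 ?_ |>.le⟩
    nlinarith
  obtain ⟨c, hc, y, hy, hyeq, hyT⟩ := exists_dirichletField_solution (a := a) hT hη hΨc hΨm hΨξ
    (by simpa [hφ0] using hΨφ 0 ⟨le_rfl, hξ.le⟩) hpc hp' hac hfc hlc hfl
    (by positivity : 0 ≤ p₁ * φ (η / T)) (by rw [mul_div_cancel_left₀ _ hp₁.ne', hΨφ _ hηT])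
  exact dirichlet_of_dirichletField_solution hT hη.le hΨξ hφΨ hpc hp₀ hp hac ha hf hl hΘ hB hBξ hc
    ((continuous_dirichletField hT.le hη.le hΨc hΨξ hpc (fun t ht => (hp' t ht).1) hac hfc
      hlc).comp (continuous_const.prodMk (continuous_id.prodMk hy))) hyeq hyT

theorem stmt_1_general
    (T₀ : ℝ)
    (φ : ℝ → ℝ) (hφc : ContinuousOn φ (Ici 0)) (hφ0 : φ 0 = 0)
    (hφpos : ∀ t : ℝ, 0 < t → 0 < φ t)
    (hφmono : StrictMonoOn φ (Ioi 0))
    (η₀ : ℝ)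
    (f : ℝ → ℝ) (hfc : Continuous f)
    (hfnn : ∀ t ∈ Ioo (0:ℝ) η₀, 0 ≤ f t)
    (l : ℝ → ℝ) (hlc : ContinuousOn l (Ici 0))
    (hlnn : ∀ t ∈ Ici (0:ℝ), 0 ≤ l t)
    (hfl0 : f 0 * l 0 = 0)
    (p p' : ℝ → ℝ)
    (hpd : ∀ t ∈ Icc (0:ℝ) T₀, HasDerivWithinAt p (p' t) (Icc 0 T₀) t)
    (hppos : ∀ t ∈ Icc (0:ℝ) T₀, 0 < p t)
    (a : ℝ → ℝ) (hac : ContinuousOn a (Icc (0:ℝ) T₀))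
    (hapos : ∀ t ∈ Icc (0:ℝ) T₀, 0 < a t)
    (ξ T η : ℝ) (hξ : 0 < ξ) (hT : T ∈ Ioo (0:ℝ) T₀) (hη : η ∈ Ioo (0:ℝ) η₀)
    (hsmall :
      sSup (p '' Icc (0:ℝ) T₀) / sInf (p '' Icc (0:ℝ) T₀) * φ (η / T) +
        2 * sSup ((fun t => (p t)⁻¹ * (∫ s in (0:ℝ)..t, p s * a s)) '' Icc (0:ℝ) T) *
          sSup (f '' Icc (0:ℝ) η) * sSup (l '' Icc (0:ℝ) ξ) < φ ξ) :
    ∃ w w' : ℝ → ℝ,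
      (∀ t ∈ Icc (0:ℝ) T, HasDerivWithinAt w (w' t) (Icc 0 T) t) ∧
      ContinuousOn w' (Icc (0:ℝ) T) ∧
      w 0 = 0 ∧ w T = η ∧
      (∀ t ∈ Icc (0:ℝ) T, 0 ≤ w t ∧ w t ≤ η) ∧
      (∀ t ∈ Ioo (0:ℝ) T,
        HasDerivAt (fun s => p s * φ (w' s)) (p t * a t * f (w t) * l |w' t|) t) ∧
      (∀ t ∈ Icc (0:ℝ) T, 0 ≤ w' t ∧
        φ (w' t) ≤
          sSup (p '' Icc (0:ℝ) T₀) / sInf (p '' Icc (0:ℝ) T₀) * φ (η / T) +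
            2 * sSup ((fun t => (p t)⁻¹ * (∫ s in (0:ℝ)..t, p s * a s)) '' Icc (0:ℝ) T) *
              sSup (f '' Icc (0:ℝ) η) * sSup (l '' Icc (0:ℝ) ξ)) ∧
      (∀ t ∈ Icc (0:ℝ) T, w' t < ξ) := by
  obtain ⟨hT0, hTT₀⟩ := hT
  have hsub : Icc 0 T ⊆ Icc 0 T₀ := Icc_subset_Icc_right hTT₀.le
  have hpc : ContinuousOn p (Icc 0 T₀) := fun t ht => (hpd t ht).continuousWithinAt
  have hΘc : ContinuousOn (fun t => (p t)⁻¹ * ∫ s in (0:ℝ)..t, p s * a s) (Icc 0 T) := by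
    have hI := continuousOn_primitive_interval (μ := volume) (a := 0) (b := T)
      (f := fun s => p s * a s)
      (by rw [uIcc_of_le hT0.le]; exact ((hpc.mul hac).mono hsub).integrableOn_Icc)
    rw [uIcc_of_le hT0.le] at hI
    exact ((hpc.mono hsub).inv₀ fun t ht => (hppos t (hsub ht)).ne').mul hI
  obtain ⟨t₀, ht₀, hpt₀⟩ := (isCompact_Icc.image_of_continuousOn hpc).sInf_mem
    ((nonempty_Icc.2 (hT0.trans hTT₀).le).image p)
  have hf : ∀ x ∈ Icc 0 η, 0 ≤ f x := fun x hx =>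
    (isClosed_le continuous_const hfc).closure_subset_iff.2 hfnn <| by
      rw [closure_Ioo (hη.1.trans hη.2).ne]; exact Icc_subset_Icc_right hη.2.le hx
  have hl : ContinuousOn l (Icc 0 ξ) := hlc.mono Icc_subset_Ici_self
  have hΘfl : 0 ≤ sSup ((fun t => (p t)⁻¹ * (∫ s in (0:ℝ)..t, p s * a s)) '' Icc (0:ℝ) T) *
      sSup (f '' Icc (0:ℝ) η) * sSup (l '' Icc (0:ℝ) ξ) := by
    refine mul_nonneg (mul_nonneg ?_ ?_) ?_
    · simpa using hΘc.le_sSup_image_Icc (left_mem_Icc.2 hT0.le)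
    · exact (hf 0 (left_mem_Icc.2 hη.1.le)).trans
        (hfc.continuousOn.le_sSup_image_Icc (left_mem_Icc.2 hη.1.le))
    · exact (hlnn 0 self_mem_Ici).trans (hl.le_sSup_image_Icc (left_mem_Icc.2 hξ.le))
  refine exists_dirichlet_solution_of_bounds hT0 hη.1 hξ hφc
    (hφmono.Ici_of_Ioi fun x hx => by simpa [hφ0] using hφpos x hx) hφ0 (hpc.mono hsub)
    (hpt₀ ▸ hppos t₀ ht₀)
    (fun t ht => ⟨hpc.sInf_image_Icc_le (hsub ht), hpc.le_sSup_image_Icc (hsub ht)⟩)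
    (hac.mono hsub) (fun t ht => (hapos t (hsub ht)).le) hfc.continuousOn
    (fun x hx => ⟨hf x hx, hfc.continuousOn.le_sSup_image_Icc hx⟩) hl
    (fun x hx => ⟨hlnn x hx.1, hl.le_sSup_image_Icc hx⟩) hfl0
    (fun t ht => hΘc.le_sSup_image_Icc ht) ?_ hsmall
  linarith

/-- Theorem 3.2: existence for the singular two-point Dirichlet problem
`[℘ φ(w')]' = ℘ a f(w) l(|w'|)` on `(0,T)`, `w(0)=0`, `w(T)=η`. -/
theorem stmt_1
    (T₀ : ℝ) (hT₀ : 0 < T₀)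
    (φ : ℝ → ℝ) (hφc : ContinuousOn φ (Ici 0)) (hφ0 : φ 0 = 0)
    (hφpos : ∀ t : ℝ, 0 < t → 0 < φ t)
    (hφmono : StrictMonoOn φ (Ioi 0))
    (η₀ : ℝ) (hη₀ : 0 < η₀)
    (f : ℝ → ℝ) (hfc : Continuous f)
    (hfnn : ∀ t ∈ Ioo (0:ℝ) η₀, 0 ≤ f t)
    (l : ℝ → ℝ) (hlc : ContinuousOn l (Ici 0))
    (hlnn : ∀ t ∈ Ici (0:ℝ), 0 ≤ l t)
    (hfl0 : f 0 * l 0 = 0)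
    (p p' : ℝ → ℝ)
    (hpd : ∀ t ∈ Icc (0:ℝ) T₀, HasDerivWithinAt p (p' t) (Icc 0 T₀) t)
    (hp'c : ContinuousOn p' (Icc (0:ℝ) T₀))
    (hppos : ∀ t ∈ Icc (0:ℝ) T₀, 0 < p t)
    (a : ℝ → ℝ) (hac : ContinuousOn a (Icc (0:ℝ) T₀))
    (hapos : ∀ t ∈ Icc (0:ℝ) T₀, 0 < a t)
    (ξ T η : ℝ) (hξ : 0 < ξ) (hT : T ∈ Ioo (0:ℝ) T₀) (hη : η ∈ Ioo (0:ℝ) η₀)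
    (hsmall :
      sSup (p '' Icc (0:ℝ) T₀) / sInf (p '' Icc (0:ℝ) T₀) * φ (η / T) +
        2 * sSup ((fun t => (p t)⁻¹ * (∫ s in (0:ℝ)..t, p s * a s)) '' Icc (0:ℝ) T) *
          sSup (f '' Icc (0:ℝ) η) * sSup (l '' Icc (0:ℝ) ξ) < φ ξ) :
    ∃ w w' : ℝ → ℝ,
      (∀ t ∈ Icc (0:ℝ) T, HasDerivWithinAt w (w' t) (Icc 0 T) t) ∧
      ContinuousOn w' (Icc (0:ℝ) T) ∧
      w 0 = 0 ∧ w T = η ∧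
      (∀ t ∈ Icc (0:ℝ) T, 0 ≤ w t ∧ w t ≤ η) ∧
      (∀ t ∈ Ioo (0:ℝ) T,
        HasDerivAt (fun s => p s * φ (w' s)) (p t * a t * f (w t) * l |w' t|) t) ∧
      (∀ t ∈ Icc (0:ℝ) T, 0 ≤ w' t ∧
        φ (w' t) ≤
          sSup (p '' Icc (0:ℝ) T₀) / sInf (p '' Icc (0:ℝ) T₀) * φ (η / T) +
            2 * sSup ((fun t => (p t)⁻¹ * (∫ s in (0:ℝ)..t, p s * a s)) '' Icc (0:ℝ) T) *
              sSup (f '' Icc (0:ℝ) η) * sSup (l '' Icc (0:ℝ) ξ)) ∧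
      (∀ t ∈ Icc (0:ℝ) T, w' t < ξ) :=
  stmt_1_general T₀ φ hφc hφ0 hφpos hφmono η₀ f hfc hfnn l hlc hlnn hfl0 p p' hpd hppos a hac hapos
    ξ T η hξ hT hη hsmall
end

section
/- Let η₀ > 0, C ≥ 1, and let f ∈ C(ℝ) be nonnegative and C-increasing on (0,η₀). Set F(t) = ∫₀^t f(s) ds. Then for every σ ∈ [0,1] and every t ∈ [0,η₀): F(σ·t) ≤ C·σ·F(t). -/
open Set MeasureTheory

/-- Given `C ≥ 1`, a function `h` is `C`-increasing on `I` if
`sup {h s : s ∈ I, s ≤ t} ≤ C * h t` for every `t ∈ I`. -/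
def CIncreasingOn (C : ℝ) (h : ℝ → ℝ) (I : Set ℝ) : Prop :=
  ∀ s ∈ I, ∀ t ∈ I, s ≤ t → h s ≤ C * h t

/-- Lemma 3.5: if `f` is nonnegative and `C`-increasing on `(0,η₀)` then
`F(σ t) ≤ C σ F(t)` for `σ ∈ [0,1]`, `t ∈ [0,η₀)`, where `F(t) = ∫₀ᵗ f`. -/
theorem stmt_2
    (η₀ C : ℝ) (hη₀ : 0 < η₀) (hC : 1 ≤ C)
    (f : ℝ → ℝ) (hfc : Continuous f)
    (hfnn : ∀ t ∈ Ioo (0:ℝ) η₀, 0 ≤ f t)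
    (hfCinc : CIncreasingOn C f (Ioo 0 η₀))
    (F : ℝ → ℝ) (hF : ∀ t, F t = ∫ s in (0:ℝ)..t, f s) :
    ∀ σ ∈ Icc (0:ℝ) 1, ∀ t ∈ Ico (0:ℝ) η₀, F (σ * t) ≤ C * σ * F t := by
  have hf0 : 0 ≤ f 0 := by
    have htend : Filter.Tendsto f (nhdsWithin 0 (Ioi 0)) (nhds (f 0)) :=
      (hfc.tendsto 0).mono_left nhdsWithin_le_nhds
    refine ge_of_tendsto htend ?_
    filter_upwards [Ioo_mem_nhdsGT_of_mem (⟨le_refl _, hη₀⟩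
      : (0:ℝ) ∈ Ico (0:ℝ) η₀)] with x hx using hfnn x hx
  have hfnn' : ∀ x ∈ Ico (0:ℝ) η₀, 0 ≤ f x := by
    intro x hx
    rcases eq_or_lt_of_le hx.1 with h | h
    · simpa [← h] using hf0
    · exact hfnn x ⟨h, hx.2⟩
  intro σ hσ t ht
  have hFnn : 0 ≤ F t := by
    rw [hF]
    apply intervalIntegral.integral_nonneg ht.1
    intro u hu
    exact hfnn' u ⟨hu.1, lt_of_le_of_lt hu.2 ht.2⟩
  rcases eq_or_lt_of_le hσ.1 with hσ0 | hσ0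
  · have : F 0 = 0 := by simp [hF]
    simp [← hσ0, this]
  rcases eq_or_lt_of_le ht.1 with ht0 | ht0
  · have : F 0 = 0 := by simp [hF]
    simp [← ht0, this]
  -- main case
  have hsub : F (σ * t) = σ * ∫ s in (0:ℝ)..t, f (σ * s) := by
    rw [hF, intervalIntegral.integral_comp_mul_left f (ne_of_gt hσ0)]
    simp [smul_eq_mul]
    field_simp
  have hmono : (∫ s in (0:ℝ)..t, f (σ * s)) ≤ ∫ s in (0:ℝ)..t, C * f s := by
    apply intervalIntegral.integral_mono_on ht.1
    · exact (hfc.comp (continuous_const.mul continuous_id)).intervalIntegrable 0 t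
    · exact (continuous_const.mul hfc).intervalIntegrable 0 t
    · intro x hx
      rcases eq_or_lt_of_le hx.1 with h | h
      · simp [← h]
        nlinarith [hf0]
      · have hx1 : x ∈ Ioo (0:ℝ) η₀ := ⟨h, lt_of_le_of_lt hx.2 ht.2⟩
        have hle : σ * x ≤ x := mul_le_of_le_one_left h.le hσ.2
        have hσx : σ * x ∈ Ioo (0:ℝ) η₀ :=
          ⟨mul_pos hσ0 h, lt_of_le_of_lt hle hx1.2⟩
        exact hfCinc _ hσx _ hx1 hle
  have hCint : (∫ s in (0:ℝ)..t, C * f s) = C * F t := by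
    rw [hF, intervalIntegral.integral_const_mul]
  calc F (σ * t) = σ * ∫ s in (0:ℝ)..t, f (σ * s) := hsub
    _ ≤ σ * (C * F t) := by
        rw [← hCint]; exact mul_le_mul_of_nonneg_left hmono hσ0.le
    _ = C * σ * F t := by ring
end

section
/- Assume: φ ∈ C([0,∞)) ∩ C¹((0,∞)) with φ(0) = 0 and φ' > 0 on (0,∞); l ∈ C([0,∞)) with l > 0 on (0,∞); s ↦ s·φ'(s)/l(s) is integrable on (0,1). Let f ∈ C(ℝ) be positive and C-increasing on (0,η₀) for some η₀ > 0 and C ≥ 1, and set F(t) = ∫₀^t f(s) ds. Then for every σ > 0 the following are equivalent: (a) the function s ↦ 1/K⁻¹(F(s)) is integrable on (0,ε) for some ε ∈ (0,η₀); (b) the function s ↦ 1/K⁻¹(σ·F(s)) is integrable on (0,ε) for some ε ∈ (0,η₀). (Both compositions are defined near 0 since F(s) → 0 as s → 0⁺.) -/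
open Set MeasureTheory

/-- One generic direction of Lemma 3.6(i). -/
theorem key_dir
    (φ' l : ℝ → ℝ)
    (hφ'pos : ∀ t : ℝ, 0 < t → 0 < φ' t)
    (hlpos : ∀ t : ℝ, 0 < t → 0 < l t)
    (hint : IntegrableOn (fun s => s * φ' s / l s) (Ioo 0 1))
    (C η₀ : ℝ) (hC : 1 ≤ C) (hη₀ : 0 < η₀)
    (f : ℝ → ℝ) (hfc : Continuous f)
    (hfpos : ∀ t ∈ Ioo (0:ℝ) η₀, 0 < f t)
    (hfCinc : CIncreasingOn C f (Ioo 0 η₀))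
    (F K Kinv : ℝ → ℝ)
    (hF : ∀ t, F t = ∫ s in (0:ℝ)..t, f s)
    (hK : ∀ t, K t = ∫ s in (0:ℝ)..t, s * φ' s / l s)
    (hKinv : ∀ t : ℝ, 0 ≤ t → Kinv (K t) = t)
    (σ : ℝ) (hσ : 0 < σ) :
    (∃ ε ∈ Ioo (0:ℝ) η₀, IntegrableOn (fun s => 1 / Kinv (F s)) (Ioo 0 ε)) →
      (∃ ε ∈ Ioo (0:ℝ) η₀, IntegrableOn (fun s => 1 / Kinv (σ * F s)) (Ioo 0 ε)) := by
  set g : ℝ → ℝ := fun s => s * φ' s / l s with hg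
  have hC0 : (0:ℝ) < C := lt_of_lt_of_le one_pos hC
  -- integrability of g
  have hgIoc : IntegrableOn g (Ioc 0 1) := hint.congr_set_ae Ioo_ae_eq_Ioc.symm
  have hgIcc : IntegrableOn g (Icc 0 1) := hint.congr_set_ae Ioo_ae_eq_Icc.symm
  have hgint : ∀ a b : ℝ, 0 ≤ a → a ≤ b → b ≤ 1 → IntervalIntegrable g volume a b :=
    fun a b ha hab hb =>
      (intervalIntegrable_iff_integrableOn_Ioc_of_le hab).2
        (hgIoc.mono_set (Ioc_subset_Ioc ha hb))
  -- K strictly monotone on [0,1]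
  have hKmono : ∀ a b : ℝ, 0 ≤ a → a < b → b ≤ 1 → K a < K b := by
    intro a b ha hab hb
    have h1 : IntervalIntegrable g volume 0 a := hgint 0 a le_rfl ha (hab.le.trans hb)
    have h2 : IntervalIntegrable g volume a b := hgint a b ha hab.le hb
    have hsum : K a + ∫ s in a..b, g s = K b := by
      rw [hK, hK]
      exact intervalIntegral.integral_add_adjacent_intervals h1 h2
    have hpos : 0 < ∫ s in a..b, g s := by
      apply intervalIntegral.intervalIntegral_pos_of_pos_on h2 _ hab
      intro x hx
      have hx0 : 0 < x := lt_of_le_of_lt ha hx.1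
      exact div_pos (mul_pos hx0 (hφ'pos x hx0)) (hlpos x hx0)
    linarith
  have hK0 : K 0 = 0 := by rw [hK]; simp
  have hK1pos : 0 < K 1 := by
    have := hKmono 0 1 le_rfl one_pos le_rfl
    rwa [hK0] at this
  -- K continuous on [0,1]
  have hKcont : ContinuousOn K (Icc 0 1) := by
    have h := intervalIntegral.continuousOn_primitive (f := g) (a := (0:ℝ)) (b := 1)
      (μ := volume) hgIcc
    apply h.congr
    intro x hx
    rw [hK, intervalIntegral.integral_of_le hx.1]
  -- surjectivity of K onto [0, K 1]
  have Ksurj : ∀ y ∈ Icc (0:ℝ) (K 1), ∃ u ∈ Icc (0:ℝ) 1, K u = y := by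
    intro y hy
    have h := intermediate_value_Icc (zero_le_one) hKcont
    rw [hK0] at h
    obtain ⟨u, hu, hKu⟩ := h hy
    exact ⟨u, hu, hKu⟩
  -- monotonicity of Kinv on [0, K 1]
  have KinvMono : ∀ y z : ℝ, y ∈ Icc (0:ℝ) (K 1) → z ∈ Icc (0:ℝ) (K 1) → y ≤ z →
      Kinv y ≤ Kinv z := by
    intro y z hy hz hyz
    obtain ⟨u, hu, hKu⟩ := Ksurj y hy
    obtain ⟨v, hv, hKv⟩ := Ksurj z hz
    rw [← hKu, ← hKv, hKinv u hu.1, hKinv v hv.1]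
    by_contra h
    push_neg at h
    have := hKmono v u hv.1 h hu.2
    rw [hKu, hKv] at this
    linarith
  -- positivity of Kinv on (0, K 1]
  have KinvPos : ∀ y : ℝ, 0 < y → y ≤ K 1 → 0 < Kinv y := by
    intro y hy0 hy1
    obtain ⟨u, hu, hKu⟩ := Ksurj y ⟨hy0.le, hy1⟩
    rw [← hKu, hKinv u hu.1]
    rcases eq_or_lt_of_le hu.1 with h | h
    · rw [← h, hK0] at hKu; linarith
    · exact h
  -- properties of F
  have hfint : ∀ a b : ℝ, IntervalIntegrable f volume a b := fun a b =>
    hfc.intervalIntegrable a b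
  have hFc : Continuous F := by
    rw [show F = fun t => ∫ s in (0:ℝ)..t, f s from funext hF]
    exact intervalIntegral.continuous_primitive (fun a b => hfint a b) 0
  have hF0 : F 0 = 0 := by rw [hF]; simp
  have hFpos : ∀ s ∈ Ioo (0:ℝ) η₀, 0 < F s := by
    intro s hs
    rw [hF]
    exact intervalIntegral.intervalIntegral_pos_of_pos_on (hfint 0 s)
      (fun x hx => hfpos x ⟨hx.1, hx.2.trans hs.2⟩) hs.1
  have hf0 : 0 ≤ f 0 := by
    haveI : (nhdsWithin (0:ℝ) (Ioo 0 η₀)).NeBot := by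
      apply mem_closure_iff_nhdsWithin_neBot.1
      rw [closure_Ioo hη₀.ne]
      exact ⟨le_rfl, hη₀.le⟩
    have ht : Filter.Tendsto f (nhdsWithin (0:ℝ) (Ioo 0 η₀)) (nhds (f 0)) :=
      (hfc.tendsto 0).mono_left nhdsWithin_le_nhds
    exact ge_of_tendsto ht (eventually_nhdsWithin_of_forall fun x hx => (hfpos x hx).le)
  have hfnn : ∀ x : ℝ, 0 ≤ x → x < η₀ → 0 ≤ f x := by
    intro x hx hxη
    rcases eq_or_lt_of_le hx with h | h
    · rw [← h]; exact hf0
    · exact (hfpos x ⟨h, hxη⟩).le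
  have hFmono : ∀ a b : ℝ, 0 ≤ a → a ≤ b → b < η₀ → F a ≤ F b := by
    intro a b ha hab hb
    have h1 : F a + ∫ s in a..b, f s = F b := by
      rw [hF, hF]
      exact intervalIntegral.integral_add_adjacent_intervals (hfint 0 a) (hfint a b)
    have h2 : 0 ≤ ∫ s in a..b, f s := by
      apply intervalIntegral.integral_nonneg hab
      intro x hx
      exact hfnn x (ha.trans hx.1) (lt_of_le_of_lt hx.2 hb)
    linarith
  -- scaling inequality
  have Fscale : ∀ m : ℝ, 0 < m → m ≤ 1 → ∀ s ∈ Ioo (0:ℝ) η₀, F (m * s) ≤ m * C * F s := by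
    intro m hm0 hm1 s hs
    have hcomp : Continuous fun u : ℝ => f (m * u) :=
      hfc.comp (continuous_const.mul continuous_id)
    have hmain : (m : ℝ) • ∫ u in (0:ℝ)..s, f (m * u) = ∫ x in (m*0:ℝ)..(m*s), f x :=
      intervalIntegral.smul_integral_comp_mul_left f m
    rw [mul_zero] at hmain
    have hFm : F (m * s) = m * ∫ u in (0:ℝ)..s, f (m * u) := by
      rw [hF, ← hmain, smul_eq_mul]
    have hbd : ∀ x ∈ Icc (0:ℝ) s, f (m * x) ≤ C * f x := by
      intro x hx
      rcases eq_or_lt_of_le hx.1 with h | h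
      · rw [← h, mul_zero]
        nlinarith
      · have hxη : x ∈ Ioo (0:ℝ) η₀ := ⟨h, lt_of_le_of_lt hx.2 hs.2⟩
        have hmxx : m * x ≤ x := mul_le_of_le_one_left h.le hm1
        have hmx : m * x ∈ Ioo (0:ℝ) η₀ :=
          ⟨mul_pos hm0 h, lt_of_le_of_lt (hmxx.trans hx.2) hs.2⟩
        exact hfCinc (m * x) hmx x hxη hmxx
    have hcmp : (∫ u in (0:ℝ)..s, f (m * u)) ≤ ∫ u in (0:ℝ)..s, C * f u :=
      intervalIntegral.integral_mono_on hs.1.le (hcomp.intervalIntegrable 0 s)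
        ((continuous_const.mul hfc : Continuous fun u => C * f u).intervalIntegrable 0 s) hbd
    have hCF : (∫ u in (0:ℝ)..s, C * f u) = C * F s := by
      rw [hF, intervalIntegral.integral_const_mul]
    rw [hFm]
    calc m * ∫ u in (0:ℝ)..s, f (m * u) ≤ m * (C * F s) := by
          apply mul_le_mul_of_nonneg_left _ hm0.le
          rw [← hCF]; exact hcmp
      _ = m * C * F s := by ring
  -- main argument
  rintro ⟨ε, hε, hInt⟩
  set m : ℝ := min (σ / C) 1 with hm
  have hm0 : 0 < m := lt_min (div_pos hσ hC0) one_pos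
  have hm1 : m ≤ 1 := min_le_right _ _
  have hmC : m * C ≤ σ := by
    have : m ≤ σ / C := min_le_left _ _
    calc m * C ≤ (σ / C) * C := by nlinarith
      _ = σ := by field_simp
  -- choose δ so that σ F s < K 1 for |s| < δ
  have hcont : Continuous fun s => σ * F s := continuous_const.mul hFc
  have hev : ∀ᶠ s in nhds (0:ℝ), σ * F s < K 1 := by
    have h0 : Filter.Tendsto (fun s => σ * F s) (nhds (0:ℝ)) (nhds (σ * F 0)) :=
      hcont.tendsto 0
    rw [hF0, mul_zero] at h0
    exact h0.eventually_lt_const hK1pos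
  obtain ⟨δ, hδ0, hδ⟩ := Metric.eventually_nhds_iff.1 hev
  set ε' : ℝ := min ε δ with hε'
  have hε'0 : 0 < ε' := lt_min hε.1 hδ0
  have hε'ε : ε' ≤ ε := min_le_left _ _
  have hε'η : ε' < η₀ := lt_of_le_of_lt hε'ε hε.2
  -- pointwise facts on (0, ε')
  have hsfacts : ∀ s ∈ Ioo (0:ℝ) ε',
      0 < Kinv (σ * F s) ∧ 1 / Kinv (σ * F s) ≤ 1 / Kinv (F (m * s)) := by
    intro s hs
    have hsη : s ∈ Ioo (0:ℝ) η₀ := ⟨hs.1, hs.2.trans hε'η⟩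
    have hFs : 0 < F s := hFpos s hsη
    have hFK : σ * F s < K 1 := by
      apply hδ
      rw [Real.dist_eq, sub_zero, abs_of_pos hs.1]
      exact hs.2.trans_le (min_le_right _ _)
    have hσF0 : 0 < σ * F s := mul_pos hσ hFs
    have hmsη : m * s ∈ Ioo (0:ℝ) η₀ :=
      ⟨mul_pos hm0 hs.1, lt_of_le_of_lt (mul_le_of_le_one_left hs.1.le hm1) hsη.2⟩
    have hFms0 : 0 < F (m * s) := hFpos _ hmsη
    have hFm : F (m * s) ≤ σ * F s := by
      have := Fscale m hm0 hm1 s hsη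
      nlinarith
    have hp1 : 0 < Kinv (σ * F s) := KinvPos _ hσF0 hFK.le
    have hp2 : 0 < Kinv (F (m * s)) := KinvPos _ hFms0 (hFm.trans hFK.le)
    refine ⟨hp1, one_div_le_one_div_of_le hp2 ?_⟩
    exact KinvMono _ _ ⟨hFms0.le, hFm.trans hFK.le⟩ ⟨hσF0.le, hFK.le⟩ hFm
  -- measurability
  have hmonoset : MonotoneOn (fun s => Kinv (σ * F s)) (Ioo 0 ε') := by
    intro a ha b hb hab
    have hFab : F a ≤ F b := hFmono a b ha.1.le hab (hb.2.trans hε'η)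
    have hKa : σ * F a < K 1 := by
      apply hδ
      rw [Real.dist_eq, sub_zero, abs_of_pos ha.1]
      exact ha.2.trans_le (min_le_right _ _)
    have hKb : σ * F b < K 1 := by
      apply hδ
      rw [Real.dist_eq, sub_zero, abs_of_pos hb.1]
      exact hb.2.trans_le (min_le_right _ _)
    have hFa0 : 0 < F a := hFpos a ⟨ha.1, ha.2.trans hε'η⟩
    have hFb0 : 0 < F b := hFpos b ⟨hb.1, hb.2.trans hε'η⟩
    exact KinvMono _ _ ⟨by positivity, hKa.le⟩ ⟨by positivity, hKb.le⟩
      (mul_le_mul_of_nonneg_left hFab hσ.le)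
  have hmeas : AEMeasurable (fun s => Kinv (σ * F s)) (volume.restrict (Ioo 0 ε')) :=
    aemeasurable_restrict_of_monotoneOn measurableSet_Ioo hmonoset
  have hmeas' : AEStronglyMeasurable (fun s => 1 / Kinv (σ * F s))
      (volume.restrict (Ioo 0 ε')) := by
    have := hmeas.inv
    simp only [one_div]
    exact this.aestronglyMeasurable
  -- dominating function integrable via change of variables
  have hmε' : m * ε' ≤ ε := le_trans (by nlinarith) hε'ε
  have hInt2 : IntegrableOn (fun s => 1 / Kinv (F s)) (Ioo 0 (m * ε')) :=
    hInt.mono_set (Ioo_subset_Ioo le_rfl hmε')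
  have hind : Integrable ((Ioo (0:ℝ) (m * ε')).indicator (fun s => 1 / Kinv (F s))) :=
    (integrable_indicator_iff measurableSet_Ioo).2 hInt2
  have hcompInt : Integrable
      (fun x => (Ioo (0:ℝ) (m * ε')).indicator (fun s => 1 / Kinv (F s)) (m * x)) :=
    (MeasureTheory.integrable_comp_mul_left_iff _ hm0.ne').2 hind
  have heq : (fun x => (Ioo (0:ℝ) (m * ε')).indicator (fun s => 1 / Kinv (F s)) (m * x))
      = (Ioo (0:ℝ) ε').indicator (fun x => 1 / Kinv (F (m * x))) := by
    funext x
    have hmem : m * x ∈ Ioo (0:ℝ) (m * ε') ↔ x ∈ Ioo (0:ℝ) ε' := by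
      simp only [mem_Ioo]
      constructor
      · rintro ⟨h1, h2⟩
        have h1' : m * 0 < m * x := by rwa [mul_zero]
        exact ⟨(mul_lt_mul_iff_right₀ hm0).1 h1', (mul_lt_mul_iff_right₀ hm0).1 h2⟩
      · rintro ⟨h1, h2⟩
        exact ⟨mul_pos hm0 h1, (mul_lt_mul_iff_right₀ hm0).2 h2⟩
    rw [indicator_apply, indicator_apply, if_congr hmem rfl rfl]
  have hdom : IntegrableOn (fun x => 1 / Kinv (F (m * x))) (Ioo 0 ε') := by
    rw [← integrable_indicator_iff measurableSet_Ioo, ← heq]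
    exact hcompInt
  -- conclude
  refine ⟨ε', ⟨hε'0, hε'η⟩, ?_⟩
  apply Integrable.mono' hdom hmeas'
  apply (ae_restrict_iff' measurableSet_Ioo).2
  apply Filter.Eventually.of_forall
  intro s hs
  obtain ⟨hp, hb⟩ := hsfacts s hs
  rw [Real.norm_eq_abs, abs_of_pos (by positivity)]
  exact hb

/-- Lemma 3.6(i): the Keller–Osserman condition (KO₀) is invariant under
replacing `F` by `σ F`, `σ > 0`.  Here `K(t) = ∫₀ᵗ s φ'(s)/l(s) ds` and `Kinv`
is its inverse (a left inverse of `K` on `[0,∞)`). -/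
theorem stmt_3
    (φ φ' l : ℝ → ℝ)
    (hφc : ContinuousOn φ (Ici 0)) (hφ0 : φ 0 = 0)
    (hφd : ∀ t : ℝ, 0 < t → HasDerivAt φ (φ' t) t)
    (hφ'c : ContinuousOn φ' (Ioi 0))
    (hφ'pos : ∀ t : ℝ, 0 < t → 0 < φ' t)
    (hlc : ContinuousOn l (Ici 0)) (hlpos : ∀ t : ℝ, 0 < t → 0 < l t)
    (hint : IntegrableOn (fun s => s * φ' s / l s) (Ioo 0 1))
    (C η₀ : ℝ) (hC : 1 ≤ C) (hη₀ : 0 < η₀)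
    (f : ℝ → ℝ) (hfc : Continuous f)
    (hfpos : ∀ t ∈ Ioo (0:ℝ) η₀, 0 < f t)
    (hfCinc : CIncreasingOn C f (Ioo 0 η₀))
    (F K Kinv : ℝ → ℝ)
    (hF : ∀ t, F t = ∫ s in (0:ℝ)..t, f s)
    (hK : ∀ t, K t = ∫ s in (0:ℝ)..t, s * φ' s / l s)
    (hKinv : ∀ t : ℝ, 0 ≤ t → Kinv (K t) = t)
    (σ : ℝ) (hσ : 0 < σ) :
    (∃ ε ∈ Ioo (0:ℝ) η₀, IntegrableOn (fun s => 1 / Kinv (F s)) (Ioo 0 ε)) ↔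
      (∃ ε ∈ Ioo (0:ℝ) η₀, IntegrableOn (fun s => 1 / Kinv (σ * F s)) (Ioo 0 ε)) := by
  constructor
  · exact key_dir φ' l hφ'pos hlpos hint C η₀ hC hη₀ f hfc hfpos hfCinc F K Kinv hF hK hKinv σ hσ
  · intro h
    have hfpos2 : ∀ t ∈ Ioo (0:ℝ) η₀, 0 < σ * f t := fun t ht => mul_pos hσ (hfpos t ht)
    have hfCinc2 : CIncreasingOn C (fun s => σ * f s) (Ioo 0 η₀) := by
      intro s hs t ht hst
      have h1 := hfCinc s hs t ht hst
      calc σ * f s ≤ σ * (C * f t) := mul_le_mul_of_nonneg_left h1 hσ.le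
        _ = C * (σ * f t) := by ring
    have hF2 : ∀ t, σ * F t = ∫ s in (0:ℝ)..t, σ * f s := by
      intro t
      rw [hF, intervalIntegral.integral_const_mul]
    have hres := key_dir φ' l hφ'pos hlpos hint C η₀ hC hη₀ (fun s => σ * f s)
      (continuous_const.mul hfc : Continuous fun s => σ * f s) hfpos2 hfCinc2 (fun t => σ * F t) K Kinv hF2 hK hKinv
      (1 / σ) (by positivity) h
    obtain ⟨ε, hε, hI⟩ := hres
    refine ⟨ε, hε, ?_⟩
    have : (fun s => 1 / Kinv (1 / σ * (σ * F s))) = fun s => 1 / Kinv (F s) := by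
      funext s
      rw [show (1:ℝ) / σ * (σ * F s) = F s by field_simp]
    rwa [this] at hI
end

section
/- Assume: φ ∈ C([0,∞)) ∩ C¹((0,∞)) with φ(0) = 0 and φ' > 0 on (0,∞); l ∈ C([0,∞)) with l > 0 on (0,∞); s ↦ s·φ'(s)/l(s) is integrable on (0,1) but not integrable on (1,∞), so that K(t) = ∫₀^t s·φ'(s)/l(s) ds is an increasing bijection of [0,∞) onto itself. Let η̄₀ ≥ 0, let f ∈ C(ℝ) be positive and C-increasing on (η̄₀,∞) for some C ≥ 1, and set F(t) = ∫_{η̄₀}^t f(s) ds. Then for every σ > 0 the following are equivalent: (a) the function s ↦ 1/K⁻¹(F(s)) is integrable on (T,∞) for some T > η̄₀; (b) the function s ↦ 1/K⁻¹(σ·F(s)) is integrable on (T,∞) for some T > η̄₀. -/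
open Set MeasureTheory

/-! Since `K` is a continuous strictly increasing bijection of `[0, ∞)` onto itself, `Kinv` is
increasing and positive on `(0, ∞)`, so `1 / Kinv` is decreasing there. Writing `a = ηb₀`,
the `C`-increasing property gives `F t ≤ C (t - a) f t` and
`∫_t^{a + c (t - a)} f ≥ (c - 1) (t - a) f t / C`, hence
`F (a + c (t - a)) ≥ (1 + (c - 1) / C²) F t ≥ F t / σ` once `c` is large. Thus
`1 / Kinv (σ F)` is dominated by `1 / Kinv ∘ F` after an affine change of variables; the
converse uses the same estimate with `σ⁻¹` in place of `σ`. -/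

section Primitive

variable {g : ℝ → ℝ}

theorem integrableOn_Ioc_zero_of_continuousOn_Ioi (hg : ContinuousOn g (Ioi 0))
    (hg0 : IntegrableOn g (Ioo 0 1)) (b : ℝ) : IntegrableOn g (Ioc 0 b) := by
  have hmid : IntegrableOn g (Icc 1 b) :=
    (hg.mono fun x hx => zero_lt_one.trans_le hx.1).integrableOn_Icc
  refine (hg0.union hmid).mono_set fun x hx => ?_
  rcases lt_or_ge x 1 with h | h
  · exact Or.inl ⟨hx.1, h⟩
  · exact Or.inr ⟨h, hx.2⟩

theorem intervalIntegrable_of_continuousOn_Ioi (hg : ContinuousOn g (Ioi 0))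
    (hg0 : IntegrableOn g (Ioo 0 1)) ⦃a b : ℝ⦄ (ha : 0 ≤ a) (hb : 0 ≤ b) :
    IntervalIntegrable g volume a b := by
  have hzero (c : ℝ) (hc : 0 ≤ c) : IntervalIntegrable g volume 0 c :=
    (intervalIntegrable_iff_integrableOn_Ioc_of_le hc).2
      (integrableOn_Ioc_zero_of_continuousOn_Ioi hg hg0 c)
  exact (hzero a ha).symm.trans (hzero b hb)

theorem strictMonoOn_primitive_of_pos (hg : ContinuousOn g (Ioi 0))
    (hg0 : IntegrableOn g (Ioo 0 1)) (hgpos : ∀ t, 0 < t → 0 < g t) :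
    StrictMonoOn (fun t => ∫ s in (0 : ℝ)..t, g s) (Ici 0) := by
  intro a ha b hb hab
  have hint := intervalIntegrable_of_continuousOn_Ioi hg hg0
  have hpos : 0 < ∫ s in a..b, g s :=
    intervalIntegral.intervalIntegral_pos_of_pos_on (hint ha hb)
      (fun x hx => hgpos x (lt_of_le_of_lt ha hx.1)) hab
  have hdiff := intervalIntegral.integral_interval_sub_left (hint le_rfl hb) (hint le_rfl ha)
  dsimp only
  linarith

theorem exists_le_primitive_of_not_integrableOn_Ioi (hg : ContinuousOn g (Ioi 0))
    (hg0 : IntegrableOn g (Ioo 0 1)) (hgpos : ∀ t, 0 < t → 0 < g t)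
    (hg_top : ¬IntegrableOn g (Ioi 1)) (M : ℝ) : ∃ t, 0 ≤ t ∧ M ≤ ∫ s in (0 : ℝ)..t, g s := by
  by_contra! hM
  apply hg_top
  have hint := intervalIntegrable_of_continuousOn_Ioi hg hg0
  refine integrableOn_Ioi_of_intervalIntegral_norm_bounded (M - ∫ s in (0 : ℝ)..1, g s) 1
    (b := fun n : ℕ => 1 + (n : ℝ))
    (fun n => (integrableOn_Ioc_zero_of_continuousOn_Ioi hg hg0 _).mono_set
      (Ioc_subset_Ioc_left zero_le_one))
    (Filter.tendsto_atTop_add_const_left _ _ tendsto_natCast_atTop_atTop)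
    (Filter.Eventually.of_forall fun n => ?_)
  have h1n : (1 : ℝ) ≤ 1 + n := le_add_of_nonneg_right n.cast_nonneg
  have hnorm : ∫ x in (1 : ℝ)..(1 + n), ‖g x‖ = ∫ x in (1 : ℝ)..(1 + n), g x :=
    intervalIntegral.integral_congr fun x hx => by
      rw [uIcc_of_le h1n] at hx
      exact Real.norm_of_nonneg (hgpos x (zero_lt_one.trans_le hx.1)).le
  have hdiff := intervalIntegral.integral_interval_sub_left
    (hint le_rfl (zero_le_one.trans h1n)) (hint le_rfl zero_le_one)
  have := hM (1 + n) (by linarith)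
  rw [hnorm]
  linarith

theorem surjOn_primitive_of_not_integrableOn_Ioi (hg : ContinuousOn g (Ioi 0))
    (hg0 : IntegrableOn g (Ioo 0 1)) (hgpos : ∀ t, 0 < t → 0 < g t)
    (hg_top : ¬IntegrableOn g (Ioi 1)) :
    SurjOn (fun t => ∫ s in (0 : ℝ)..t, g s) (Ici 0) (Ici 0) := by
  intro y hy
  obtain ⟨b, hb, hyb⟩ := exists_le_primitive_of_not_integrableOn_Ioi hg hg0 hgpos hg_top y
  have hcont : ContinuousOn (fun t => ∫ s in (0 : ℝ)..t, g s) (Icc 0 b) := by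
    simpa [uIcc_of_le hb] using intervalIntegral.continuousOn_primitive_interval'
      (intervalIntegrable_of_continuousOn_Ioi hg hg0 le_rfl hb) left_mem_uIcc
  obtain ⟨t, ht, rfl⟩ := intermediate_value_Icc hb hcont ⟨by simpa using hy, hyb⟩
  exact ⟨t, ht.1, rfl⟩

end Primitive

theorem StrictMonoOn.monotoneOn_of_leftInvOn {α β : Type*} [LinearOrder α] [Preorder β]
    {K : α → β} {Kinv : β → α} {s : Set α} {t : Set β} (hK : StrictMonoOn K s)
    (hsurj : SurjOn K s t) (hinv : LeftInvOn Kinv K s) : MonotoneOn Kinv t := by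
  rintro _ hy₁ _ hy₂ hle
  obtain ⟨x₁, hx₁, rfl⟩ := hsurj hy₁
  obtain ⟨x₂, hx₂, rfl⟩ := hsurj hy₂
  rwa [hinv hx₁, hinv hx₂, ← hK.le_iff_le hx₁ hx₂]

theorem LeftInvOn.pos_of_surjOn {K Kinv : ℝ → ℝ} (hinv : LeftInvOn Kinv K (Ici 0))
    (hsurj : SurjOn K (Ici 0) (Ici 0)) (hK0 : K 0 = 0) {y : ℝ} (hy : 0 < y) : 0 < Kinv y := by
  obtain ⟨t, ht, rfl⟩ := hsurj hy.le
  rw [hinv ht]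
  refine lt_of_le_of_ne ht ?_
  rintro rfl
  exact hy.ne' hK0

theorem antitoneOn_one_div_of_leftInvOn {K Kinv : ℝ → ℝ} (hK : StrictMonoOn K (Ici 0))
    (hsurj : SurjOn K (Ici 0) (Ici 0)) (hK0 : K 0 = 0) (hinv : LeftInvOn Kinv K (Ici 0)) :
    AntitoneOn (fun y => 1 / Kinv y) (Ioi 0) := fun _ hy₁ _ hy₂ h =>
  one_div_le_one_div_of_le (LeftInvOn.pos_of_surjOn hinv hsurj hK0 hy₁)
    (hK.monotoneOn_of_leftInvOn hsurj hinv (Ioi_subset_Ici_self hy₁) (Ioi_subset_Ici_self hy₂) h)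

theorem CIncreasingOn.one_le {C : ℝ} {f : ℝ → ℝ} {I : Set ℝ} (hf : CIncreasingOn C f I) {t : ℝ}
    (ht : t ∈ I) (hft : 0 < f t) : 1 ≤ C :=
  (le_mul_iff_one_le_left hft).1 (hf t ht t ht le_rfl)

section CIncreasing

variable {C a : ℝ} {f : ℝ → ℝ}

theorem CIncreasingOn.integral_le (hfc : Continuous f) (hf : CIncreasingOn C f (Ioi a)) {t : ℝ}
    (ht : a < t) : ∫ s in a..t, f s ≤ (t - a) * (C * f t) := by
  calc ∫ s in a..t, f s ≤ ∫ _ in a..t, C * f t :=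
        intervalIntegral.integral_mono_on_of_le_Ioo ht.le (hfc.intervalIntegrable _ _)
          intervalIntegrable_const fun x hx => hf x hx.1 t ht hx.2.le
    _ = (t - a) * (C * f t) := by simp only [intervalIntegral.integral_const, smul_eq_mul]

theorem CIncreasingOn.le_integral (hfc : Continuous f) (hf : CIncreasingOn C f (Ioi a)) {t b : ℝ}
    (ht : a < t) (htb : t ≤ b) : (b - t) * f t ≤ C * ∫ s in t..b, f s := by
  calc (b - t) * f t = ∫ _ in t..b, f t := by simp
    _ ≤ ∫ s in t..b, C * f s :=
        intervalIntegral.integral_mono_on_of_le_Ioo htb intervalIntegrable_const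
          (hfc.intervalIntegrable _ _ |>.const_mul C) fun x hx => hf t ht x (ht.trans hx.1) hx.1.le
    _ = C * ∫ s in t..b, f s := intervalIntegral.integral_const_mul _ _

theorem CIncreasingOn.mul_integral_le_integral_affine (hfc : Continuous f)
    (hfpos : ∀ t, a < t → 0 < f t) (hf : CIncreasingOn C f (Ioi a)) {c t : ℝ} (hc : 1 ≤ c)
    (ht : a < t) :
    (1 + (c - 1) / C ^ 2) * ∫ s in a..t, f s ≤ ∫ s in a..(a + c * (t - a)), f s := by
  set b := a + c * (t - a)
  have hC : 0 < C := zero_lt_one.trans_le (hf.one_le ht (hfpos t ht))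
  have htb : t ≤ b := by nlinarith
  have hgrowth : (c - 1) / C ^ 2 * ∫ s in a..t, f s ≤ ∫ s in t..b, f s :=
    calc (c - 1) / C ^ 2 * ∫ s in a..t, f s
        ≤ (c - 1) / C ^ 2 * ((t - a) * (C * f t)) :=
          mul_le_mul_of_nonneg_left (hf.integral_le hfc ht) (by have := sub_nonneg.2 hc; positivity)
      _ = (b - t) * f t / C := by simp only [b]; field_simp; ring
      _ ≤ ∫ s in t..b, f s := by
          rw [div_le_iff₀ hC, mul_comm _ C]; exact hf.le_integral hfc ht htb
  rw [← intervalIntegral.integral_add_adjacent_intervals (hfc.intervalIntegrable a t)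
    (hfc.intervalIntegrable t b)]
  linarith

theorem CIncreasingOn.exists_integral_le_mul_integral_affine (hfc : Continuous f)
    (hfpos : ∀ t, a < t → 0 < f t) (hf : CIncreasingOn C f (Ioi a)) {σ : ℝ} (hσ : 0 < σ) :
    ∃ c, 1 ≤ c ∧ ∀ t, a < t → ∫ s in a..t, f s ≤ σ * ∫ s in a..(a + c * (t - a)), f s := by
  refine ⟨max 1 (1 + C ^ 2 * (σ⁻¹ - 1)), le_max_left _ _, fun t ht => ?_⟩
  set c := max 1 (1 + C ^ 2 * (σ⁻¹ - 1))
  have hC : 0 < C := zero_lt_one.trans_le (hf.one_le ht (hfpos t ht))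
  have hc : σ⁻¹ ≤ 1 + (c - 1) / C ^ 2 := by
    have : σ⁻¹ - 1 ≤ (c - 1) / C ^ 2 := by
      rw [le_div_iff₀ (by positivity), mul_comm]
      exact le_sub_iff_add_le'.2 (le_max_right _ _)
    linarith
  have hF_nonneg : 0 ≤ ∫ s in a..t, f s := (intervalIntegral.intervalIntegral_pos_of_pos_on
    (hfc.intervalIntegrable a t) (fun x hx => hfpos x hx.1) ht).le
  calc ∫ s in a..t, f s = σ * (σ⁻¹ * ∫ s in a..t, f s) := by field_simp
    _ ≤ σ * ((1 + (c - 1) / C ^ 2) * ∫ s in a..t, f s) := by gcongr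
    _ ≤ σ * ∫ s in a..(a + c * (t - a)), f s :=
        mul_le_mul_of_nonneg_left
          (hf.mul_integral_le_integral_affine hfc hfpos (le_max_left _ _) ht) hσ.le

end CIncreasing

theorem integrableOn_Ioi_comp_add_right_iff (u : ℝ → ℝ) (a T : ℝ) :
    IntegrableOn (fun x => u (x + a)) (Ioi T) ↔ IntegrableOn u (Ioi (T + a)) := by
  have := (measurePreserving_add_right volume a).integrableOn_comp_preimage
    (measurableEmbedding_addRight a) (f := u) (s := Ioi (T + a))
  rwa [preimage_add_const_Ioi, add_sub_cancel_right] at this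

theorem IntegrableOn.comp_affine_Ioi {u : ℝ → ℝ} {T : ℝ} (hu : IntegrableOn u (Ioi T))
    (a : ℝ) {c : ℝ} (hc : 0 < c) :
    IntegrableOn (fun s => u (a + c⁻¹ * (s - a))) (Ioi (a + c * (T - a))) := by
  have h₁ : IntegrableOn (fun x => u (x + a)) (Ioi (T - a)) := by
    rwa [integrableOn_Ioi_comp_add_right_iff, sub_add_cancel]
  have h₂ : IntegrableOn (fun x => u (c⁻¹ * x + a)) (Ioi (c * (T - a))) := by
    rwa [integrableOn_Ioi_comp_mul_left_iff (fun x => u (x + a)) _ (inv_pos.2 hc),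
      inv_mul_cancel_left₀ hc.ne']
  have h₃ := (integrableOn_Ioi_comp_add_right_iff (fun x => u (c⁻¹ * x + a)) (-a)
    (a + c * (T - a))).2 (by rwa [add_neg_cancel_comm])
  simpa only [← sub_eq_add_neg, add_comm a] using h₃

theorem AntitoneOn.integrableOn_Ioi_comp_of_le_comp_affine {ψ G₁ G₂ : ℝ → ℝ} {a c : ℝ}
    (hψ : AntitoneOn ψ (Ioi 0)) (hψ₀ : ∀ y, 0 < y → 0 ≤ ψ y) (hG₁ : ∀ t, a < t → 0 < G₁ t)
    (hG₂ : MonotoneOn G₂ (Ioi a)) (hc : 0 < c)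
    (hle : ∀ t, a < t → G₁ t ≤ G₂ (a + c * (t - a)))
    (hint : ∃ T, a < T ∧ IntegrableOn (fun t => ψ (G₁ t)) (Ioi T)) :
    ∃ T, a < T ∧ IntegrableOn (fun s => ψ (G₂ s)) (Ioi T) := by
  obtain ⟨T, hT, hint⟩ := hint
  have hpre : ∀ s, a < s → a < a + c⁻¹ * (s - a) ∧ G₁ (a + c⁻¹ * (s - a)) ≤ G₂ s := by
    intro s hs
    have hlt : a < a + c⁻¹ * (s - a) := lt_add_of_pos_right a (by have := sub_pos.2 hs; positivity)
    refine ⟨hlt, ?_⟩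
    convert hle _ hlt using 2
    field_simp
    ring
  have hG₂pos : ∀ s, a < s → 0 < G₂ s := fun s hs =>
    (hG₁ _ (hpre s hs).1).trans_le (hpre s hs).2
  have hanti : AntitoneOn (fun s => ψ (G₂ s)) (Ioi a) := fun s₁ hs₁ s₂ hs₂ h =>
    hψ (hG₂pos s₁ hs₁) (hG₂pos s₂ hs₂) (hG₂ hs₁ hs₂ h)
  have hTc : a < a + c * (T - a) := lt_add_of_pos_right a (by have := sub_pos.2 hT; positivity)
  refine ⟨a + c * (T - a), hTc, (IntegrableOn.comp_affine_Ioi hint a hc).mono' ?_ ?_⟩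
  · exact (aemeasurable_restrict_of_antitoneOn measurableSet_Ioi
      (hanti.mono (Ioi_subset_Ioi hTc.le))).aestronglyMeasurable
  · refine ae_restrict_of_forall_mem measurableSet_Ioi fun s hs => ?_
    have hs' : a < s := hTc.trans hs
    obtain ⟨hlt, hG⟩ := hpre s hs'
    rw [Real.norm_of_nonneg (hψ₀ _ (hG₂pos s hs'))]
    exact hψ (hG₁ _ hlt) (hG₂pos s hs') hG

theorem stmt_4_general
    (φ' l : ℝ → ℝ)
    (hφ'c : ContinuousOn φ' (Ioi 0))
    (hφ'pos : ∀ t : ℝ, 0 < t → 0 < φ' t)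
    (hlc : ContinuousOn l (Ici 0)) (hlpos : ∀ t : ℝ, 0 < t → 0 < l t)
    (hint0 : IntegrableOn (fun s => s * φ' s / l s) (Ioo 0 1))
    (hintinf : ¬ IntegrableOn (fun s => s * φ' s / l s) (Ioi 1))
    (C ηb₀ : ℝ)
    (f : ℝ → ℝ) (hfc : Continuous f)
    (hfpos : ∀ t : ℝ, ηb₀ < t → 0 < f t)
    (hfCinc : CIncreasingOn C f (Ioi ηb₀))
    (F K Kinv : ℝ → ℝ)
    (hF : ∀ t, F t = ∫ s in ηb₀..t, f s)
    (hK : ∀ t, K t = ∫ s in (0:ℝ)..t, s * φ' s / l s)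
    (hKinv : ∀ t : ℝ, 0 ≤ t → Kinv (K t) = t)
    (σ : ℝ) (hσ : 0 < σ) :
    (∃ T : ℝ, ηb₀ < T ∧ IntegrableOn (fun s => 1 / Kinv (F s)) (Ioi T)) ↔
      (∃ T : ℝ, ηb₀ < T ∧ IntegrableOn (fun s => 1 / Kinv (σ * F s)) (Ioi T)) := by
  have hgc : ContinuousOn (fun s => s * φ' s / l s) (Ioi 0) :=
    (continuousOn_id.mul hφ'c).div (hlc.mono Ioi_subset_Ici_self) fun t ht => (hlpos t ht).ne'
  have hgpos : ∀ t, 0 < t → 0 < t * φ' t / l t := fun t ht =>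
    div_pos (mul_pos ht (hφ'pos t ht)) (hlpos t ht)
  obtain rfl : K = _ := funext hK
  have hsurj := surjOn_primitive_of_not_integrableOn_Ioi hgc hint0 hgpos hintinf
  have hψ := antitoneOn_one_div_of_leftInvOn (strictMonoOn_primitive_of_pos hgc hint0 hgpos)
    hsurj intervalIntegral.integral_same hKinv
  have hψ₀ (y : ℝ) (hy : 0 < y) : 0 ≤ 1 / Kinv y :=
    (one_div_pos.2 (LeftInvOn.pos_of_surjOn hKinv hsurj intervalIntegral.integral_same hy)).le
  obtain rfl : F = _ := funext hF
  have hFpos : ∀ t, ηb₀ < t → 0 < ∫ s in ηb₀..t, f s := fun t ht =>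
    intervalIntegral.intervalIntegral_pos_of_pos_on (hfc.intervalIntegrable _ _)
      (fun x hx => hfpos x hx.1) ht
  have hFmono : MonotoneOn (fun t => ∫ s in ηb₀..t, f s) (Ioi ηb₀) := fun x hx y _ hxy =>
    intervalIntegral.integral_mono_interval le_rfl hx.le hxy
      (ae_restrict_of_forall_mem measurableSet_Ioc fun t ht => (hfpos t ht.1).le)
      (hfc.intervalIntegrable _ _)
  obtain ⟨c, hc, hle⟩ := hfCinc.exists_integral_le_mul_integral_affine hfc hfpos hσ
  obtain ⟨c', hc', hle'⟩ := hfCinc.exists_integral_le_mul_integral_affine hfc hfpos (inv_pos.2 hσ)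
  constructor
  · exact hψ.integrableOn_Ioi_comp_of_le_comp_affine hψ₀ hFpos
      (fun x hx y hy h => mul_le_mul_of_nonneg_left (hFmono hx hy h) hσ.le)
      (zero_lt_one.trans_le hc) hle
  · exact hψ.integrableOn_Ioi_comp_of_le_comp_affine hψ₀ (fun t ht => mul_pos hσ (hFpos t ht))
      hFmono (zero_lt_one.trans_le hc') fun t ht => (le_inv_mul_iff₀ hσ).1 (hle' t ht)

/-- Lemma 3.6(ii): the Keller–Osserman condition (KO_∞) is invariant under
replacing `F` by `σ F`, `σ > 0`.  Here `K(t) = ∫₀ᵗ s φ'(s)/l(s) ds` is an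
increasing bijection of `[0,∞)` onto itself with inverse `Kinv`. -/
theorem stmt_4
    (φ φ' l : ℝ → ℝ)
    (hφc : ContinuousOn φ (Ici 0)) (hφ0 : φ 0 = 0)
    (hφd : ∀ t : ℝ, 0 < t → HasDerivAt φ (φ' t) t)
    (hφ'c : ContinuousOn φ' (Ioi 0))
    (hφ'pos : ∀ t : ℝ, 0 < t → 0 < φ' t)
    (hlc : ContinuousOn l (Ici 0)) (hlpos : ∀ t : ℝ, 0 < t → 0 < l t)
    (hint0 : IntegrableOn (fun s => s * φ' s / l s) (Ioo 0 1))
    (hintinf : ¬ IntegrableOn (fun s => s * φ' s / l s) (Ioi 1))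
    (C ηb₀ : ℝ) (hC : 1 ≤ C) (hηb₀ : 0 ≤ ηb₀)
    (f : ℝ → ℝ) (hfc : Continuous f)
    (hfpos : ∀ t : ℝ, ηb₀ < t → 0 < f t)
    (hfCinc : CIncreasingOn C f (Ioi ηb₀))
    (F K Kinv : ℝ → ℝ)
    (hF : ∀ t, F t = ∫ s in ηb₀..t, f s)
    (hK : ∀ t, K t = ∫ s in (0:ℝ)..t, s * φ' s / l s)
    (hKinv : ∀ t : ℝ, 0 ≤ t → Kinv (K t) = t)
    (σ : ℝ) (hσ : 0 < σ) :
    (∃ T : ℝ, ηb₀ < T ∧ IntegrableOn (fun s => 1 / Kinv (F s)) (Ioi T)) ↔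
      (∃ T : ℝ, ηb₀ < T ∧ IntegrableOn (fun s => 1 / Kinv (σ * F s)) (Ioi T)) :=
  stmt_4_general φ' l hφ'c hφ'pos hlc hlpos hint0 hintinf C ηb₀ f hfc hfpos hfCinc F K Kinv hF hK
    hKinv σ hσ
end

section
/- Assume: φ ∈ C([0,∞)) ∩ C¹((0,∞)) with φ(0) = 0, φ > 0 and φ' > 0 on (0,∞); l ∈ C([0,∞)) with l > 0 on (0,∞) and s ↦ s·φ'(s)/l(s) integrable on (0,1); f ∈ C(ℝ) with f(0)·l(0) = 0, f ≥ 0 and C-increasing on (0,η₀) for some η₀ > 0 and C ≥ 1. Let T > 0, ℘ ∈ C¹([0,T]) with ℘ > 0 and ℘ monotone on [0,T] (either ℘' ≥ 0 everywhere or ℘' ≤ 0 everywhere), and a ∈ C([0,T]) with a > 0. Suppose that either (i) f ≡ 0 on (0,η₀), or (ii) f > 0 on (0,η₀), l is C-increasing on (0,ξ₀) for some ξ₀ > 0, and ∫₀^ε ds/K⁻¹(F(s)) = ∞ for every small ε > 0, where K(t) = ∫₀^t s·φ'(s)/l(s) ds and F(t) = ∫₀^t f(s) ds. Let η ∈ (0,η₀)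 and let w ∈ C¹([0,T]) satisfy: w(0) = 0, w(T) = η, 0 ≤ w ≤ η and w' ≥ 0 on [0,T], and t ↦ ℘(t)·φ(w'(t)) differentiable on (0,T) with derivative ℘(t)·a(t)·f(w(t))·l(|w'(t)|). Then w'(0) > 0; consequently w > 0 on (0,T] and w' > 0 on [0,T]. -/
/-!
Write `p` for `℘`. Suppose `w' 0 = 0`. If `f` vanishes near `0`, the flux `p φ(w')` has zero
derivative and vanishes at `0`, so `w' ≡ 0` and `w` cannot climb from `0` to `η`.

Otherwise let `t₀` be the last zero of `w`; then `w' t₀ = 0` too. Where `w' > 0`, the equation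
makes `w'` differentiable, and `(K ∘ w')' = w' (φ ∘ w')' / l(w')`. Bounding `(φ ∘ w')'` by
`D f(w) l(w')` (where `p` decreases, this uses the flux estimate
`p φ(w') ≤ T sup(p a) C² f(w) l(w')`, which comes from the `C`-increasing property) and
`D f(w) ≤ Λ f(Λ w)` for `Λ ≥ C D` gives `(K ∘ w')' ≤ (F ∘ (Λ w))'`, hence `K(w') ≤ F(Λ w)` just
after `t₀`, i.e. `(Λ w)' ≤ Λ K⁻¹(F(Λ w))`. The time `Λ w` needs to travel from `0` to
`ε = Λ w(t₁)` is then at least `∫₀^ε dσ / (Λ K⁻¹(F σ))`, so `1 / K⁻¹(F)` is integrable on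
`(0, ε)`, contradicting the failure of the Keller–Osserman condition.

Once `w' 0 > 0`, the flux is positive at `0` and nondecreasing, so `w' > 0` on `[0, T]`.
-/

open Set MeasureTheory

open Filter Topology

theorem CIncreasingOn.le_mul_of_nonneg {C r s t : ℝ} {h : ℝ → ℝ}
    (hh : CIncreasingOn C h (Ioo 0 r)) (h0 : ContinuousWithinAt h (Ici 0) 0)
    (hs : 0 ≤ s) (hst : s ≤ t) (ht : t ∈ Ioo 0 r) : h s ≤ C * h t := by
  rcases hs.eq_or_lt with rfl | hs
  · refine ContinuousWithinAt.closure_le (s := Ioo 0 t) ?_ (h0.mono ?_) continuousWithinAt_const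
      fun u hu => hh u ⟨hu.1, hu.2.trans ht.2⟩ t ht hu.2.le
    · rw [closure_Ioo ht.1.ne]
      exact left_mem_Icc.2 ht.1.le
    · exact Ioo_subset_Ioi_self.trans Ioi_subset_Ici_self
  · exact hh s ⟨hs, hst.trans_lt ht.2⟩ t ht hst

theorem nonneg_of_forall_Ioo_nonneg {h : ℝ → ℝ} {r : ℝ} (hr : 0 < r)
    (hc : ContinuousWithinAt h (Ici 0) 0) (hnn : ∀ x ∈ Ioo 0 r, 0 ≤ h x) :
    ∀ x ∈ Ico 0 r, 0 ≤ h x := by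
  rintro x ⟨hx, hxr⟩
  rcases hx.eq_or_lt with rfl | hx
  · refine ContinuousWithinAt.closure_le (s := Ioo 0 r) ?_ continuousWithinAt_const
      (hc.mono (Ioo_subset_Ioi_self.trans Ioi_subset_Ici_self)) hnn
    rw [closure_Ioo hr.ne]
    exact left_mem_Icc.2 hr.le
  · exact hnn x ⟨hx, hxr⟩

theorem exists_forall_Icc_of_eventually_nhdsWithin {P : ℝ → Prop} {a b t₀ : ℝ}
    (ht₀ : t₀ ∈ Ico a b) (hP : ∀ᶠ t in 𝓝[Icc a b] t₀, P t) :
    ∃ t₁ ∈ Ioc t₀ b, ∀ t ∈ Icc t₀ t₁, P t := by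
  have hI : Icc a b ∈ 𝓝[≥] t₀ :=
    mem_of_superset (Icc_mem_nhdsGE ht₀.2) (Icc_subset_Icc_left ht₀.1)
  obtain ⟨t₁, ht₀₁, hsub⟩ :=
    mem_nhdsGE_iff_exists_Icc_subset.1 (Eventually.and (nhdsWithin_le_of_mem hI hP) hI)
  exact ⟨t₁, ⟨ht₀₁, (hsub (right_mem_Icc.2 ht₀₁.le)).2.2⟩, fun t ht => (hsub ht).1⟩

section Calculus

variable {w w' : ℝ → ℝ} {a b : ℝ}

theorem monotoneOn_Icc_of_hasDerivWithinAt_nonneg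
    (hw : ∀ t ∈ Icc a b, HasDerivWithinAt w (w' t) (Icc a b) t) (hw' : ∀ t ∈ Icc a b, 0 ≤ w' t) :
    MonotoneOn w (Icc a b) :=
  monotoneOn_of_hasDerivWithinAt_nonneg (convex_Icc a b)
    (fun t ht => (hw t ht).continuousWithinAt)
    (fun t ht => (hw t (interior_subset ht)).mono interior_subset)
    (fun t ht => hw' t (interior_subset ht))

theorem strictMonoOn_Icc_of_hasDerivWithinAt_pos
    (hw : ∀ t ∈ Icc a b, HasDerivWithinAt w (w' t) (Icc a b) t) (hw' : ∀ t ∈ Icc a b, 0 < w' t) :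
    StrictMonoOn w (Icc a b) :=
  strictMonoOn_of_hasDerivWithinAt_pos (convex_Icc a b)
    (fun t ht => (hw t ht).continuousWithinAt)
    (fun t ht => (hw t (interior_subset ht)).mono interior_subset)
    (fun t ht => hw' t (interior_subset ht))

theorem exists_last_zero (hab : a ≤ b)
    (hwd : ∀ t ∈ Icc a b, HasDerivWithinAt w (w' t) (Icc a b) t) (hnn : ∀ t ∈ Icc a b, 0 ≤ w t)
    (ha : w a = 0) (hw'a : w' a = 0) (hb : 0 < w b) :
    ∃ t₀ ∈ Ico a b, w t₀ = 0 ∧ w' t₀ = 0 ∧ ∀ t ∈ Ioc t₀ b, 0 < w t := by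
  have hclosed : IsClosed (Icc a b ∩ w ⁻¹' {0}) :=
    ContinuousOn.preimage_isClosed_of_isClosed (fun t ht => (hwd t ht).continuousWithinAt)
      isClosed_Icc isClosed_singleton
  obtain ⟨t₀, ⟨ht₀, hwt₀⟩, hmax⟩ :=
    (isCompact_Icc.of_isClosed_subset hclosed inter_subset_left).exists_isGreatest
      ⟨a, left_mem_Icc.2 hab, ha⟩
  have hwt₀ : w t₀ = 0 := hwt₀
  have ht₀b : t₀ < b := ht₀.2.lt_of_ne (by rintro rfl; exact hb.ne' hwt₀)
  refine ⟨t₀, ⟨ht₀.1, ht₀b⟩, hwt₀, ?_, fun t ht => ?_⟩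
  · rcases ht₀.1.eq_or_lt with rfl | hat₀
    · exact hw'a
    refine IsLocalMin.hasDerivAt_eq_zero ?_ ((hwd t₀ ht₀).hasDerivAt (Icc_mem_nhds hat₀ ht₀b))
    filter_upwards [Icc_mem_nhds hat₀ ht₀b] with t ht
    exact hwt₀ ▸ hnn t ht
  · have htI : t ∈ Icc a b := ⟨ht₀.1.trans ht.1.le, ht.2⟩
    exact (hnn t htI).lt_of_ne' fun h => (hmax ⟨htI, h⟩).not_gt ht.1

end Calculus

theorem HasDerivAt.of_hasStrictDerivAt_comp {φ g : ℝ → ℝ} {φ' u s : ℝ}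
    (hφ : HasStrictDerivAt φ φ' (g s)) (hφ' : φ' ≠ 0) (hg : ContinuousAt g s)
    (hu : HasDerivAt (fun τ => φ (g τ)) u s) : HasDerivAt g (φ'⁻¹ * u) s := by
  have hleft : ∀ᶠ τ in 𝓝 s, hφ.localInverse φ φ' (g s) hφ' (φ (g τ)) = g τ :=
    hg.eventually (hφ.hasStrictFDerivAt_equiv hφ').eventually_left_inverse
  exact ((hφ.to_localInverse hφ').hasDerivAt.comp s hu).congr_of_eventuallyEq
    (hleft.mono fun τ hτ => hτ.symm)

theorem HasDerivAt.of_mul_left {p u : ℝ → ℝ} {p' e s : ℝ} (hp : HasDerivAt p p' s)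
    (hps : p s ≠ 0) (hpu : HasDerivAt (fun τ => p τ * u τ) e s) :
    HasDerivAt u ((e - p' * u s) / p s) s := by
  have hne : ∀ᶠ τ in 𝓝 s, p τ ≠ 0 := hp.continuousAt.eventually_ne hps
  refine ((hpu.div hp hps).congr_of_eventuallyEq ?_).congr_deriv ?_
  · filter_upwards [hne] with τ hτ
    simp [mul_div_cancel_left₀ _ hτ]
  · field_simp

theorem MonotoneOn.of_mul_of_antitoneOn {p u : ℝ → ℝ} {s : Set ℝ}
    (hpu : MonotoneOn (fun t => p t * u t) s) (hp : AntitoneOn p s) (hppos : ∀ t ∈ s, 0 < p t)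
    (hu : ∀ t ∈ s, 0 ≤ u t) : MonotoneOn u s := fun x hx y hy hxy =>
  le_of_mul_le_mul_left ((mul_le_mul_of_nonneg_right (hp hx hy hxy) (hu x hx)).trans
    (hpu hx hy hxy)) (hppos y hy)

theorem nonneg_of_nonneg_or_hasDerivAt_nonneg {Φ : ℝ → ℝ} {a b : ℝ}
    (hΦ : ContinuousOn Φ (Icc a b)) (ha : 0 ≤ Φ a)
    (h : ∀ t ∈ Ioo a b, 0 ≤ Φ t ∨ ∃ d, HasDerivAt Φ d t ∧ 0 ≤ d) :
    ∀ t ∈ Icc a b, 0 ≤ Φ t := by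
  intro t ht
  by_contra! hneg
  have hclosed : IsClosed (Icc a t ∩ Φ ⁻¹' Ici 0) :=
    (hΦ.mono (Icc_subset_Icc_right ht.2)).preimage_isClosed_of_isClosed isClosed_Icc isClosed_Ici
  obtain ⟨α, ⟨hα, hΦα⟩, hαmax⟩ :=
    (isCompact_Icc.of_isClosed_subset hclosed inter_subset_left).exists_isGreatest
      ⟨a, left_mem_Icc.2 ht.1, ha⟩
  have hαt : α < t := hα.2.lt_of_ne (by rintro rfl; exact hneg.not_ge hΦα)
  have hderiv : ∀ s ∈ Ioo α t, ∃ d, HasDerivAt Φ d s ∧ 0 ≤ d := fun s hs =>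
    (h s ⟨hα.1.trans_lt hs.1, hs.2.trans_le ht.2⟩).resolve_left fun hΦs =>
      (hαmax ⟨⟨hα.1.trans hs.1.le, hs.2.le⟩, hΦs⟩).not_gt hs.1
  have hmono : MonotoneOn Φ (Icc α t) := by
    refine monotoneOn_of_deriv_nonneg (convex_Icc α t) (hΦ.mono (Icc_subset_Icc hα.1 ht.2))
      (fun s hs => ?_) fun s hs => ?_
    all_goals rw [interior_Icc] at hs; obtain ⟨d, hd, hd0⟩ := hderiv s hs
    · exact hd.differentiableAt.differentiableWithinAt
    · exact hd.deriv ▸ hd0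
  exact hneg.not_ge (hΦα.trans (hmono (left_mem_Icc.2 hαt.le) (right_mem_Icc.2 hαt.le) hαt.le))

theorem LeftInvOn.mapsTo_and_rightInvOn_Icc {K Kinv : ℝ → ℝ} {a b : ℝ} (hab : a ≤ b)
    (hK : ContinuousOn K (Icc a b)) (hinv : LeftInvOn Kinv K (Icc a b)) :
    MapsTo Kinv (Icc (K a) (K b)) (Icc a b) ∧ RightInvOn Kinv K (Icc (K a) (K b)) := by
  constructor <;>
  · intro y hy
    obtain ⟨x, hx, rfl⟩ := intermediate_value_Icc hab hK hy
    simp [hinv hx, hx]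

section Primitive

variable {k : ℝ → ℝ} {r : ℝ}

theorem continuousOn_primitive_of_integrableOn_Ioo (hr : 0 ≤ r) (hk : IntegrableOn k (Ioo 0 r)) :
    ContinuousOn (fun t => ∫ s in (0:ℝ)..t, k s) (Icc 0 r) := by
  simpa [uIcc_of_le hr] using intervalIntegral.continuousOn_primitive_interval (a := 0) (b := r)
    (μ := volume) (by rwa [uIcc_of_le hr, integrableOn_Icc_iff_integrableOn_Ioo])

theorem hasDerivAt_primitive_of_integrableOn_Ioo (hk : IntegrableOn k (Ioo 0 r))
    (hkc : ContinuousOn k (Ioo 0 r)) {x : ℝ} (hx : x ∈ Ioo 0 r) :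
    HasDerivAt (fun t => ∫ s in (0:ℝ)..t, k s) (k x) x :=
  intervalIntegral.integral_hasDerivAt_right
    ((intervalIntegrable_iff_integrableOn_Ioo_of_le hx.1.le).2
      (hk.mono_set (Ioo_subset_Ioo_right hx.2.le)))
    (hkc.stronglyMeasurableAtFilter isOpen_Ioo x hx) (hkc.continuousAt (isOpen_Ioo.mem_nhds hx))

theorem strictMonoOn_primitive_of_integrableOn_Ioo (hr : 0 ≤ r) (hk : IntegrableOn k (Ioo 0 r))
    (hkc : ContinuousOn k (Ioo 0 r)) (hkpos : ∀ x ∈ Ioo 0 r, 0 < k x) :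
    StrictMonoOn (fun t => ∫ s in (0:ℝ)..t, k s) (Icc 0 r) :=
  strictMonoOn_of_hasDerivWithinAt_pos (convex_Icc 0 r)
    (continuousOn_primitive_of_integrableOn_Ioo hr hk)
    (fun x hx => by
      rw [interior_Icc] at hx ⊢
      exact (hasDerivAt_primitive_of_integrableOn_Ioo hk hkc hx).hasDerivWithinAt)
    (fun x hx => hkpos x (by rwa [interior_Icc] at hx))

end Primitive

theorem lintegral_one_div_le_of_deriv_le {w w' g : ℝ → ℝ} {a b : ℝ} (hab : a ≤ b)
    (hw : ∀ t ∈ Icc a b, HasDerivWithinAt w (w' t) (Icc a b) t) (hmono : MonotoneOn w (Icc a b))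
    (hle : ∀ t ∈ Icc a b, 0 < w' t → w' t ≤ g (w t)) :
    ∫⁻ σ in Icc (w a) (w b), ENNReal.ofReal (1 / g σ) ≤ ENNReal.ofReal (b - a) := by
  have hcont : ContinuousOn w (Icc a b) := fun t ht => (hw t ht).continuousWithinAt
  calc ∫⁻ σ in Icc (w a) (w b), ENNReal.ofReal (1 / g σ)
      ≤ ∫⁻ σ in w '' Icc a b, ENNReal.ofReal (1 / g σ) :=
        lintegral_mono_set (intermediate_value_Icc hab hcont)
    _ = ∫⁻ t in Icc a b, ENNReal.ofReal (w' t) * ENNReal.ofReal (1 / g (w t)) :=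
        lintegral_image_eq_lintegral_deriv_mul_of_monotoneOn measurableSet_Icc hw hmono _
    _ ≤ ∫⁻ _ in Icc a b, 1 := setLIntegral_mono' measurableSet_Icc fun t ht => ?_
    _ = ENNReal.ofReal (b - a) := by simp
  rcases le_or_gt (w' t) 0 with h | h
  · simp [ENNReal.ofReal_of_nonpos h]
  · have hg := hle t ht h
    rw [← ENNReal.ofReal_mul h.le, ← ENNReal.ofReal_one, mul_one_div]
    exact ENNReal.ofReal_le_ofReal ((div_le_one (h.trans_le hg)).2 hg)

theorem integrableOn_one_div_of_deriv_le {w w' G : ℝ → ℝ} {t₀ t₁ : ℝ} (ht : t₀ ≤ t₁)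
    (hwd : ∀ t ∈ Icc t₀ t₁, HasDerivWithinAt w (w' t) (Icc t₀ t₁) t)
    (hmono : MonotoneOn w (Icc t₀ t₁)) (hw₀ : w t₀ = 0)
    (hle : ∀ t ∈ Icc t₀ t₁, 0 < w' t → w' t ≤ G (w t))
    (hG : MonotoneOn G (Ioo 0 (w t₁))) (hG0 : ∀ σ ∈ Ioo 0 (w t₁), 0 ≤ G σ) :
    IntegrableOn (fun σ => 1 / G σ) (Ioo 0 (w t₁)) := by
  have hlin := lintegral_one_div_le_of_deriv_le ht hwd hmono hle
  rw [hw₀] at hlin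
  refine ⟨((aemeasurable_restrict_of_monotoneOn measurableSet_Ioo hG).const_div 1)
    |>.aestronglyMeasurable, (hasFiniteIntegral_iff_ofReal ?_).2 ?_⟩
  · filter_upwards [ae_restrict_mem measurableSet_Ioo] with σ hσ using one_div_nonneg.2 (hG0 σ hσ)
  · exact ((lintegral_mono_set Ioo_subset_Icc_self).trans hlin).trans_lt ENNReal.ofReal_lt_top

-- With `v = φ (w')`, the left side is `(φ ∘ w')'` read off from `(p φ(w'))' = p a f(w) l(w')`.
theorem flux_div_le {p p' a f l v A Q R : ℝ} (hp : 0 < p) (ha : a ≤ A) (hf : 0 ≤ f) (hl : 0 ≤ l)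
    (hv : 0 ≤ v) (hQ : -p' ≤ Q * p ^ 2) (hR : p' < 0 → p * v ≤ R * f * l) (hQ0 : 0 ≤ Q)
    (hR0 : 0 ≤ R) : (p * a * f * l - p' * v) / p ≤ (A + R * Q) * f * l := by
  have hfl : 0 ≤ f * l := mul_nonneg hf hl
  rw [div_le_iff₀ hp]
  have hA : a * (f * l) * p ≤ A * (f * l) * p :=
    mul_le_mul_of_nonneg_right (mul_le_mul_of_nonneg_right ha hfl) hp.le
  rcases le_or_gt 0 p' with h | h
  · have : 0 ≤ R * Q * (f * l) * p := by positivity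
    nlinarith [mul_nonneg h hv]
  · have h1 : -p' * v ≤ Q * p * (p * v) := by nlinarith [mul_le_mul_of_nonneg_right hQ hv]
    have h2 : Q * p * (p * v) ≤ Q * p * (R * f * l) :=
      mul_le_mul_of_nonneg_left (hR h) (by positivity)
    nlinarith

section Solution

variable {φ φ' l f p p' a w w' K Kinv F : ℝ → ℝ} {C T η₀ ξ₀ : ℝ}

theorem flux_le_of_monotoneOn {E : ℝ → ℝ} {P t₀ s : ℝ}
    (hlc : ContinuousWithinAt l (Ici 0) 0) (hlnn : ∀ t : ℝ, 0 ≤ t → 0 ≤ l t)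
    (hlC : CIncreasingOn C l (Ioo 0 ξ₀)) (hfc : ContinuousWithinAt f (Ici 0) 0)
    (hfnn : ∀ t ∈ Ico 0 η₀, 0 ≤ f t) (hfC : CIncreasingOn C f (Ioo 0 η₀)) (hC : 0 ≤ C)
    (hP : ∀ t ∈ Icc 0 T, p t * a t ≤ P) (hP0 : 0 ≤ P)
    (hwnn : ∀ t ∈ Icc 0 T, 0 ≤ w t) (hw'nn : ∀ t ∈ Icc 0 T, 0 ≤ w' t)
    (hw : MonotoneOn w (Icc 0 T)) (hw' : MonotoneOn w' (Icc 0 T))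
    (hEc : ContinuousOn E (Icc 0 T))
    (hE' : ∀ t ∈ Ioo 0 T, HasDerivAt E (p t * a t * f (w t) * l (w' t)) t)
    (ht₀ : 0 ≤ t₀) (hEt₀ : E t₀ = 0) (hs : s ∈ Ioo t₀ T) (hw's : w' s ∈ Ioo 0 ξ₀)
    (hws : w s ∈ Ioo 0 η₀) :
    E s ≤ T * P * C ^ 2 * f (w s) * l (w' s) := by
  have hsub : Icc t₀ s ⊆ Icc 0 T := Icc_subset_Icc ht₀ hs.2.le
  have hsI : s ∈ Icc 0 T := hsub (right_mem_Icc.2 hs.1.le)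
  have hPf : 0 ≤ P * (C * f (w s)) := mul_nonneg hP0 (mul_nonneg hC (hfnn _ ⟨hws.1.le, hws.2⟩))
  have hM : 0 ≤ P * (C * f (w s)) * (C * l (w' s)) :=
    mul_nonneg hPf (mul_nonneg hC (hlnn _ hw's.1.le))
  have hbound : ∀ σ ∈ interior (Icc t₀ s), deriv E σ ≤ P * (C * f (w s)) * (C * l (w' s)) := by
    intro σ hσ
    rw [interior_Icc] at hσ
    have hσI : σ ∈ Icc 0 T := hsub (Ioo_subset_Icc_self hσ)
    have hwσ : w σ ≤ w s := hw hσI hsI hσ.2.le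
    rw [(hE' σ ⟨ht₀.trans_lt hσ.1, hσ.2.trans hs.2⟩).deriv]
    exact mul_le_mul (mul_le_mul (hP σ hσI)
      (hfC.le_mul_of_nonneg hfc (hwnn σ hσI) hwσ hws)
      (hfnn _ ⟨hwnn σ hσI, hwσ.trans_lt hws.2⟩) hP0)
      (hlC.le_mul_of_nonneg hlc (hw'nn σ hσI) (hw' hσI hsI hσ.2.le) hw's)
      (hlnn _ (hw'nn σ hσI)) hPf
  have hmvt := (convex_Icc t₀ s).image_sub_le_mul_sub_of_deriv_le (hEc.mono hsub)
    (fun σ hσ => by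
      rw [interior_Icc] at hσ
      exact (hE' σ ⟨ht₀.trans_lt hσ.1, hσ.2.trans hs.2⟩).differentiableAt.differentiableWithinAt)
    hbound t₀ (left_mem_Icc.2 hs.1.le) s (right_mem_Icc.2 hs.1.le) hs.1.le
  rw [hEt₀, sub_zero] at hmvt
  calc E s ≤ P * (C * f (w s)) * (C * l (w' s)) * (s - t₀) := hmvt
    _ ≤ P * (C * f (w s)) * (C * l (w' s)) * T :=
      mul_le_mul_of_nonneg_left (by linarith [hs.2]) hM
    _ = T * P * C ^ 2 * f (w s) * l (w' s) := by ring

theorem exists_hasDerivAt_comp_le_of_flux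
    (hφc : ContinuousOn φ (Ici 0)) (hφ0 : φ 0 = 0)
    (hφd : ∀ t : ℝ, 0 < t → HasDerivAt φ (φ' t) t) (hφ'pos : ∀ t : ℝ, 0 < t → 0 < φ' t)
    (hlc : ContinuousOn l (Ici 0)) (hlnn : ∀ t : ℝ, 0 ≤ t → 0 ≤ l t)
    (hlC : CIncreasingOn C l (Ioo 0 ξ₀))
    (hfc : Continuous f) (hfnn : ∀ t ∈ Ico 0 η₀, 0 ≤ f t) (hfC : CIncreasingOn C f (Ioo 0 η₀))
    (hC : 0 ≤ C) (hpd : ∀ t ∈ Icc 0 T, HasDerivWithinAt p (p' t) (Icc 0 T) t)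
    (hp'c : ContinuousOn p' (Icc 0 T)) (hppos : ∀ t ∈ Icc 0 T, 0 < p t)
    (hpmono : (∀ t ∈ Icc 0 T, 0 ≤ p' t) ∨ (∀ t ∈ Icc 0 T, p' t ≤ 0))
    (hac : ContinuousOn a (Icc 0 T)) (hapos : ∀ t ∈ Icc 0 T, 0 < a t)
    (hwnn : ∀ t ∈ Icc 0 T, 0 ≤ w t) (hw'nn : ∀ t ∈ Icc 0 T, 0 ≤ w' t)
    (hw : MonotoneOn w (Icc 0 T))
    (hEc : ContinuousOn (fun t => p t * φ (w' t)) (Icc 0 T))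
    (hE : MonotoneOn (fun t => p t * φ (w' t)) (Icc 0 T))
    (hODE : ∀ t ∈ Ioo 0 T,
      HasDerivAt (fun s => p s * φ (w' s)) (p t * a t * f (w t) * l (w' t)) t)
    {t₀ : ℝ} (ht₀ : t₀ ∈ Icc 0 T) (hEt₀ : p t₀ * φ (w' t₀) = 0) :
    ∃ D, 0 ≤ D ∧ ∀ s ∈ Ioo t₀ T, w' s ∈ Ioo 0 ξ₀ → w s ∈ Ioo 0 η₀ →
      ∃ u, HasDerivAt (fun τ => φ (w' τ)) u s ∧ u ≤ D * f (w s) * l (w' s) := by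
  have hT : 0 ≤ T := ht₀.1.trans ht₀.2
  have h0 : (0:ℝ) ∈ Icc 0 T := left_mem_Icc.2 hT
  have hpc : ContinuousOn p (Icc 0 T) := fun t ht => (hpd t ht).continuousWithinAt
  obtain ⟨A, hA⟩ := isCompact_Icc.bddAbove_image hac
  obtain ⟨P, hP⟩ := isCompact_Icc.bddAbove_image (hpc.mul hac)
  obtain ⟨Q, hQ⟩ := isCompact_Icc.bddAbove_image
    (hp'c.abs.div (hpc.pow 2) fun t ht => (pow_pos (hppos t ht) 2).ne')
  have hA0 : 0 ≤ A := (hapos 0 h0).le.trans (hA (mem_image_of_mem _ h0))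
  have hP0 : 0 ≤ P := (mul_pos (hppos 0 h0) (hapos 0 h0)).le.trans (hP (mem_image_of_mem _ h0))
  have hQ0 : 0 ≤ Q := (div_nonneg (abs_nonneg _) (sq_nonneg _)).trans (hQ (mem_image_of_mem _ h0))
  have hφmono : StrictMonoOn φ (Ici 0) :=
    strictMonoOn_of_hasDerivWithinAt_pos (convex_Ici 0) hφc
      (fun x hx => by rw [interior_Ici] at hx ⊢; exact (hφd x hx).hasDerivWithinAt)
      (fun x hx => hφ'pos x (by rwa [interior_Ici] at hx))
  have hφnn : ∀ x : ℝ, 0 ≤ x → 0 ≤ φ x := fun x hx =>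
    hφ0 ▸ hφmono.monotoneOn self_mem_Ici hx hx
  refine ⟨A + T * P * C ^ 2 * Q, by positivity, fun s hs hw's hws => ?_⟩
  have hsI : s ∈ Icc 0 T := ⟨ht₀.1.trans hs.1.le, hs.2.le⟩
  have hps := hppos s hsI
  have hp := (hpd s hsI).hasDerivAt (Icc_mem_nhds (ht₀.1.trans_lt hs.1) hs.2)
  refine ⟨_, hp.of_mul_left hps.ne' (hODE s ⟨ht₀.1.trans_lt hs.1, hs.2⟩),
    flux_div_le hps (hA (mem_image_of_mem _ hsI)) (hfnn _ ⟨hws.1.le, hws.2⟩)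
      (hlnn _ hw's.1.le) (hφnn _ hw's.1.le) ?_ (fun hp's => ?_) hQ0 (by positivity)⟩
  · have hQs : |p' s| / p s ^ 2 ≤ Q := hQ (mem_image_of_mem _ hsI)
    rw [div_le_iff₀ (by positivity)] at hQs
    exact (neg_le_abs _).trans hQs
  have hpanti : AntitoneOn p (Icc 0 T) :=
    antitoneOn_of_hasDerivWithinAt_nonpos (convex_Icc 0 T) hpc
      (fun x hx => ((hpd x (interior_subset hx)).mono interior_subset))
      (fun x hx => (hpmono.resolve_left fun h => (h s hsI).not_gt hp's) x (interior_subset hx))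
  have hw' : MonotoneOn w' (Icc 0 T) := fun x hx y hy hxy =>
    (hφmono.le_iff_le (hw'nn x hx) (hw'nn y hy)).1
      ((hE.of_mul_of_antitoneOn hpanti hppos fun t ht => hφnn _ (hw'nn t ht)) hx hy hxy)
  exact flux_le_of_monotoneOn (hlc 0 self_mem_Ici) hlnn hlC hfc.continuousWithinAt hfnn hfC hC
    (fun t ht => hP (mem_image_of_mem _ ht)) hP0 hwnn hw'nn hw hw' hEc hODE ht₀.1 hEt₀ hs hw's hws

theorem monotoneOn_flux (hlnn : ∀ t : ℝ, 0 ≤ t → 0 ≤ l t) (hfnn : ∀ t ∈ Ico 0 η₀, 0 ≤ f t)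
    (hppos : ∀ t ∈ Icc 0 T, 0 < p t) (hapos : ∀ t ∈ Icc 0 T, 0 < a t)
    (hwnn : ∀ t ∈ Icc 0 T, 0 ≤ w t) (hwη₀ : ∀ t ∈ Icc 0 T, w t < η₀)
    (hw'nn : ∀ t ∈ Icc 0 T, 0 ≤ w' t) (hEc : ContinuousOn (fun t => p t * φ (w' t)) (Icc 0 T))
    (hODE : ∀ t ∈ Ioo 0 T,
      HasDerivAt (fun s => p s * φ (w' s)) (p t * a t * f (w t) * l (w' t)) t) :
    MonotoneOn (fun t => p t * φ (w' t)) (Icc 0 T) :=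
  monotoneOn_of_hasDerivWithinAt_nonneg (convex_Icc 0 T) hEc
    (fun t ht => (hODE t (by rwa [← interior_Icc])).hasDerivWithinAt) fun t ht => by
      rw [interior_Icc] at ht
      have htI := Ioo_subset_Icc_self ht
      have := hfnn _ ⟨hwnn t htI, hwη₀ t htI⟩
      have := hlnn _ (hw'nn t htI)
      have := hppos t htI
      have := hapos t htI
      positivity

theorem le_primitive_comp_of_deriv_le {D Λ t₀ t₁ : ℝ}
    (hKd : ∀ x ∈ Ioo (0:ℝ) 1, HasDerivAt K (x * φ' x / l x) x) (hKc : ContinuousOn K (Icc 0 1))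
    (hK0 : K 0 = 0) (hφ : ∀ x ∈ Ioo (0:ℝ) 1, HasStrictDerivAt φ (φ' x) x)
    (hφ' : ∀ x ∈ Ioo (0:ℝ) 1, 0 < φ' x) (hl : ∀ x ∈ Ioo (0:ℝ) 1, 0 < l x)
    (hFd : ∀ x, HasDerivAt F (f x) x) (hF : ∀ x ∈ Ico 0 η₀, 0 ≤ F x)
    (hfnn : ∀ x ∈ Ioo 0 η₀, 0 ≤ f x) (hfC : CIncreasingOn C f (Ioo 0 η₀))
    (hD : 0 ≤ D) (hΛ1 : 1 ≤ Λ) (hΛ : C * D ≤ Λ)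
    (hwd : ∀ t ∈ Icc t₀ t₁, HasDerivWithinAt w (w' t) (Icc t₀ t₁) t)
    (hw'c : ContinuousOn w' (Icc t₀ t₁)) (hw₀ : w t₀ = 0) (hw'₀ : w' t₀ = 0)
    (hwpos : ∀ t ∈ Ioc t₀ t₁, 0 < w t) (hsmall : ∀ t ∈ Icc t₀ t₁, w' t ∈ Ico 0 1 ∧ Λ * w t < η₀)
    (hu : ∀ s ∈ Ioo t₀ t₁, 0 < w' s →
      ∃ u, HasDerivAt (fun τ => φ (w' τ)) u s ∧ u ≤ D * f (w s) * l (w' s)) :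
    ∀ t ∈ Icc t₀ t₁, K (w' t) ≤ F (Λ * w t) := by
  have hFc : Continuous F := continuous_iff_continuousAt.2 fun x => (hFd x).continuousAt
  have hΦc : ContinuousOn (fun t => F (Λ * w t) - K (w' t)) (Icc t₀ t₁) :=
    (hFc.comp_continuousOn (continuousOn_const.mul fun t ht => (hwd t ht).continuousWithinAt)).sub
      (hKc.comp hw'c fun t ht => Ico_subset_Icc_self (hsmall t ht).1)
  intro t ht
  have hη₀ : 0 < η₀ := by simpa [hw₀] using (hsmall t₀ (left_mem_Icc.2 (ht.1.trans ht.2))).2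
  refine sub_nonneg.1 (nonneg_of_nonneg_or_hasDerivAt_nonneg hΦc
    (by simpa [hw₀, hw'₀, hK0] using hF 0 ⟨le_rfl, hη₀⟩) (fun s hs => ?_) t ht)
  obtain ⟨⟨hw's0, hw's1⟩, hΛws⟩ := hsmall s (Ioo_subset_Icc_self hs)
  have hws : 0 < w s := hwpos s ⟨hs.1, hs.2.le⟩
  have hΛws0 : 0 < Λ * w s := mul_pos (by linarith) hws
  rcases hw's0.eq_or_lt with h0 | hpos
  · left
    rw [← h0, hK0, sub_zero]
    exact hF _ ⟨hΛws0.le, hΛws⟩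
  right
  have hw's : w' s ∈ Ioo 0 1 := ⟨hpos, hw's1⟩
  obtain ⟨u, hu, hule⟩ := hu s hs hpos
  have hw'd := hu.of_hasStrictDerivAt_comp (hφ _ hw's) (hφ' _ hw's).ne'
    (hw'c.continuousAt (Icc_mem_nhds hs.1 hs.2))
  have hwd' := (hwd s (Ioo_subset_Icc_self hs)).hasDerivAt (Icc_mem_nhds hs.1 hs.2)
  refine ⟨_, ((hFd _).comp s (hwd'.const_mul Λ)).sub ((hKd _ hw's).comp s hw'd), ?_⟩
  have hfΛ : D * f (w s) ≤ Λ * f (Λ * w s) := calc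
    D * f (w s) ≤ D * (C * f (Λ * w s)) :=
      mul_le_mul_of_nonneg_left (hfC _ ⟨hws, by nlinarith⟩ _ ⟨hΛws0, hΛws⟩ (by nlinarith)) hD
    _ = C * D * f (Λ * w s) := by ring
    _ ≤ Λ * f (Λ * w s) := mul_le_mul_of_nonneg_right hΛ (hfnn _ ⟨hΛws0, hΛws⟩)
  have hls := hl _ hw's
  have hφ's := (hφ' _ hw's).ne'
  calc (0:ℝ) ≤ w' s * (Λ * f (Λ * w s) - D * f (w s)) := mul_nonneg hpos.le (sub_nonneg.2 hfΛ)
    _ ≤ w' s * (Λ * f (Λ * w s)) - w' s * u / l (w' s) := by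
      rw [mul_sub, sub_le_sub_iff_left, div_le_iff₀ hls]
      nlinarith
    _ = _ := by field_simp

theorem integrableOn_one_div_inv_comp_of_comp_le {Λ t₀ t₁ : ℝ}
    (hKc : ContinuousOn K (Icc 0 1)) (hK : StrictMonoOn K (Icc 0 1)) (hK0 : K 0 = 0)
    (hKinv : LeftInvOn Kinv K (Icc 0 1)) (hF : MonotoneOn F (Icc 0 (Λ * w t₁))) (hF0 : F 0 = 0)
    (hF1 : F (Λ * w t₁) ≤ K 1) (hΛ : 0 < Λ) (ht : t₀ ≤ t₁)
    (hwd : ∀ t ∈ Icc t₀ t₁, HasDerivWithinAt w (w' t) (Icc t₀ t₁) t) (hw₀ : w t₀ = 0)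
    (hw' : ∀ t ∈ Icc t₀ t₁, w' t ∈ Icc 0 1) (hcmp : ∀ t ∈ Icc t₀ t₁, K (w' t) ≤ F (Λ * w t)) :
    IntegrableOn (fun σ => 1 / Kinv (F σ)) (Ioo 0 (Λ * w t₁)) := by
  obtain ⟨hmaps, hright⟩ := LeftInvOn.mapsTo_and_rightInvOn_Icc zero_le_one hKc hKinv
  rw [hK0] at hmaps hright
  have hw := monotoneOn_Icc_of_hasDerivWithinAt_nonneg hwd fun t ht => (hw' t ht).1
  have hFI : ∀ σ ∈ Icc 0 (Λ * w t₁), F σ ∈ Icc 0 (K 1) := fun σ hσ =>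
    ⟨hF0 ▸ hF (left_mem_Icc.2 (hσ.1.trans hσ.2)) hσ hσ.1,
      (hF hσ (right_mem_Icc.2 (hσ.1.trans hσ.2)) hσ.2).trans hF1⟩
  have hKinv_mono : MonotoneOn Kinv (Icc 0 (K 1)) := fun x hx y hy hxy =>
    (hK.le_iff_le (hmaps hx) (hmaps hy)).1 (by rwa [hright hx, hright hy])
  have hΛw : ∀ t ∈ Icc t₀ t₁, Λ * w t ∈ Icc 0 (Λ * w t₁) := fun t htI =>
    ⟨mul_nonneg hΛ.le (hw₀ ▸ hw (left_mem_Icc.2 ht) htI htI.1),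
      mul_le_mul_of_nonneg_left (hw htI (right_mem_Icc.2 ht) htI.2) hΛ.le⟩
  have hle : ∀ t ∈ Icc t₀ t₁, Λ * w' t ≤ Λ * Kinv (F (Λ * w t)) := fun t ht => by
    have hy := hFI _ (hΛw t ht)
    refine mul_le_mul_of_nonneg_left ((hK.le_iff_le (hw' t ht) (hmaps hy)).1 ?_) hΛ.le
    rw [hright hy]
    exact hcmp t ht
  have hint := integrableOn_one_div_of_deriv_le (w := fun t => Λ * w t)
    (G := fun σ => Λ * Kinv (F σ)) ht (fun t ht => (hwd t ht).const_mul Λ)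
    (fun x hx y hy hxy => mul_le_mul_of_nonneg_left (hw hx hy hxy) hΛ.le) (by simp [hw₀])
    (fun t ht _ => hle t ht)
    (fun x hx y hy hxy => mul_le_mul_of_nonneg_left (hKinv_mono (hFI x (Ioo_subset_Icc_self hx))
      (hFI y (Ioo_subset_Icc_self hy)) (hF (Ioo_subset_Icc_self hx) (Ioo_subset_Icc_self hy) hxy))
      hΛ.le)
    (fun σ hσ => mul_nonneg hΛ.le (hmaps (hFI σ (Ioo_subset_Icc_self hσ))).1)
  refine IntegrableOn.congr_fun (hint.const_mul Λ) (fun σ _ => ?_) measurableSet_Ioo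
  rw [mul_one_div, div_mul_cancel_left₀ hΛ.ne', one_div]

theorem exists_integrableOn_one_div_inv_comp {D : ℝ}
    (hKd : ∀ x ∈ Ioo (0:ℝ) 1, HasDerivAt K (x * φ' x / l x) x) (hKc : ContinuousOn K (Icc 0 1))
    (hK : StrictMonoOn K (Icc 0 1)) (hK0 : K 0 = 0) (hKinv : LeftInvOn Kinv K (Icc 0 1))
    (hφ : ∀ x ∈ Ioo (0:ℝ) 1, HasStrictDerivAt φ (φ' x) x)
    (hφ' : ∀ x ∈ Ioo (0:ℝ) 1, 0 < φ' x) (hl : ∀ x ∈ Ioo (0:ℝ) 1, 0 < l x)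
    (hFd : ∀ x, HasDerivAt F (f x) x) (hF : MonotoneOn F (Icc 0 η₀)) (hF0 : F 0 = 0)
    (hfnn : ∀ x ∈ Ioo 0 η₀, 0 ≤ f x) (hfC : CIncreasingOn C f (Ioo 0 η₀))
    (hwd : ∀ t ∈ Icc 0 T, HasDerivWithinAt w (w' t) (Icc 0 T) t)
    (hw'c : ContinuousOn w' (Icc 0 T)) (hw'nn : ∀ t ∈ Icc 0 T, 0 ≤ w' t)
    (hwη₀ : ∀ t ∈ Icc 0 T, w t < η₀) {t₀ : ℝ} (ht₀ : t₀ ∈ Ico 0 T) (hwt₀ : w t₀ = 0)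
    (hw't₀ : w' t₀ = 0) (hwpos : ∀ t ∈ Ioc t₀ T, 0 < w t) (hξ₀ : 0 < ξ₀) (hD0 : 0 ≤ D)
    (hD : ∀ s ∈ Ioo t₀ T, w' s ∈ Ioo 0 ξ₀ → w s ∈ Ioo 0 η₀ →
      ∃ u, HasDerivAt (fun τ => φ (w' τ)) u s ∧ u ≤ D * f (w s) * l (w' s)) :
    ∃ ε ∈ Ioo 0 η₀, IntegrableOn (fun σ => 1 / Kinv (F σ)) (Ioo 0 ε) := by
  have hη₀ : 0 < η₀ := hwt₀ ▸ hwη₀ t₀ (Ico_subset_Icc_self ht₀)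
  have hK1 : 0 < K 1 :=
    hK0 ▸ hK (left_mem_Icc.2 zero_le_one) (right_mem_Icc.2 zero_le_one) one_pos
  set Λ := max 1 (C * D)
  have hΛ : 0 < Λ := zero_lt_one.trans_le (le_max_left _ _)
  have hsmall₀ : Iio (min ξ₀ 1) ×ˢ (Iio η₀ ∩ F ⁻¹' Iio (K 1)) ∈ 𝓝 (w' t₀, Λ * w t₀) := by
    rw [hw't₀, hwt₀, mul_zero]
    exact prod_mem_nhds (Iio_mem_nhds (lt_min hξ₀ one_pos)) (inter_mem (Iio_mem_nhds hη₀)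
      ((hFd 0).continuousAt.preimage_mem_nhds (Iio_mem_nhds (by rwa [hF0]))))
  obtain ⟨t₁, ⟨ht₀₁, ht₁T⟩, hsmall⟩ := exists_forall_Icc_of_eventually_nhdsWithin ht₀
    (((hw'c t₀ (Ico_subset_Icc_self ht₀)).prodMk
      (continuousWithinAt_const.mul (hwd t₀ (Ico_subset_Icc_self ht₀)).continuousWithinAt))
      |>.eventually_mem hsmall₀)
  have hsub : Icc t₀ t₁ ⊆ Icc 0 T := Icc_subset_Icc ht₀.1 ht₁T
  have hwd₁ : ∀ t ∈ Icc t₀ t₁, HasDerivWithinAt w (w' t) (Icc t₀ t₁) t := fun t ht =>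
    (hwd t (hsub ht)).mono hsub
  have hw'₁ : ∀ t ∈ Icc t₀ t₁, w' t ∈ Icc 0 1 := fun t ht =>
    ⟨hw'nn t (hsub ht), (hsmall t ht).1.le.trans (min_le_right _ _)⟩
  have hwpos₁ : ∀ t ∈ Ioc t₀ t₁, 0 < w t := fun t ht => hwpos t ⟨ht.1, ht.2.trans ht₁T⟩
  have hcmp := le_primitive_comp_of_deriv_le hKd hKc hK0 hφ hφ' hl hFd
    (fun x hx => hF0 ▸ hF (left_mem_Icc.2 hη₀.le) (Ico_subset_Icc_self hx) hx.1) hfnn hfC hD0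
    (le_max_left _ _) (le_max_right _ _) hwd₁ (hw'c.mono hsub) hwt₀ hw't₀ hwpos₁
    (fun t ht => ⟨⟨(hw'₁ t ht).1, (hsmall t ht).1.trans_le (min_le_right _ _)⟩, (hsmall t ht).2.1⟩)
    (fun s hs hpos => hD s ⟨hs.1, hs.2.trans_le ht₁T⟩
      ⟨hpos, (hsmall s (Ioo_subset_Icc_self hs)).1.trans_le (min_le_left _ _)⟩
      ⟨hwpos₁ s (Ioo_subset_Ioc_self hs), hwη₀ s (hsub (Ioo_subset_Icc_self hs))⟩)
  have ht₁ := hsmall t₁ (right_mem_Icc.2 ht₀₁.le)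
  refine ⟨Λ * w t₁, ⟨mul_pos hΛ (hwpos₁ t₁ (right_mem_Ioc.2 ht₀₁)), ht₁.2.1⟩, ?_⟩
  exact integrableOn_one_div_inv_comp_of_comp_le hKc hK hK0 hKinv
    (hF.mono (Icc_subset_Icc_right ht₁.2.1.le)) hF0 ht₁.2.2.le hΛ ht₀₁.le hwd₁ hwt₀ hw'₁ hcmp

theorem deriv_pos_of_forall_eq_zero
    (hφ0 : φ 0 = 0) (hφpos : ∀ t : ℝ, 0 < t → 0 < φ t) (hfc : Continuous f)
    (hf0 : ∀ t ∈ Ioo 0 η₀, f t = 0) (hT : 0 < T) (hppos : ∀ t ∈ Icc 0 T, 0 < p t)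
    (hwd : ∀ t ∈ Icc 0 T, HasDerivWithinAt w (w' t) (Icc 0 T) t) (hw0 : w 0 = 0)
    (hwT : 0 < w T) (hwnn : ∀ t ∈ Icc 0 T, 0 ≤ w t) (hwη₀ : ∀ t ∈ Icc 0 T, w t < η₀)
    (hw'nn : ∀ t ∈ Icc 0 T, 0 ≤ w' t)
    (hEc : ContinuousOn (fun t => p t * φ (w' t)) (Icc 0 T))
    (hODE : ∀ t ∈ Ioo 0 T,
      HasDerivAt (fun s => p s * φ (w' s)) (p t * a t * f (w t) * l (w' t)) t) :
    0 < w' 0 := by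
  by_contra! h0
  have hw'0 : w' 0 = 0 := le_antisymm h0 (hw'nn 0 (left_mem_Icc.2 hT.le))
  have hη₀ : 0 < η₀ := (hwnn 0 (left_mem_Icc.2 hT.le)).trans_lt (hwη₀ 0 (left_mem_Icc.2 hT.le))
  have hf : EqOn f 0 (Ico 0 η₀) :=
    EqOn.of_subset_closure hf0 hfc.continuousOn continuousOn_const Ioo_subset_Ico_self
      (by rw [closure_Ioo hη₀.ne]; exact Ico_subset_Icc_self)
  have hflux : ∀ t ∈ Ioc 0 T, p t * φ (w' t) = 0 := fun t ht => by
    obtain ⟨c, hc, hslope⟩ := exists_hasDerivAt_eq_slope _ (fun _ => (0:ℝ)) ht.1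
      (hEc.mono (Icc_subset_Icc_right ht.2)) fun c hc => by
        have hcI : c ∈ Icc 0 T := ⟨hc.1.le, hc.2.le.trans ht.2⟩
        simpa [hf ⟨hwnn c hcI, hwη₀ c hcI⟩] using hODE c ⟨hc.1, hc.2.trans_le ht.2⟩
    simp only [hw'0, hφ0, mul_zero, sub_zero, eq_comm (a := (0:ℝ)), div_eq_zero_iff] at hslope
    exact hslope.resolve_right ht.1.ne'
  have hw' : ∀ t ∈ Ioo 0 T, w' t = 0 := fun t ht => by
    by_contra h
    exact (mul_pos (hppos t (Ioo_subset_Icc_self ht))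
      (hφpos _ ((hw'nn t (Ioo_subset_Icc_self ht)).lt_of_ne' h))).ne'
      (hflux t (Ioo_subset_Ioc_self ht))
  obtain ⟨c, hc, hslope⟩ := exists_hasDerivAt_eq_slope w w' hT
    (fun t ht => (hwd t ht).continuousWithinAt) fun t ht =>
      (hwd t (Ioo_subset_Icc_self ht)).hasDerivAt (Icc_mem_nhds ht.1 ht.2)
  rw [hw' c hc, eq_comm, div_eq_zero_iff, sub_eq_zero, sub_zero, hw0] at hslope
  exact hslope.elim hwT.ne' hT.ne'

theorem deriv_pos_of_not_integrableOn
    (hφc : ContinuousOn φ (Ici 0)) (hφ0 : φ 0 = 0)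
    (hφd : ∀ t : ℝ, 0 < t → HasDerivAt φ (φ' t) t) (hφ'c : ContinuousOn φ' (Ioi 0))
    (hφ'pos : ∀ t : ℝ, 0 < t → 0 < φ' t)
    (hlc : ContinuousOn l (Ici 0)) (hlpos : ∀ t : ℝ, 0 < t → 0 < l t)
    (hlnn : ∀ t : ℝ, 0 ≤ t → 0 ≤ l t) (hint : IntegrableOn (fun s => s * φ' s / l s) (Ioo 0 1))
    (hC : 0 ≤ C) (hfc : Continuous f) (hfnn : ∀ t ∈ Ico 0 η₀, 0 ≤ f t)
    (hfpos : ∀ t ∈ Ioo 0 η₀, 0 < f t) (hfC : CIncreasingOn C f (Ioo 0 η₀)) (hT : 0 < T)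
    (hpd : ∀ t ∈ Icc 0 T, HasDerivWithinAt p (p' t) (Icc 0 T) t)
    (hp'c : ContinuousOn p' (Icc 0 T)) (hppos : ∀ t ∈ Icc 0 T, 0 < p t)
    (hpmono : (∀ t ∈ Icc 0 T, 0 ≤ p' t) ∨ (∀ t ∈ Icc 0 T, p' t ≤ 0))
    (hac : ContinuousOn a (Icc 0 T)) (hapos : ∀ t ∈ Icc 0 T, 0 < a t)
    (hF : ∀ t, F t = ∫ s in (0:ℝ)..t, f s) (hK : ∀ t, K t = ∫ s in (0:ℝ)..t, s * φ' s / l s)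
    (hKinv : ∀ t : ℝ, 0 ≤ t → Kinv (K t) = t) (hξ₀ : 0 < ξ₀) (hlC : CIncreasingOn C l (Ioo 0 ξ₀))
    (hKO : ∀ ε ∈ Ioo 0 η₀, ¬ IntegrableOn (fun s => 1 / Kinv (F s)) (Ioo 0 ε))
    (hwd : ∀ t ∈ Icc 0 T, HasDerivWithinAt w (w' t) (Icc 0 T) t)
    (hw'c : ContinuousOn w' (Icc 0 T)) (hw0 : w 0 = 0) (hwT : 0 < w T)
    (hwnn : ∀ t ∈ Icc 0 T, 0 ≤ w t) (hwη₀ : ∀ t ∈ Icc 0 T, w t < η₀)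
    (hw'nn : ∀ t ∈ Icc 0 T, 0 ≤ w' t)
    (hEc : ContinuousOn (fun t => p t * φ (w' t)) (Icc 0 T))
    (hE : MonotoneOn (fun t => p t * φ (w' t)) (Icc 0 T))
    (hODE : ∀ t ∈ Ioo 0 T,
      HasDerivAt (fun s => p s * φ (w' s)) (p t * a t * f (w t) * l (w' t)) t) :
    0 < w' 0 := by
  by_contra! h0
  obtain ⟨t₀, ht₀, hwt₀, hw't₀, hwpos⟩ := exists_last_zero hT.le hwd hwnn hw0
    (le_antisymm h0 (hw'nn 0 (left_mem_Icc.2 hT.le))) hwT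
  have hη₀ : 0 < η₀ := hwt₀ ▸ hwη₀ t₀ (Ico_subset_Icc_self ht₀)
  have hk : ContinuousOn (fun s => s * φ' s / l s) (Ioo 0 1) :=
    (continuousOn_id.mul (hφ'c.mono Ioo_subset_Ioi_self)).div
      (hlc.mono (Ioo_subset_Ioi_self.trans Ioi_subset_Ici_self)) fun x hx => (hlpos x hx.1).ne'
  have hKeq : K = fun t => ∫ s in (0:ℝ)..t, s * φ' s / l s := funext hK
  have hFeq : F = fun t => ∫ s in (0:ℝ)..t, f s := funext hF
  obtain ⟨D, hD0, hD⟩ := exists_hasDerivAt_comp_le_of_flux hφc hφ0 hφd hφ'pos hlc hlnn hlC hfc hfnn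
    hfC hC hpd hp'c hppos hpmono hac hapos hwnn hw'nn
    (monotoneOn_Icc_of_hasDerivWithinAt_nonneg hwd hw'nn) hEc hE hODE (Ico_subset_Icc_self ht₀)
    (by rw [hw't₀, hφ0, mul_zero])
  obtain ⟨ε, hε, hintε⟩ := exists_integrableOn_one_div_inv_comp
    (hKeq ▸ fun x hx => hasDerivAt_primitive_of_integrableOn_Ioo hint hk hx)
    (hKeq ▸ continuousOn_primitive_of_integrableOn_Ioo zero_le_one hint)
    (hKeq ▸ strictMonoOn_primitive_of_integrableOn_Ioo zero_le_one hint hk fun x hx =>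
      div_pos (mul_pos hx.1 (hφ'pos x hx.1)) (hlpos x hx.1))
    (by simp [hK]) (fun x hx => hKinv x hx.1)
    (fun x hx => hasStrictDerivAt_of_hasDerivAt_of_continuousAt
      (eventually_of_mem (Ioi_mem_nhds hx.1) hφd) (hφ'c.continuousAt (Ioi_mem_nhds hx.1)))
    (fun x hx => hφ'pos x hx.1) (fun x hx => hlpos x hx.1)
    (fun x => hFeq ▸ (hfc.integral_hasStrictDerivAt 0 x).hasDerivAt)
    (hFeq ▸ (strictMonoOn_primitive_of_integrableOn_Ioo hη₀.le
      (hfc.integrableOn_Icc.mono_set Ioo_subset_Icc_self) hfc.continuousOn hfpos).monotoneOn)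
    (by simp [hF]) (fun x hx => (hfpos x hx).le) hfC hwd hw'c hw'nn hwη₀ ht₀ hwt₀ hw't₀ hwpos
    hξ₀ hD0 hD
  exact hKO ε hε hintε

end Solution

theorem stmt_5_general
    (φ φ' l : ℝ → ℝ)
    (hφc : ContinuousOn φ (Ici 0)) (hφ0 : φ 0 = 0)
    (hφpos : ∀ t : ℝ, 0 < t → 0 < φ t)
    (hφd : ∀ t : ℝ, 0 < t → HasDerivAt φ (φ' t) t)
    (hφ'c : ContinuousOn φ' (Ioi 0))
    (hφ'pos : ∀ t : ℝ, 0 < t → 0 < φ' t)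
    (hlc : ContinuousOn l (Ici 0)) (hlpos : ∀ t : ℝ, 0 < t → 0 < l t)
    (hint : IntegrableOn (fun s => s * φ' s / l s) (Ioo 0 1))
    (C η₀ : ℝ) (hC : 1 ≤ C) (hη₀ : 0 < η₀)
    (f : ℝ → ℝ) (hfc : Continuous f)
    (hfnn : ∀ t ∈ Ioo (0:ℝ) η₀, 0 ≤ f t)
    (hfCinc : CIncreasingOn C f (Ioo 0 η₀))
    (T : ℝ) (hT : 0 < T)
    (p p' : ℝ → ℝ)
    (hpd : ∀ t ∈ Icc (0:ℝ) T, HasDerivWithinAt p (p' t) (Icc 0 T) t)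
    (hp'c : ContinuousOn p' (Icc (0:ℝ) T))
    (hppos : ∀ t ∈ Icc (0:ℝ) T, 0 < p t)
    (hpmono : (∀ t ∈ Icc (0:ℝ) T, 0 ≤ p' t) ∨ (∀ t ∈ Icc (0:ℝ) T, p' t ≤ 0))
    (a : ℝ → ℝ) (hac : ContinuousOn a (Icc (0:ℝ) T))
    (hapos : ∀ t ∈ Icc (0:ℝ) T, 0 < a t)
    (F K Kinv : ℝ → ℝ)
    (hF : ∀ t, F t = ∫ s in (0:ℝ)..t, f s)
    (hK : ∀ t, K t = ∫ s in (0:ℝ)..t, s * φ' s / l s)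
    (hKinv : ∀ t : ℝ, 0 ≤ t → Kinv (K t) = t)
    (ξ₀ : ℝ)
    (hcase :
      (∀ t ∈ Ioo (0:ℝ) η₀, f t = 0) ∨
      ((∀ t ∈ Ioo (0:ℝ) η₀, 0 < f t) ∧ 0 < ξ₀ ∧ CIncreasingOn C l (Ioo 0 ξ₀) ∧
        ∀ ε ∈ Ioo (0:ℝ) η₀,
          ¬ IntegrableOn (fun s => 1 / Kinv (F s)) (Ioo 0 ε)))
    (η : ℝ) (hη : η ∈ Ioo (0:ℝ) η₀)
    (w w' : ℝ → ℝ)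
    (hwd : ∀ t ∈ Icc (0:ℝ) T, HasDerivWithinAt w (w' t) (Icc 0 T) t)
    (hw'c : ContinuousOn w' (Icc (0:ℝ) T))
    (hw0 : w 0 = 0) (hwT : w T = η)
    (hwrange : ∀ t ∈ Icc (0:ℝ) T, 0 ≤ w t ∧ w t ≤ η ∧ 0 ≤ w' t)
    (hODE : ∀ t ∈ Ioo (0:ℝ) T,
      HasDerivAt (fun s => p s * φ (w' s)) (p t * a t * f (w t) * l |w' t|) t) :
    0 < w' 0 ∧ (∀ t ∈ Ioc (0:ℝ) T, 0 < w t) ∧ (∀ t ∈ Icc (0:ℝ) T, 0 < w' t) := by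
  have h0T : (0:ℝ) ∈ Icc 0 T := left_mem_Icc.2 hT.le
  have hwnn : ∀ t ∈ Icc 0 T, 0 ≤ w t := fun t ht => (hwrange t ht).1
  have hw'nn : ∀ t ∈ Icc 0 T, 0 ≤ w' t := fun t ht => (hwrange t ht).2.2
  have hwη₀ : ∀ t ∈ Icc 0 T, w t < η₀ := fun t ht => (hwrange t ht).2.1.trans_lt hη.2
  have hlnn : ∀ t : ℝ, 0 ≤ t → 0 ≤ l t := fun t ht => nonneg_of_forall_Ioo_nonneg (by linarith)
    (hlc 0 self_mem_Ici) (fun x hx => (hlpos x hx.1).le) t ⟨ht, lt_add_one t⟩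
  have hfnn' := nonneg_of_forall_Ioo_nonneg hη₀ hfc.continuousWithinAt hfnn
  have hODE' : ∀ t ∈ Ioo 0 T,
      HasDerivAt (fun s => p s * φ (w' s)) (p t * a t * f (w t) * l (w' t)) t := fun t ht => by
    simpa [abs_of_nonneg (hw'nn t (Ioo_subset_Icc_self ht))] using hODE t ht
  have hEc : ContinuousOn (fun t => p t * φ (w' t)) (Icc 0 T) :=
    ContinuousOn.mul (fun t ht => (hpd t ht).continuousWithinAt) (hφc.comp hw'c hw'nn)
  have hE := monotoneOn_flux hlnn hfnn' hppos hapos hwnn hwη₀ hw'nn hEc hODE'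
  have key : 0 < w' 0 := by
    rcases hcase with hzero | ⟨hfpos, hξ₀, hlC, hKO⟩
    · exact deriv_pos_of_forall_eq_zero hφ0 hφpos hfc hzero hT hppos hwd hw0 (hwT ▸ hη.1) hwnn
        hwη₀ hw'nn hEc hODE'
    · exact deriv_pos_of_not_integrableOn hφc hφ0 hφd hφ'c hφ'pos hlc hlpos hlnn hint (by linarith)
        hfc hfnn' hfpos hfCinc hT hpd hp'c hppos hpmono hac hapos hF hK hKinv hξ₀ hlC hKO hwd hw'c
        hw0 (hwT ▸ hη.1) hwnn hwη₀ hw'nn hEc hE hODE'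
  have hw'pos : ∀ t ∈ Icc 0 T, 0 < w' t := fun t ht => (hw'nn t ht).lt_of_ne' fun h => by
    have : p 0 * φ (w' 0) ≤ p t * φ (w' t) := hE h0T ht ht.1
    rw [h, hφ0, mul_zero] at this
    exact this.not_gt (mul_pos (hppos 0 h0T) (hφpos _ key))
  refine ⟨key, fun t ht => ?_, hw'pos⟩
  simpa [hw0] using
    strictMonoOn_Icc_of_hasDerivWithinAt_pos hwd hw'pos h0T (Ioc_subset_Icc_self ht) ht.1

/-- Proposition 3.7: if either `f ≡ 0` near `0`, or `f > 0` and the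
Keller–Osserman condition at zero fails, then any solution of the two-point
problem `[℘ φ(w')]' = ℘ a f(w) l(|w'|)`, `w(0)=0`, `w(T)=η`, has `w'(0) > 0`;
consequently `w > 0` on `(0,T]` and `w' > 0` on `[0,T]`. -/
theorem stmt_5
    (φ φ' l : ℝ → ℝ)
    (hφc : ContinuousOn φ (Ici 0)) (hφ0 : φ 0 = 0)
    (hφpos : ∀ t : ℝ, 0 < t → 0 < φ t)
    (hφd : ∀ t : ℝ, 0 < t → HasDerivAt φ (φ' t) t)
    (hφ'c : ContinuousOn φ' (Ioi 0))
    (hφ'pos : ∀ t : ℝ, 0 < t → 0 < φ' t)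
    (hlc : ContinuousOn l (Ici 0)) (hlpos : ∀ t : ℝ, 0 < t → 0 < l t)
    (hint : IntegrableOn (fun s => s * φ' s / l s) (Ioo 0 1))
    (C η₀ : ℝ) (hC : 1 ≤ C) (hη₀ : 0 < η₀)
    (f : ℝ → ℝ) (hfc : Continuous f) (hfl0 : f 0 * l 0 = 0)
    (hfnn : ∀ t ∈ Ioo (0:ℝ) η₀, 0 ≤ f t)
    (hfCinc : CIncreasingOn C f (Ioo 0 η₀))
    (T : ℝ) (hT : 0 < T)
    (p p' : ℝ → ℝ)
    (hpd : ∀ t ∈ Icc (0:ℝ) T, HasDerivWithinAt p (p' t) (Icc 0 T) t)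
    (hp'c : ContinuousOn p' (Icc (0:ℝ) T))
    (hppos : ∀ t ∈ Icc (0:ℝ) T, 0 < p t)
    (hpmono : (∀ t ∈ Icc (0:ℝ) T, 0 ≤ p' t) ∨ (∀ t ∈ Icc (0:ℝ) T, p' t ≤ 0))
    (a : ℝ → ℝ) (hac : ContinuousOn a (Icc (0:ℝ) T))
    (hapos : ∀ t ∈ Icc (0:ℝ) T, 0 < a t)
    (F K Kinv : ℝ → ℝ)
    (hF : ∀ t, F t = ∫ s in (0:ℝ)..t, f s)
    (hK : ∀ t, K t = ∫ s in (0:ℝ)..t, s * φ' s / l s)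
    (hKinv : ∀ t : ℝ, 0 ≤ t → Kinv (K t) = t)
    (ξ₀ : ℝ)
    (hcase :
      (∀ t ∈ Ioo (0:ℝ) η₀, f t = 0) ∨
      ((∀ t ∈ Ioo (0:ℝ) η₀, 0 < f t) ∧ 0 < ξ₀ ∧ CIncreasingOn C l (Ioo 0 ξ₀) ∧
        ∀ ε ∈ Ioo (0:ℝ) η₀,
          ¬ IntegrableOn (fun s => 1 / Kinv (F s)) (Ioo 0 ε)))
    (η : ℝ) (hη : η ∈ Ioo (0:ℝ) η₀)
    (w w' : ℝ → ℝ)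
    (hwd : ∀ t ∈ Icc (0:ℝ) T, HasDerivWithinAt w (w' t) (Icc 0 T) t)
    (hw'c : ContinuousOn w' (Icc (0:ℝ) T))
    (hw0 : w 0 = 0) (hwT : w T = η)
    (hwrange : ∀ t ∈ Icc (0:ℝ) T, 0 ≤ w t ∧ w t ≤ η ∧ 0 ≤ w' t)
    (hODE : ∀ t ∈ Ioo (0:ℝ) T,
      HasDerivAt (fun s => p s * φ (w' s)) (p t * a t * f (w t) * l |w' t|) t) :
    0 < w' 0 ∧ (∀ t ∈ Ioc (0:ℝ) T, 0 < w t) ∧ (∀ t ∈ Icc (0:ℝ) T, 0 < w' t) :=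
  stmt_5_general φ φ' l hφc hφ0 hφpos hφd hφ'c hφ'pos hlc hlpos hint C η₀ hC hη₀ f hfc hfnn hfCinc T
    hT p p' hpd hp'c hppos hpmono a hac hapos F K Kinv hF hK hKinv ξ₀ hcase η hη w w' hwd hw'c hw0
    hwT hwrange hODE
end
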